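/- arXiv:math/9702224 — 8 statements merged into one kernel-verified Lean document; each statement's English description precedes it below -/
import Mathlib

section
/- The number of parking functions on [n] equals (n+1)^(n-1). -/
open Finset

/-- Cycle lemma: if `U` drops by exactly 1 over each period of length `N+1`, then there is a
unique `d ≤ N` such that `U d ≤ U (d + j)` for all `1 ≤ j ≤ N`. -/
lemma pf_cycle_lemma (N : ℕ) (U : ℕ → ℤ)
    (hU : ∀ m, U (m + (N + 1)) = U m - 1) :
    ∃! d, d ≤ N ∧ ∀ j, 1 ≤ j → j ≤ N → U d ≤ U (d + j) := by
  -- a "good" d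
  have key : ∀ d d', (d ≤ N ∧ ∀ j, 1 ≤ j → j ≤ N → U d ≤ U (d + j)) →
      (d' ≤ N ∧ ∀ j, 1 ≤ j → j ≤ N → U d' ≤ U (d' + j)) → d < d' → False := by
    rintro d d' ⟨hd, hd2⟩ ⟨hd', hd2'⟩ hlt
    have h1 : U d ≤ U d' := by
      have := hd2 (d' - d) (by omega) (by omega)
      rwa [Nat.add_sub_cancel' hlt.le] at this
    have h2 : U d' ≤ U (d + (N + 1)) := by
      have := hd2' (d + (N + 1) - d') (by omega) (by omega)
      rwa [Nat.add_sub_cancel' (by omega)] at this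
    rw [hU d] at h2
    omega
  -- existence: first minimizer of U on range (N+1)
  obtain ⟨d₀, hd₀mem, hd₀min⟩ :=
    Finset.exists_min_image (range (N + 1)) U ⟨0, by simp⟩
  have hd₀N : d₀ < N + 1 := by simpa using hd₀mem
  have hex : ∃ d, d ≤ N ∧ ∀ m ≤ N, U d ≤ U m :=
    ⟨d₀, by omega, fun m hm => hd₀min m (by simp [Nat.lt_succ_iff, hm])⟩
  classical
  set d := Nat.find hex with hdd
  obtain ⟨hdN, hdmin⟩ := Nat.find_spec hex
  have hstrict : ∀ m, m < d → U d < U m := by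
    intro m hm
    by_contra h
    push_neg at h
    have hmin' : ∀ m' ≤ N, U m ≤ U m' := fun m' hm' => le_trans h (hdmin m' hm')
    exact Nat.find_min hex hm ⟨by omega, hmin'⟩
  have hgood : ∀ j, 1 ≤ j → j ≤ N → U d ≤ U (d + j) := by
    intro j hj1 hjN
    rcases le_or_gt (d + j) N with h | h
    · exact hdmin _ h
    · have hm' : d + j - (N + 1) < d := by omega
      have : U (d + j) = U (d + j - (N + 1)) - 1 := by
        have := hU (d + j - (N + 1))
        rw [Nat.sub_add_cancel (by omega)] at this
        omega
      have := hstrict _ hm'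
      omega
  refine ⟨d, ⟨hdN, hgood⟩, ?_⟩
  intro d' hd'
  rcases lt_trichotomy d d' with h | h | h
  · exact absurd (key d d' ⟨hdN, hgood⟩ hd' h) (by simp)
  · exact h.symm
  · exact absurd (key d' d hd' ⟨hdN, hgood⟩ h) (by simp)

lemma pf_sum_range_zmod {M : Type*} [AddCommMonoid M] (N : ℕ) (f : ZMod (N + 1) → M) :
    ∑ k ∈ range (N + 1), f (k : ZMod (N + 1)) = ∑ a, f a := by
  refine Finset.sum_nbij' (fun k => (k : ZMod (N + 1))) (fun a => a.val) ?_ ?_ ?_ ?_ ?_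
  · intro a _; exact mem_univ _
  · intro a _; exact mem_range.2 (ZMod.val_lt a)
  · intro a ha; exact ZMod.val_natCast_of_lt (mem_range.1 ha)
  · intro a _; exact ZMod.natCast_zmod_val a
  · intro a _; rfl

lemma pf_shift_exists_unique (n : ℕ) (hn : 1 ≤ n) (g : Fin n → ZMod (n + 1)) :
    ∃! c : ZMod (n + 1),
      ∀ j < n, j + 1 ≤ (univ.filter fun i => (g i + c).val ≤ j).card := by
  classical
  set t : ZMod (n + 1) → ℕ := fun a => (univ.filter fun i => g i = a).card with ht
  have htsum : ∑ a, t a = n := by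
    rw [← Finset.card_eq_sum_card_fiberwise (f := g) (s := univ) (t := univ)
      (fun x _ => mem_univ _)]
    simp
  set U : ℕ → ℤ := fun m => ∑ k ∈ range m, ((t (k : ZMod (n + 1)) : ℤ) - 1) with hUdef
  have hU : ∀ m, U (m + (n + 1)) = U m - 1 := by
    intro m
    have h1 : U (m + (n + 1)) = U m + ∑ k ∈ Ico m (m + (n + 1)),
        ((t (k : ZMod (n + 1)) : ℤ) - 1) := by
      rw [hUdef]
      simp only [range_eq_Ico]
      rw [Finset.sum_Ico_consecutive _ (Nat.zero_le m) (Nat.le_add_right m (n + 1))]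
    have h2 : ∑ k ∈ Ico m (m + (n + 1)), ((t (k : ZMod (n + 1)) : ℤ) - 1)
        = ∑ k ∈ range (n + 1), ((t ((k : ZMod (n + 1)) + (m : ZMod (n + 1))) : ℤ) - 1) := by
      rw [Finset.sum_Ico_eq_sum_range]
      simp only [Nat.add_sub_cancel_left]
      refine Finset.sum_congr rfl fun k _ => ?_
      push_cast
      ring_nf
    have h3 : ∑ k ∈ range (n + 1), ((t ((k : ZMod (n + 1)) + (m : ZMod (n + 1))) : ℤ) - 1)
        = ∑ a : ZMod (n + 1), ((t (a + (m : ZMod (n + 1))) : ℤ) - 1) :=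
      pf_sum_range_zmod n (fun a => ((t (a + (m : ZMod (n + 1))) : ℤ) - 1))
    have h4 : ∑ a : ZMod (n + 1), ((t (a + (m : ZMod (n + 1))) : ℤ) - 1)
        = ∑ a : ZMod (n + 1), ((t a : ℤ) - 1) :=
      Equiv.sum_comp (Equiv.addRight (m : ZMod (n + 1))) (fun a => ((t a : ℤ) - 1))
    have h5 : ∑ a : ZMod (n + 1), ((t a : ℤ) - 1) = -1 := by
      rw [Finset.sum_sub_distrib]
      simp [ZMod.card, ← Nat.cast_sum, htsum]
    rw [h1, h2, h3, h4, h5]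
    ring
  -- counting bridge
  have hcard : ∀ (c : ZMod (n + 1)) (j : ℕ), j < n →
      (univ.filter fun i => (g i + c).val ≤ j).card
        = ∑ k ∈ range (j + 1), t ((k : ZMod (n + 1)) - c) := by
    intro c j hj
    rw [Finset.card_eq_sum_card_fiberwise (f := fun i => (g i + c).val)
      (s := univ.filter fun i => (g i + c).val ≤ j)
      (t := range (j + 1)) (fun x hx => by
        simp only [Finset.mem_coe, mem_filter] at hx
        exact mem_range.2 (Nat.lt_succ_of_le hx.2))]
    refine Finset.sum_congr rfl fun k hk => ?_
    have hk' : k < n + 1 := by have := mem_range.1 hk; omega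
    congr 1
    ext i
    simp only [mem_filter, mem_univ, true_and, filter_filter]
    constructor
    · rintro ⟨_, h2⟩
      have : g i + c = (k : ZMod (n + 1)) := by
        rw [← ZMod.natCast_zmod_val (g i + c), h2]
      rw [eq_sub_iff_add_eq, this]
    · intro h
      have : g i + c = (k : ZMod (n + 1)) := by rw [h]; ring
      rw [this, ZMod.val_natCast_of_lt hk']
      have := mem_range.1 hk
      omega
  have bridge : ∀ (d : ℕ) (j : ℕ), j < n →
      ((j + 1 ≤ (univ.filter fun i =>
          (g i + (-(d : ZMod (n + 1)))).val ≤ j).card) ↔ U d ≤ U (d + (j + 1))) := by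
    intro d j hj
    rw [hcard _ j hj]
    have hsum : U (d + (j + 1)) - U d
        = (∑ k ∈ range (j + 1), (t ((k : ZMod (n + 1)) - (-(d : ZMod (n + 1)))) : ℤ))
          - (j + 1) := by
      rw [hUdef]
      simp only [range_eq_Ico]
      rw [← Finset.sum_Ico_consecutive _ (Nat.zero_le d) (Nat.le_add_right d (j + 1)),
        add_sub_cancel_left, Finset.sum_Ico_eq_sum_range]
      simp only [Nat.add_sub_cancel_left, ← range_eq_Ico]
      rw [Finset.sum_sub_distrib]
      simp only [Finset.sum_const, card_range, nsmul_eq_mul, mul_one, sub_neg_eq_add]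
      congr 1
      refine Finset.sum_congr rfl fun k _ => ?_
      congr 2
      push_cast
      ring
    constructor
    · intro h
      have : ((j : ℤ) + 1) ≤ ∑ k ∈ range (j + 1),
          (t ((k : ZMod (n + 1)) - (-(d : ZMod (n + 1)))) : ℤ) := by
        rw [← Nat.cast_sum]
        exact_mod_cast h
      omega
    · intro h
      have : ((j : ℤ) + 1) ≤ ∑ k ∈ range (j + 1),
          (t ((k : ZMod (n + 1)) - (-(d : ZMod (n + 1)))) : ℤ) := by omega
      rw [← Nat.cast_sum] at this
      exact_mod_cast this
  obtain ⟨d, ⟨hdn, hgood⟩, huniq⟩ := pf_cycle_lemma n U hU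
  refine ⟨-(d : ZMod (n + 1)), ?_, ?_⟩
  · intro j hj
    exact (bridge d j hj).2 (hgood (j + 1) (by omega) (by omega))
  · intro c hc
    set d' : ℕ := (-c).val with hd'
    have hcd' : c = -((d' : ℕ) : ZMod (n + 1)) := by
      rw [hd', ZMod.natCast_zmod_val, neg_neg]
    have hd'n : d' ≤ n := by
      have := ZMod.val_lt (-c)
      omega
    have : d' = d := by
      refine huniq d' ⟨hd'n, fun j hj1 hjn => ?_⟩
      have := (bridge d' (j - 1) (by omega)).1 (by
        rw [← hcd']
        have := hc (j - 1) (by omega)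
        convert this using 2)
      have hjj : j - 1 + 1 = j := by omega
      rwa [hjj] at this
    rw [hcd', this]

lemma pf_card_pred (n : ℕ) (hn : 1 ≤ n) :
    Nat.card {h : Fin n → ZMod (n + 1) //
      ∀ j < n, j + 1 ≤ (univ.filter fun i => (h i).val ≤ j).card} = (n + 1) ^ (n - 1) := by
  classical
  set P : (Fin n → ZMod (n + 1)) → Prop :=
    fun h => ∀ j < n, j + 1 ≤ (univ.filter fun i => (h i).val ≤ j).card with hP
  have hbij : Function.Bijective
      (fun p : {h // P h} × ZMod (n + 1) => fun i => p.1.1 i + p.2) := by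
    constructor
    · rintro ⟨⟨f, hf⟩, c⟩ ⟨⟨f', hf'⟩, c'⟩ h
      simp only at h
      have hfc : ∀ i, f i + c = f' i + c' := fun i => congrFun h i
      obtain ⟨c₀, hc₀, hu⟩ := pf_shift_exists_unique n hn f
      have h1 : c - c' = 0 := by
        have e1 : (c - c') = c₀ := by
          refine hu (c - c') ?_
          intro j hj
          have : (univ.filter fun i => (f i + (c - c')).val ≤ j)
              = (univ.filter fun i => (f' i).val ≤ j) := by
            refine filter_congr fun i _ => ?_
            have : f i + (c - c') = f' i := by linear_combination hfc i
            rw [this]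
          rw [this]
          exact hf' j hj
        have e2 : (0 : ZMod (n + 1)) = c₀ := by
          refine hu 0 ?_
          intro j hj
          simpa using hf j hj
        rw [e1, ← e2]
      have hcc : c = c' := by
        have := sub_eq_zero.1 h1
        exact this
      subst hcc
      have : f = f' := by
        funext i
        have := hfc i
        exact add_right_cancel this
      simp [this]
    · intro g
      obtain ⟨c, hc, _⟩ := pf_shift_exists_unique n hn g
      refine ⟨⟨⟨fun i => g i + c, hc⟩, -c⟩, ?_⟩
      funext i
      simp
  have hcard := Nat.card_congr (Equiv.ofBijective _ hbij)
  rw [Nat.card_prod] at hcard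
  have h1 : Nat.card (ZMod (n + 1)) = n + 1 := by simp [Nat.card_zmod]
  have h2 : Nat.card (Fin n → ZMod (n + 1)) = (n + 1) ^ n := by
    simp [Nat.card_eq_fintype_card, Fintype.card_fun, ZMod.card]
  rw [h1, h2] at hcard
  have h3 : (n + 1) ^ n = (n + 1) ^ (n - 1) * (n + 1) := by
    rw [← pow_succ]
    congr 1
    omega
  rw [h3] at hcard
  exact Nat.eq_of_mul_eq_mul_right (by omega) hcard

/-- The number of parking functions on [n] equals (n+1)^(n-1).
A parking function on [n] is f : [n] → [n] (here `Fin n → Fin n`, value `i` representing i+1)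
with #f⁻¹({1,...,j}) ≥ j for all j. -/
theorem parking_function_count (n : ℕ) (hn : 1 ≤ n) :
    Nat.card {f : Fin n → Fin n //
      ∀ j : Fin n, j.val + 1 ≤ (Finset.univ.filter (fun i => f i ≤ j)).card} =
    (n + 1) ^ (n - 1) := by
  classical
  rw [← pf_card_pred n hn]
  refine Nat.card_congr ?_
  refine ⟨fun f => ⟨fun i => ((f.1 i : ℕ) : ZMod (n + 1)), ?_⟩,
    fun h => ⟨fun i => ⟨(h.1 i).val, ?_⟩, ?_⟩, ?_, ?_⟩
  · intro j hj
    have := f.2 ⟨j, hj⟩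
    convert this using 2
    refine (filter_congr fun i _ => ?_)
    rw [ZMod.val_natCast_of_lt (by omega : (f.1 i : ℕ) < n + 1)]
    simp [Fin.le_def]
  · -- (h.1 i).val < n
    have h1 := h.2 (n - 1) (by omega)
    have h2 : (univ.filter fun i' => (h.1 i').val ≤ n - 1) = univ := by
      have hle : (univ.filter fun i' => (h.1 i').val ≤ n - 1).card ≤ n := by
        simpa using card_filter_le (univ : Finset (Fin n)) _
      refine Finset.eq_univ_of_card _ ?_
      simp only [Fintype.card_fin]
      omega
    have := (Finset.eq_univ_iff_forall.1 h2) i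
    simp only [mem_filter] at this
    omega
  · intro j
    have := h.2 j.val j.isLt
    convert this using 2
    simp [Fin.le_def]
  · intro f
    ext i
    simp [ZMod.val_natCast_of_lt (by omega : (f.1 i : ℕ) < n + 1)]
  · intro h
    ext i
    simp [ZMod.natCast_zmod_val]
end

section
/- Every coset of the cyclic subgroup H generated by (1,1,...,1) in (Z/(n+1))^n contains exactly one parking function, where a vector (a_1,...,a_n) with entries in {1,...,n+1} ⊆ Z/(n+1) is identified with the corresponding function on [n]. -/
/-!
Record a vector `a` by the walk that at step `m` goes up by the number of entries equal to `m`
and down by one, reading residues cyclically. A vector is a parking function iff its walk stays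
nonnegative up to time `n`, and adding `c·(1,…,1)` just starts the walk of `a` at
position `-c`. Since there are `n` entries, the walk drops by exactly one over each period of
`n + 1` steps, and then (cycle lemma) exactly one starting point in a period is a weak minimum
of the whole following window: the first position of the minimum.
-/

open Finset

namespace ParkingFunction

section CycleLemma

def IsWindowMin (Q : ℕ → ℤ) (p s : ℕ) : Prop :=
  ∀ j, 1 ≤ j → j < p → Q s ≤ Q (s + j)

variable {Q : ℕ → ℤ} {p : ℕ}

theorem exists_isWindowMin (hQ : ∀ t, Q (t + p) = Q t - 1) : ∃ s < p, IsWindowMin Q p s := by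
  have hp : p ≠ 0 := by
    rintro rfl
    have := hQ 0
    rw [add_zero] at this
    omega
  have hmin : ∃ s, s < p ∧ ∀ t < p, Q s ≤ Q t := by
    obtain ⟨s, hs, hmin⟩ := (range p).exists_min_image Q (nonempty_range_iff.2 hp)
    exact ⟨s, mem_range.1 hs, fun t ht => hmin t (mem_range.2 ht)⟩
  obtain ⟨hs, hsmin⟩ := Nat.find_spec hmin
  refine ⟨Nat.find hmin, hs, fun j _ hj => ?_⟩
  obtain hwithin | hwrap := lt_or_ge (Nat.find hmin + j) p
  · exact hsmin _ hwithin
  -- The window wraps past `p`: it reaches `t + p` with `t` earlier than the first minimiser,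
  -- so `Q t` exceeds the minimum strictly, which absorbs the drop of `1`.
  obtain ⟨t, ht⟩ : ∃ t, Nat.find hmin + j = t + p := ⟨_, (Nat.sub_add_cancel hwrap).symm⟩
  have hlt : Q (Nat.find hmin) < Q t := by
    have := Nat.find_min hmin (show t < Nat.find hmin by omega)
    push Not at this
    obtain ⟨u, hu, hut⟩ := this (by omega)
    exact (hsmin u hu).trans_lt hut
  rw [ht, hQ]
  omega

theorem not_lt_of_isWindowMin (hQ : ∀ t, Q (t + p) = Q t - 1) {s s' : ℕ} (hs' : s' < p)
    (hs : IsWindowMin Q p s) (hs'min : IsWindowMin Q p s') : ¬s < s' := by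
  intro hlt
  have h₁ := hs (s' - s) (by omega) (by omega)
  have h₂ := hs'min (s + p - s') (by omega) (by omega)
  rw [Nat.add_sub_cancel' hlt.le] at h₁
  rw [Nat.add_sub_cancel' (by omega), hQ] at h₂
  omega

theorem existsUnique_isWindowMin (hQ : ∀ t, Q (t + p) = Q t - 1) :
    ∃! s, s < p ∧ IsWindowMin Q p s := by
  obtain ⟨s, hs, hmin⟩ := exists_isWindowMin hQ
  refine ⟨s, ⟨hs, hmin⟩, fun s' ⟨hs', hmin'⟩ => le_antisymm ?_ ?_⟩
  · exact not_lt.1 (not_lt_of_isWindowMin hQ hs' hmin hmin')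
  · exact not_lt.1 (not_lt_of_isWindowMin hQ hs hmin' hmin)

end CycleLemma

section Walk

variable {N : ℕ} {ι : Type*} [Fintype ι]

def posRep (x : ZMod N) : ℕ := if x.val = 0 then N else x.val

def IsParking (v : ι → ZMod N) : Prop :=
  ∀ j, 1 ≤ j → j < N → j ≤ #{i | posRep (v i) ≤ j}

/-- For `t < N` this is `#{i | posRep (a i) ≤ t} - t`; beyond `N` the residues are read
cyclically, so that shifting `a` by a constant shifts the starting point of the walk. -/
def walk (a : ι → ZMod N) (t : ℕ) : ℤ :=
  ∑ m ∈ range t, ((#{i | a i = (m : ZMod N) + 1} : ℤ) - 1)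

variable [NeZero N]

theorem one_le_posRep (x : ZMod N) : 1 ≤ posRep x := by
  have := NeZero.pos N
  unfold posRep
  split_ifs <;> omega

theorem posRep_eq_iff {x : ZMod N} {k : ℕ} (hk₀ : k ≠ 0) (hk : k < N) :
    posRep x = k ↔ x = k := by
  rw [posRep, ← (ZMod.val_injective N).eq_iff, ZMod.val_natCast_of_lt hk]
  split_ifs <;> omega

theorem card_filter_posRep_le (v : ι → ZMod N) {j : ℕ} (hj : j < N) :
    #{i | posRep (v i) ≤ j} = ∑ m ∈ range j, #{i | v i = (m : ZMod N) + 1} := by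
  have hmaps : ((({i | posRep (v i) ≤ j} : Finset ι)) : Set ι).MapsTo
      (fun i => posRep (v i) - 1) (range j) := fun i hi => by
    have := one_le_posRep (v i)
    simp only [coe_filter, mem_univ, true_and, Set.mem_ofPred_eq] at hi
    simp only [coe_range, Set.mem_Iio]
    omega
  rw [card_eq_sum_card_fiberwise hmaps]
  refine sum_congr rfl fun m hm => ?_
  rw [mem_range] at hm
  rw [filter_filter]
  refine congrArg card (filter_congr fun i _ => ?_)
  have := one_le_posRep (v i)
  rw [← Nat.cast_succ, ← posRep_eq_iff m.succ_ne_zero (by omega)]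
  omega

theorem walk_eq_card_sub (v : ι → ZMod N) {j : ℕ} (hj : j < N) :
    walk v j = #{i | posRep (v i) ≤ j} - j := by
  rw [card_filter_posRep_le v hj, walk, sum_sub_distrib]
  simp

theorem walk_add_const (a : ι → ZMod N) (c : ZMod N) (j : ℕ) :
    walk (a + fun _ => c) j = walk a ((-c).val + j) - walk a (-c).val := by
  simp only [walk, sum_range_add, add_sub_cancel_left, Pi.add_apply, ← eq_sub_iff_add_eq]
  refine sum_congr rfl fun m _ => ?_
  push_cast
  rw [ZMod.natCast_zmod_val]
  ring_nf

theorem sum_range_natCast_add {M : Type*} [AddCommMonoid M] (f : ZMod N → M) (t : ℕ) :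
    ∑ m ∈ range N, f ((t + m : ℕ) : ZMod N) = ∑ r, f r := by
  obtain ⟨n, rfl⟩ := Nat.exists_eq_succ_of_ne_zero (NeZero.ne N)
  rw [← Fin.sum_univ_eq_sum_range (fun m => f ((t + m : ℕ) : ZMod (n + 1)))]
  refine Fintype.sum_equiv (Equiv.addLeft (t : ZMod (n + 1))) _ _ fun k => congrArg f ?_
  rw [Nat.cast_add]
  exact congrArg _ (ZMod.natCast_zmod_val (n := n + 1) k)

theorem walk_add_period (a : ι → ZMod N) (t : ℕ) :
    walk a (t + N) = walk a t + Fintype.card ι - N := by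
  have hfibres : ∑ r, #{i | a i = r + 1} = Fintype.card ι :=
    (Equiv.sum_comp (Equiv.addRight 1) fun r => #{i | a i = r}).trans
      (card_eq_sum_card_fiberwise (by simp)).symm
  rw [walk, sum_range_add, ← walk, sum_sub_distrib,
    sum_range_natCast_add (fun r => (#{i | a i = r + 1} : ℤ)), ← Nat.cast_sum, hfibres]
  simp only [sum_const, card_range, Int.nsmul_eq_mul, mul_one]
  ring

theorem isParking_add_const_iff (a : ι → ZMod N) (c : ZMod N) :
    IsParking (a + fun _ => c) ↔ IsWindowMin (walk a) N (-c).val := by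
  refine forall_congr' fun j => imp_congr_right fun _ => imp_congr_right fun hj => ?_
  have hwalk := walk_add_const a c j
  rw [walk_eq_card_sub _ hj] at hwalk
  omega

theorem existsUnique_isParking_add_const (a : ι → ZMod N) (hN : Fintype.card ι + 1 = N) :
    ∃! c : ZMod N, IsParking (a + fun _ => c) := by
  have hdrop : ∀ t, walk a (t + N) = walk a t - 1 := fun t => by
    have hN' : (N : ℤ) = Fintype.card ι + 1 := by exact_mod_cast hN.symm
    rw [walk_add_period, hN']
    ring
  obtain ⟨s, ⟨hs, hmin⟩, huniq⟩ := existsUnique_isWindowMin hdrop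
  refine ExistsUnique.intro (-(s : ZMod N)) ?_ fun c hc => ?_
  · rwa [isParking_add_const_iff, neg_neg, ZMod.val_natCast_of_lt hs]
  · rw [isParking_add_const_iff] at hc
    rw [← huniq _ ⟨ZMod.val_lt _, hc⟩, ZMod.natCast_zmod_val, neg_neg]

end Walk

theorem sub_mem_zmultiples_one_iff {ι : Type*} {m : ℕ} {v a : ι → ZMod m} :
    v - a ∈ AddSubgroup.zmultiples (fun _ => 1 : ι → ZMod m) ↔
      ∃ c : ZMod m, v = a + fun _ => c := by
  simp only [AddSubgroup.mem_zmultiples_iff, eq_comm (b := v - a), sub_eq_iff_eq_add']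
  constructor
  · rintro ⟨k, hk⟩
    exact ⟨k, by rw [hk]; ext; simp⟩
  · rintro ⟨c, rfl⟩
    obtain ⟨k, rfl⟩ := ZMod.intCast_surjective c
    exact ⟨k, by ext; simp⟩

end ParkingFunction

open ParkingFunction in
theorem unique_parking_in_coset_general (n : ℕ)
    (lift : ZMod (n + 1) → ℕ)
    (hlift : ∀ x : ZMod (n + 1), lift x = if x.val = 0 then n + 1 else x.val) :
    ∀ a : Fin n → ZMod (n + 1),
      ∃! v : Fin n → ZMod (n + 1),
        v - a ∈ AddSubgroup.zmultiples (fun _ => 1 : Fin n → ZMod (n + 1)) ∧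
        ∀ j : ℕ, 1 ≤ j → j ≤ n →
          j ≤ (Finset.univ.filter (fun i => lift (v i) ≤ j)).card := by
  obtain rfl : lift = posRep := funext hlift
  have hparking (v : Fin n → ZMod (n + 1)) :
      IsParking v ↔ ∀ j : ℕ, 1 ≤ j → j ≤ n → j ≤ #{i | posRep (v i) ≤ j} := by
    simp only [IsParking, Nat.lt_add_one_iff]
  intro a
  obtain ⟨c, hc, huniq⟩ := existsUnique_isParking_add_const a (by simp)
  refine ⟨a + fun _ => c, ⟨sub_mem_zmultiples_one_iff.2 ⟨c, rfl⟩, (hparking _).1 hc⟩, ?_⟩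
  rintro v ⟨hv, hpark⟩
  obtain ⟨c', rfl⟩ := sub_mem_zmultiples_one_iff.1 hv
  rw [huniq c' ((hparking _).2 hpark)]

/-- Every coset of the cyclic subgroup H generated by (1,…,1) in (ℤ/(n+1))ⁿ contains
exactly one parking function, where each entry of a vector is lifted to its
representative in {1,…,n+1} (so the residue 0 represents n+1). -/
theorem unique_parking_in_coset (n : ℕ) (hn : 1 ≤ n)
    (lift : ZMod (n + 1) → ℕ)
    (hlift : ∀ x : ZMod (n + 1), lift x = if x.val = 0 then n + 1 else x.val) :
    ∀ a : Fin n → ZMod (n + 1),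
      ∃! v : Fin n → ZMod (n + 1),
        v - a ∈ AddSubgroup.zmultiples (fun _ => 1 : Fin n → ZMod (n + 1)) ∧
        ∀ j : ℕ, 1 ≤ j → j ≤ n →
          j ≤ (Finset.univ.filter (fun i => lift (v i) ≤ j)).card :=
  unique_parking_in_coset_general n lift hlift
end

section
/- The number of k-parking functions on [n] equals (kn+1)^(n-1). -/
open Finset

namespace KPark

/-- prefix count: number of coordinates with value < t -/
def C {N : ℕ} {n : ℕ} (b : Fin n → ZMod N) (t : ℕ) : ℕ :=
  (univ.filter fun j => (b j).val < t).card

/-- the walk -/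
def T (k : ℕ) {N n : ℕ} (b : Fin n → ZMod N) (x : ℕ) : ℤ :=
  (k : ℤ) * C b x - x

/-- circular parking condition -/
def Park (k : ℕ) {N n : ℕ} (b : Fin n → ZMod N) : Prop :=
  ∀ i : Fin n, i.val < C b (k * i.val + 1)

variable {k n : ℕ}

lemma C_mono {N : ℕ} (b : Fin n → ZMod N) {t t' : ℕ} (h : t ≤ t') : C b t ≤ C b t' := by
  apply Finset.card_le_card
  intro j hj
  simp only [C, mem_filter] at *
  exact ⟨hj.1, lt_of_lt_of_le hj.2 h⟩

lemma C_top (b : Fin n → ZMod (k*n+1)) {t : ℕ} (h : k*n+1 ≤ t) : C b t = n := by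
  have : (univ.filter fun j => (b j).val < t) = univ := by
    apply Finset.filter_true_of_mem
    intro j _
    exact lt_of_lt_of_le (ZMod.val_lt (b j)) h
  simp [C, this]

lemma C_le {N : ℕ} (b : Fin n → ZMod N) (t : ℕ) : C b t ≤ n := by
  simpa [C] using Finset.card_filter_le univ (fun j => (b j).val < t)

lemma park_iff_T (hk : 1 ≤ k) (b : Fin n → ZMod (k*n+1)) :
    Park k b ↔ ∀ t, 1 ≤ t → t ≤ k*n → 0 ≤ T k b t := by
  constructor
  · intro hp t ht1 ht2
    have hn : 1 ≤ n := by nlinarith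
    set i := (t-1)/k with hi
    have hik : k * i ≤ t - 1 := by
      rw [hi, mul_comm]; exact Nat.div_mul_le_self _ _
    have hilt : i < n := by
      by_contra h
      push_neg at h
      have : k*n ≤ k*i := Nat.mul_le_mul_left k h
      omega
    have hcount : i < C b (k*i+1) := hp ⟨i, hilt⟩
    have hle : k*i+1 ≤ t := by omega
    have h1 : i + 1 ≤ C b t := le_trans hcount (C_mono b hle)
    have h2 : t ≤ k * (i+1) := by
      have hmod := Nat.div_add_mod (t-1) k
      have hr : (t-1) % k < k := Nat.mod_lt _ (by omega)
      have hms : k*(i+1) = k*i + k := by ring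
      rw [← hi] at hmod
      omega
    simp only [T, sub_nonneg]
    have : (t : ℤ) ≤ k * (i+1) := by exact_mod_cast h2
    have h3 : (k : ℤ) * (i+1) ≤ k * C b t := by
      apply mul_le_mul_of_nonneg_left _ (by positivity)
      exact_mod_cast h1
    linarith
  · intro hT i
    have h1 : k * i.val + 1 ≤ k * n := by
      have : i.val + 1 ≤ n := i.isLt
      nlinarith
    have := hT (k * i.val + 1) (by omega) h1
    simp only [T, sub_nonneg] at this
    have : (k : ℤ) * i.val < k * C b (k*i.val+1) := by push_cast at this ⊢; linarith
    have := lt_of_mul_lt_mul_left this (by positivity : (0:ℤ) ≤ k)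
    exact_mod_cast this

lemma val_shift {N : ℕ} [NeZero N] {s : ℕ} (hs1 : 1 ≤ s) (hsN : s ≤ N) (v : ZMod N) :
    (v + ((N - s : ℕ) : ZMod N)).val = if v.val < s then v.val + (N - s) else v.val - s := by
  have hv := ZMod.val_lt v
  rw [ZMod.val_add, ZMod.val_cast_of_lt (by omega)]
  split
  · rw [Nat.mod_eq_of_lt (by omega)]
  · have h : v.val + (N - s) = (v.val - s) + N := by omega
    rw [h, Nat.add_mod_right, Nat.mod_eq_of_lt (by omega)]

lemma C_shift_le {N : ℕ} [NeZero N] {s t : ℕ} (hs1 : 1 ≤ s) (hsN : s ≤ N) (hst : s + t ≤ N)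
    (b : Fin n → ZMod N) :
    C (fun j => b j + ((N - s : ℕ) : ZMod N)) t + C b s = C b (s + t) := by
  have key : ∀ j : Fin n, ((b j + ((N - s : ℕ) : ZMod N)).val < t ↔
      ¬ (b j).val < s ∧ (b j).val < s + t) := by
    intro j
    rw [val_shift hs1 hsN]
    have := ZMod.val_lt (b j)
    split <;> omega
  have h1 : (univ.filter fun j => (b j + ((N - s : ℕ) : ZMod N)).val < t) =
      (univ.filter fun j => (b j).val < s + t).filter (fun j => ¬ (b j).val < s) := by
    ext j; simp [key j, and_comm]
  have h2 : (univ.filter fun j => (b j).val < s + t).filter (fun j => (b j).val < s) =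
      univ.filter fun j => (b j).val < s := by
    ext j; simp only [mem_filter, mem_univ, true_and]
    constructor
    · exact fun h => h.2
    · exact fun h => ⟨by omega, h⟩
  have h3 := Finset.card_filter_add_card_filter_not
    (s := univ.filter fun j => (b j).val < s + t) (p := fun j => (b j).val < s)
  simp only [C]
  rw [h1]
  rw [h2] at h3
  omega

lemma C_shift_gt {N : ℕ} [NeZero N] {s t : ℕ} (hs1 : 1 ≤ s) (hsN : s ≤ N) (hst : N ≤ s + t)
    (htN : t ≤ N) (b : Fin n → ZMod N) :
    C (fun j => b j + ((N - s : ℕ) : ZMod N)) t + C b s = n + C b (s + t - N) := by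
  have key : ∀ j : Fin n, ((b j + ((N - s : ℕ) : ZMod N)).val < t ↔
      ((b j).val < s + t - N ∨ ¬ (b j).val < s)) := by
    intro j
    rw [val_shift hs1 hsN]
    have := ZMod.val_lt (b j)
    split <;> omega
  have h1 : (univ.filter fun j => (b j + ((N - s : ℕ) : ZMod N)).val < t) =
      (univ.filter fun j => (b j).val < s + t - N) ∪ (univ.filter fun j => ¬ (b j).val < s) := by
    ext j; simp [key j]
  have hdisj : Disjoint (univ.filter fun j => (b j).val < s + t - N)
      (univ.filter fun j => ¬ (b j).val < s) := by
    rw [Finset.disjoint_left]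
    intro j hj1 hj2
    simp only [mem_filter, mem_univ, true_and] at hj1 hj2
    omega
  have h3 := Finset.card_filter_add_card_filter_not
    (s := (univ : Finset (Fin n))) (p := fun j => (b j).val < s)
  simp only [C]
  rw [h1, Finset.card_union_of_disjoint hdisj]
  simp only [Finset.card_univ, Fintype.card_fin] at h3
  omega



lemma T_shift_le {N : ℕ} [NeZero N] {s t : ℕ} (hs1 : 1 ≤ s) (hsN : s ≤ N) (hst : s + t ≤ N)
    (b : Fin n → ZMod N) :
    T k (fun j => b j + ((N - s : ℕ) : ZMod N)) t = T k b (s + t) - T k b s := by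
  have h := C_shift_le hs1 hsN hst b
  simp only [T]
  have h' : (C (fun j => b j + ((N - s : ℕ) : ZMod N)) t : ℤ) + C b s = C b (s + t) := by
    exact_mod_cast h
  have h2 : (k:ℤ) * ((C (fun j => b j + ((N - s : ℕ) : ZMod N)) t : ℤ) + C b s)
      = k * C b (s + t) := by rw [h']
  rw [mul_add] at h2
  push_cast
  linarith

lemma T_shift_gt {s t : ℕ} (hs1 : 1 ≤ s) (hsN : s ≤ k*n+1) (hst : k*n+1 ≤ s + t)
    (htN : t ≤ k*n+1) (b : Fin n → ZMod (k*n+1)) :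
    T k (fun j => b j + (((k*n+1) - s : ℕ) : ZMod (k*n+1))) t
      = T k b (s + t - (k*n+1)) - T k b s - 1 := by
  have h := C_shift_gt hs1 hsN hst htN b
  simp only [T]
  have h' : (C (fun j => b j + (((k*n+1) - s : ℕ) : ZMod (k*n+1))) t : ℤ) + C b s
      = n + C b (s + t - (k*n+1)) := by exact_mod_cast h
  have hc : ((s + t - (k*n+1) : ℕ) : ℤ) = (s : ℤ) + t - (k*n+1) := by
    have : (k*n+1 : ℕ) ≤ s + t := hst
    push_cast [Nat.cast_sub this]
    ring
  have h2 : (k:ℤ) * ((C (fun j => b j + (((k*n+1) - s : ℕ) : ZMod (k*n+1))) t : ℤ) + C b s)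
      = k * ((n : ℤ) + C b (s + t - (k*n+1))) := by rw [h']
  rw [mul_add, mul_add] at h2
  rw [hc]
  push_cast
  linarith

lemma park_shift_iff (hk : 1 ≤ k) (b : Fin n → ZMod (k*n+1)) {s : ℕ}
    (hs1 : 1 ≤ s) (hsN : s ≤ k*n+1) :
    Park k (fun j => b j + (((k*n+1) - s : ℕ) : ZMod (k*n+1))) ↔
      (∀ u, s < u → u ≤ k*n+1 → T k b s ≤ T k b u) ∧
      (∀ u, 1 ≤ u → u < s → T k b s < T k b u) := by
  rw [park_iff_T hk]
  constructor
  · intro H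
    constructor
    · intro u hsu huN
      have h1 := H (u - s) (by omega) (by omega)
      rw [T_shift_le hs1 hsN (by omega) b] at h1
      have : s + (u - s) = u := by omega
      rw [this] at h1
      linarith
    · intro u hu1 hus
      have h1 := H (u + (k*n+1) - s) (by omega) (by omega)
      rw [T_shift_gt hs1 hsN (by omega) (by omega) b] at h1
      have : s + (u + (k*n+1) - s) - (k*n+1) = u := by omega
      rw [this] at h1
      linarith
  · intro ⟨H1, H2⟩ t ht1 ht2
    rcases le_or_gt (s + t) (k*n+1) with h | h
    · rw [T_shift_le hs1 hsN h b]
      have := H1 (s + t) (by omega) h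
      linarith
    · rw [T_shift_gt hs1 hsN (by omega) (by omega) b]
      have := H2 (s + t - (k*n+1)) (by omega) (by omega)
      linarith

lemma existsUnique_shift (hk : 1 ≤ k) (b : Fin n → ZMod (k*n+1)) :
    ∃! c : ZMod (k*n+1), Park k (fun j => b j + c) := by
  classical
  -- existence
  have hne : (Finset.Icc 1 (k*n+1)).Nonempty := ⟨1, Finset.mem_Icc.2 ⟨le_refl 1, by omega⟩⟩
  obtain ⟨u0, hu0mem, hu0min⟩ := Finset.exists_min_image (Finset.Icc 1 (k*n+1)) (T k b) hne
  set A := (Finset.Icc 1 (k*n+1)).filter (fun u => ∀ u' ∈ Finset.Icc 1 (k*n+1), T k b u ≤ T k b u') with hA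
  have hAne : A.Nonempty := ⟨u0, by simp only [hA, mem_filter]; exact ⟨hu0mem, hu0min⟩⟩
  set s := A.min' hAne with hs
  have hsA : s ∈ A := A.min'_mem hAne
  simp only [hA, mem_filter, Finset.mem_Icc] at hsA
  obtain ⟨⟨hs1, hsN⟩, hsmin⟩ := hsA
  have hpark : Park k (fun j => b j + (((k*n+1) - s : ℕ) : ZMod (k*n+1))) := by
    rw [park_shift_iff hk b hs1 hsN]
    constructor
    · intro u hsu huN
      exact hsmin u ⟨by omega, huN⟩
    intro u hu1 hus
    have hle := hsmin u ⟨hu1, by omega⟩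
    rcases lt_or_ge (T k b s) (T k b u) with h | h
    · exact h
    · exfalso
      have huA : u ∈ A := by
        simp only [hA, mem_filter, Finset.mem_Icc]
        refine ⟨⟨hu1, by omega⟩, fun u' hu' => le_trans h (hsmin u' hu')⟩
      have := A.min'_le u huA
      omega
  -- uniqueness helper: canonical form of any c
  have hcanon : ∀ c : ZMod (k*n+1), ∃ s' : ℕ, 1 ≤ s' ∧ s' ≤ (k*n+1) ∧ c = (((k*n+1) - s' : ℕ) : ZMod (k*n+1)) ∧
      s' = (k*n+1) - c.val := by
    intro c
    refine ⟨(k*n+1) - c.val, ?_, ?_, ?_, rfl⟩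
    · have := ZMod.val_lt c; omega
    · omega
    · have hv := ZMod.val_lt c
      have : (k*n+1) - ((k*n+1) - c.val) = c.val := by omega
      rw [this, ZMod.natCast_val, ZMod.cast_id]
  refine ⟨(((k*n+1) - s : ℕ) : ZMod (k*n+1)), hpark, ?_⟩
  intro c hc
  obtain ⟨s', hs'1, hs'N, hcc, _⟩ := hcanon c
  rw [hcc] at hc ⊢
  rw [park_shift_iff hk b hs'1 hs'N] at hc
  have hparkiff := (park_shift_iff hk b hs1 hsN).1 hpark
  have hss : s' = s := by
    by_contra hne'
    rcases lt_or_gt_of_ne hne' with h | h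
    · have h1 := hc.1 s h hsN
      have h2 := hparkiff.2 s' hs'1 h
      omega
    · have h1 := hparkiff.1 s' h hs'N
      have h2 := hc.2 s hs1 h
      omega
  rw [hss]


lemma card_park (hk : 1 ≤ k) (hn : 1 ≤ n) :
    Nat.card {b : Fin n → ZMod (k*n+1) // Park k b} = (k*n+1)^(n-1) := by
  classical
  have hbij : Function.Bijective
      (fun p : {b : Fin n → ZMod (k*n+1) // Park k b} × ZMod (k*n+1) =>
        (fun j => p.1.1 j + p.2 : Fin n → ZMod (k*n+1))) := by
    constructor
    · rintro ⟨⟨b1, hb1⟩, c1⟩ ⟨⟨b2, hb2⟩, c2⟩ heq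
      simp only at heq
      have hpt : ∀ j, b1 j + c1 = b2 j + c2 := fun j => congrFun heq j
      have hb2' : (fun j => b1 j + (c1 - c2)) = b2 := by
        funext j
        have := hpt j
        linear_combination this - c2 + c2 - c2
      obtain ⟨c0, hc0, huniq⟩ := existsUnique_shift hk b1
      have e1 : c1 - c2 = c0 := by
        apply huniq
        rw [hb2']; exact hb2
      have e2 : (0 : ZMod (k*n+1)) = c0 := by
        apply huniq
        simpa using hb1
      have hcc : c1 = c2 := by
        have : c1 - c2 = 0 := e1.trans e2.symm
        linear_combination this
      subst hcc
      have : b1 = b2 := by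
        funext j
        have := hpt j
        exact add_right_cancel this
      simp [this]
    · intro g
      obtain ⟨c0, hc0, _⟩ := existsUnique_shift hk g
      refine ⟨⟨⟨fun j => g j + c0, hc0⟩, -c0⟩, ?_⟩
      funext j
      simp
  have hcard := Nat.card_eq_of_bijective _ hbij
  rw [Nat.card_prod, Nat.card_zmod] at hcard
  have hfun : Nat.card (Fin n → ZMod (k*n+1)) = (k*n+1)^n := by
    rw [Nat.card_fun, Nat.card_zmod, Nat.card_eq_fintype_card, Fintype.card_fin]
  rw [hfun] at hcard
  have hpow : (k*n+1)^n = (k*n+1)^(n-1) * (k*n+1) := by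
    rw [← pow_succ]
    congr 1
    omega
  rw [hpow] at hcard
  exact Nat.eq_of_mul_eq_mul_right (by omega) hcard


lemma count_char (a : Fin n → ℕ) :
    (∃ σ : Equiv.Perm (Fin n), Monotone (fun i => a (σ i)) ∧
        ∀ i : Fin n, a (σ i) ≤ 1 + k * i.val) ↔
      ∀ i : Fin n, i.val < Fintype.card {j // a j ≤ 1 + k * i.val} := by
  classical
  constructor
  · rintro ⟨σ, hm, hb⟩ i
    have hcongr : Fintype.card {j // a (σ j) ≤ 1 + k * i.val}
        = Fintype.card {j // a j ≤ 1 + k * i.val} :=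
      Fintype.card_congr (Equiv.subtypeEquiv σ (fun j => Iff.rfl))
    have := (Tuple.lt_card_le_iff_apply_le_of_monotone (f := a ∘ σ) (a := 1 + k * i.val) (j := i) hm).2 (hb i)
    simpa [← hcongr, Fintype.card_subtype] using this
  · intro H
    refine ⟨Tuple.sort a, Tuple.monotone_sort a, fun i => ?_⟩
    have hm := Tuple.monotone_sort a
    have hcongr : Fintype.card {j // (a ∘ Tuple.sort a) j ≤ 1 + k * i.val}
        = Fintype.card {j // a j ≤ 1 + k * i.val} :=
      Fintype.card_congr (Equiv.subtypeEquiv (Tuple.sort a) (fun j => Iff.rfl))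
    exact (Tuple.lt_card_le_iff_apply_le_of_monotone (f := a ∘ Tuple.sort a)
      (a := 1 + k * i.val) (j := i) hm).1 (by have := H i; rw [← hcongr] at this; simpa [Fintype.card_subtype] using this)


lemma bound_of_count (hk : 1 ≤ k) (hn : 1 ≤ n) (a : Fin n → ℕ)
    (H : ∀ i : Fin n, i.val < Fintype.card {j // a j ≤ 1 + k * i.val}) :
    ∀ j, a j ≤ 1 + k * (n-1) := by
  classical
  intro j
  have h0 := H ⟨n-1, by omega⟩
  simp only at h0
  have hle : Fintype.card {j // a j ≤ 1 + k * (n-1)} ≤ n := by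
    have := Fintype.card_subtype_le (fun j : Fin n => a j ≤ 1 + k * (n-1))
    simpa using this
  have hcard : Fintype.card {j // a j ≤ 1 + k * (n-1)} = n := by omega
  rw [Fintype.card_subtype] at hcard
  have huniv : (univ.filter fun j => a j ≤ 1 + k * (n-1)) = univ := by
    apply Finset.eq_univ_of_card
    simpa using hcard
  have := Finset.mem_filter.1 (huniv ▸ Finset.mem_univ j)
  exact this.2

lemma bound_of_count' (hk : 1 ≤ k) (hn : 1 ≤ n) (a : Fin n → ℕ)
    (H : ∀ i : Fin n, i.val < Fintype.card {j // a j ≤ 1 + k * i.val}) :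
    ∀ j, a j - 1 < k * n + 1 := by
  intro j
  have h1 := bound_of_count hk hn a H j
  have h2 : k * (n-1) + k = k * n := by
    rw [← Nat.mul_succ]
    congr 1
    omega
  omega

lemma park_toB (hk : 1 ≤ k) (hn : 1 ≤ n) (a : Fin n → ℕ) (ha1 : ∀ i, 1 ≤ a i)
    (H : ∀ i : Fin n, i.val < Fintype.card {j // a j ≤ 1 + k * i.val}) :
    Park k (fun j => ((a j - 1 : ℕ) : ZMod (k*n+1))) := by
  classical
  intro i
  have hb := bound_of_count' hk hn a H
  have hval : ∀ j, (((a j - 1 : ℕ) : ZMod (k*n+1))).val = a j - 1 :=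
    fun j => ZMod.val_cast_of_lt (hb j)
  have hfilter : (univ.filter fun j => (((a j - 1 : ℕ) : ZMod (k*n+1))).val < k * i.val + 1)
      = univ.filter fun j => a j ≤ 1 + k * i.val := by
    apply Finset.filter_congr
    intro j _
    rw [hval j]
    have := ha1 j
    constructor <;> intro <;> omega
  have := H i
  rw [Fintype.card_subtype] at this
  show i.val < (univ.filter fun j => (((a j - 1 : ℕ) : ZMod (k*n+1))).val < k * i.val + 1).card
  rw [hfilter]
  exact this

lemma count_toA (b : Fin n → ZMod (k*n+1)) (hb : Park k b) :
    ∀ i : Fin n, i.val < Fintype.card {j // (b j).val + 1 ≤ 1 + k * i.val} := by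
  classical
  intro i
  have := hb i
  rw [Fintype.card_subtype]
  have hfilter : (univ.filter fun j => (b j).val + 1 ≤ 1 + k * i.val)
      = univ.filter fun j => (b j).val < k * i.val + 1 := by
    apply Finset.filter_congr
    intro j _
    constructor <;> intro <;> omega
  rw [hfilter]
  simpa [C] using this

lemma main_card (hk : 1 ≤ k) (hn : 1 ≤ n) :
    Nat.card {a : Fin n → ℕ // (∀ i, 1 ≤ a i) ∧
      ∃ σ : Equiv.Perm (Fin n), Monotone (fun i => a (σ i)) ∧
        ∀ i : Fin n, a (σ i) ≤ 1 + k * i.val} =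
    (k * n + 1) ^ (n - 1) := by
  classical
  rw [← card_park hk hn]
  apply Nat.card_congr
  refine Equiv.mk
    (fun p => ⟨fun j => ((p.1 j - 1 : ℕ) : ZMod (k*n+1)),
      park_toB hk hn p.1 p.2.1 ((count_char p.1).1 p.2.2)⟩)
    (fun q => ⟨fun j => (q.1 j).val + 1,
      ⟨fun j => Nat.le_add_left 1 _, (count_char _).2 (count_toA q.1 q.2)⟩⟩)
    ?_ ?_
  · rintro ⟨a, ha1, ha2⟩
    have H := (count_char a).1 ha2
    have hb := bound_of_count' hk hn a H
    apply Subtype.ext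
    funext j
    simp only [ZMod.val_cast_of_lt (hb j)]
    have := ha1 j
    omega
  · rintro ⟨b, hb⟩
    apply Subtype.ext
    funext j
    simp only [Nat.add_sub_cancel]
    rw [ZMod.natCast_val, ZMod.cast_id]

end KPark


/-- The number of k-parking functions on [n] equals (kn+1)^(n-1).
A k-parking function is a sequence of positive integers whose increasing
rearrangement b₁ ≤ ⋯ ≤ bₙ satisfies bᵢ ≤ 1 + k(i-1). -/
theorem k_parking_function_count (k n : ℕ) (hk : 1 ≤ k) (hn : 1 ≤ n) :
    Nat.card {a : Fin n → ℕ // (∀ i, 1 ≤ a i) ∧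
      ∃ σ : Equiv.Perm (Fin n), Monotone (fun i => a (σ i)) ∧
        ∀ i : Fin n, a (σ i) ≤ 1 + k * i.val} =
    (k * n + 1) ^ (n - 1) := by
  exact KPark.main_card hk hn
end

section
/- Every coset of the cyclic subgroup generated by (1,1,...,1) in (Z/(kn+1))^n contains exactly one k-parking function (entries lifted to representatives in {1,...,kn+1}). -/
open Finset

private lemma fin_card_filter_lt {n t : ℕ} (ht : t ≤ n) :
    (univ.filter fun j : Fin n => (j : ℕ) < t).card = t := by
  rw [← Finset.card_range t]
  apply Finset.card_nbij (i := Fin.val)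
  · intro x hx; simp at hx ⊢; omega
  · intro x hx y hy h; exact Fin.ext h
  · intro x hx; simp at hx ⊢; exact ⟨⟨x, lt_of_lt_of_le hx ht⟩, hx, rfl⟩

private lemma qfacts (d k n q : ℕ) (hk : 1 ≤ k) (hd1 : 1 ≤ d) (hdn : d ≤ k * n)
    (h1 : q * k ≤ d + k - 1) (h2 : d + k - 1 < q * k + k) :
    k * (q - 1) < d ∧ d ≤ k * q ∧ 1 ≤ q ∧ q ≤ n := by
  have hq1 : 1 ≤ q := by
    by_contra h
    have : q = 0 := by omega
    rw [this] at h2; simp at h2; omega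
  have h3 : k * (q - 1) + k = q * k := by
    have h4 : k * (q - 1 + 1) = k * (q - 1) + k := by rw [Nat.mul_add]; ring_nf
    rw [← h4, Nat.sub_add_cancel hq1]; ring
  have h5 : k * q = q * k := by ring
  refine ⟨by omega, by omega, hq1, ?_⟩
  by_contra h
  have h6 : k * (n + 1) ≤ k * q := Nat.mul_le_mul_left k (by omega)
  have h7 : k * (n + 1) = k * n + k := by ring
  omega

section

variable (k n : ℕ) (lift : ZMod (k * n + 1) → ℕ)
  (hlift : ∀ x : ZMod (k * n + 1), lift x = if x.val = 0 then k * n + 1 else x.val)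

include hlift

private lemma lift_basic (x : ZMod (k * n + 1)) :
    1 ≤ lift x ∧ lift x ≤ k * n + 1 ∧ ((lift x : ℕ) : ZMod (k * n + 1)) = x := by
  haveI : NeZero (k * n + 1) := ⟨Nat.succ_ne_zero _⟩
  rw [hlift]
  split_ifs with h
  · refine ⟨by omega, le_rfl, ?_⟩
    rw [ZMod.natCast_self]
    exact ((ZMod.val_eq_zero x).mp h).symm
  · have hv := ZMod.val_lt x
    refine ⟨by omega, by omega, ?_⟩
    simp [ZMod.natCast_val, ZMod.cast_id]

private lemma lift_cast (t : ℕ) (h1 : 1 ≤ t) (h2 : t ≤ 2 * (k * n + 1)) :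
    lift ((t : ℕ) : ZMod (k * n + 1)) = if t ≤ k * n + 1 then t else t - (k * n + 1) := by
  haveI : NeZero (k * n + 1) := ⟨Nat.succ_ne_zero _⟩
  set m := k * n + 1 with hm
  have hv : ((t : ℕ) : ZMod m).val = t % m := ZMod.val_natCast m t
  have hmod : t % m = if t < m then t else (if t < 2 * m then t - m else 0) := by
    split_ifs with h h'
    · exact Nat.mod_eq_of_lt h
    · rw [Nat.mod_eq_sub_mod (by omega)]; exact Nat.mod_eq_of_lt (by omega)
    · have : t = 2 * m := by omega
      subst this; simp [Nat.mul_mod_right]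
  rw [hlift, hv, hmod]
  have hm1 : 1 ≤ m := by omega
  split_ifs <;> omega

private lemma lift_shift (x : ZMod (k * n + 1)) (d : ℕ) (hd : d ≤ k * n + 1) :
    (lift (x + (d : ZMod (k * n + 1))) : ℤ) =
      (lift x : ℤ) + d - (if lift x + d ≤ k * n + 1 then 0 else (k * n + 1)) := by
  obtain ⟨h1, h2, h3⟩ := lift_basic k n lift hlift x
  have hx : x + (d : ZMod (k * n + 1)) = (((lift x + d : ℕ)) : ZMod (k * n + 1)) := by
    push_cast
    rw [h3]
  rw [hx, lift_cast k n lift hlift _ (by omega) (by omega)]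
  split_ifs with h
  · push_cast; ring
  · push_cast [Nat.cast_sub (by omega : k * n + 1 ≤ lift x + d)]; ring

private lemma sum_shift (a : Fin n → ZMod (k * n + 1)) (c : ZMod (k * n + 1)) (d : ℕ)
    (hd : d ≤ k * n + 1) :
    (∑ i, (lift (a i + c + (d : ZMod (k * n + 1))) : ℤ)) =
      (∑ i, (lift (a i + c) : ℤ)) + n * d -
        (k * n + 1) * (univ.filter fun i => k * n + 1 - d < lift (a i + c)).card := by
  have key : ∀ i : Fin n, (lift (a i + c + (d : ZMod (k * n + 1))) : ℤ) =
      (lift (a i + c) : ℤ) + d -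
        (if k * n + 1 - d < lift (a i + c) then (k * n + 1 : ℤ) else 0) := by
    intro i
    rw [lift_shift k n lift hlift (a i + c) d hd]
    by_cases h : k * n + 1 - d < lift (a i + c)
    · rw [if_neg (by omega), if_pos h]; push_cast; ring
    · rw [if_pos (by omega), if_neg h]; ring
  rw [Finset.sum_congr rfl (fun i _ => key i)]
  rw [Finset.sum_sub_distrib, Finset.sum_add_distrib, Finset.sum_ite, Finset.sum_const,
    Finset.sum_const]
  simp [mul_comm]

private lemma park_lt (hk : 1 ≤ k) (a : Fin n → ZMod (k * n + 1)) (c : ZMod (k * n + 1))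
    (hcf : ∀ j : ℕ, j < n → j + 1 ≤ (univ.filter fun i => lift (a i + c) ≤ k * j + 1).card)
    (d : ℕ) (hd1 : 1 ≤ d) (hdn : d ≤ k * n) :
    (∑ i, (lift (a i + c) : ℤ)) < ∑ i, (lift (a i + c + (d : ZMod (k * n + 1))) : ℤ) := by
  rw [sum_shift k n lift hlift a c d (by omega)]
  obtain ⟨hq3, hq4, hq1, hq2⟩ := qfacts d k n ((d + k - 1) / k) hk hd1 hdn
    (Nat.div_mul_le_self _ _)
    (by have := Nat.lt_div_mul_add (a := d + k - 1) hk; omega)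
  set q := (d + k - 1) / k
  set B := (univ.filter fun i => k * n + 1 - d < lift (a i + c)).card with hB
  have hsplit : (univ.filter fun i => lift (a i + c) ≤ k * n + 1 - d).card + B = n := by
    rw [hB]
    have h := Finset.card_filter_add_card_filter_not
      (s := (univ : Finset (Fin n))) (p := fun i => lift (a i + c) ≤ k * n + 1 - d)
    simp only [not_le] at h
    simpa using h
  have hineq : k * (n - q) + 1 ≤ k * n + 1 - d := by
    have h : k * (n - q) + k * q = k * n := by rw [← Nat.mul_add]; congr 1; omega
    omega
  have hmono : (univ.filter fun i => lift (a i + c) ≤ k * (n - q) + 1).card ≤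
      (univ.filter fun i => lift (a i + c) ≤ k * n + 1 - d).card := by
    apply Finset.card_le_card
    apply Finset.monotone_filter_right
    intro i hi
    omega
  have hcf' := hcf (n - q) (by omega)
  have hBq : B + 1 ≤ q := by omega
  have h1 : (B : ℤ) ≤ (q : ℤ) - 1 := by exact_mod_cast by omega
  have h2 : (k : ℤ) * ((q : ℤ) - 1) + 1 ≤ (d : ℤ) := by
    have h : k * (q - 1) + 1 ≤ d := hq3
    have hc : ((q - 1 : ℕ) : ℤ) = (q : ℤ) - 1 := by omega
    calc (k : ℤ) * ((q : ℤ) - 1) + 1 = ((k * (q - 1) + 1 : ℕ) : ℤ) := by push_cast [hc]; ring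
      _ ≤ (d : ℤ) := by exact_mod_cast h
  have h3 : (q : ℤ) ≤ n := by exact_mod_cast hq2
  have h4 : (0 : ℤ) ≤ (k : ℤ) * n + 1 := by positivity
  have h5 : (0 : ℤ) ≤ (n : ℤ) := by positivity
  have e1 : (n : ℤ) * d ≥ (n : ℤ) * ((k : ℤ) * ((q : ℤ) - 1) + 1) :=
    mul_le_mul_of_nonneg_left h2 h5
  have e2 : ((k : ℤ) * n + 1) * (B : ℤ) ≤ ((k : ℤ) * n + 1) * ((q : ℤ) - 1) :=
    mul_le_mul_of_nonneg_left h1 h4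
  push_cast
  nlinarith [e1, e2, h3]

private lemma nonpark_lt (hk : 1 ≤ k) (a : Fin n → ZMod (k * n + 1)) (c : ZMod (k * n + 1))
    (j : ℕ) (hj : j < n)
    (hbad : (univ.filter fun i => lift (a i + c) ≤ k * j + 1).card ≤ j) :
    (∑ i, (lift (a i + c + ((k * (n - j) : ℕ) : ZMod (k * n + 1))) : ℤ)) <
      ∑ i, (lift (a i + c) : ℤ) := by
  set d := k * (n - j) with hd
  have hprod : k * (n - j) + k * j = k * n := by rw [← Nat.mul_add]; congr 1; omega
  have hdn : d ≤ k * n := by omega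
  have hd1 : 1 ≤ d := by
    have := Nat.mul_pos (by omega : 0 < k) (by omega : 0 < n - j); omega
  rw [sum_shift k n lift hlift a c d (by omega)]
  have hmd : k * n + 1 - d = k * j + 1 := by omega
  rw [hmd]
  have hsplit : (univ.filter fun i => lift (a i + c) ≤ k * j + 1).card +
      (univ.filter fun i => k * j + 1 < lift (a i + c)).card = n := by
    have h := Finset.card_filter_add_card_filter_not
      (s := (univ : Finset (Fin n))) (p := fun i => lift (a i + c) ≤ k * j + 1)
    simp only [not_le] at h
    simpa using h
  have hBs : (n : ℤ) - j ≤ ((univ.filter fun i => k * j + 1 < lift (a i + c)).card : ℤ) := by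
    have := hsplit; omega
  have hdz : (d : ℤ) = (k : ℤ) * ((n : ℤ) - j) := by
    have h : ((n - j : ℕ) : ℤ) = (n : ℤ) - j := by omega
    rw [hd]; push_cast [← h]; ring
  have h4 : (0 : ℤ) ≤ (k : ℤ) * n + 1 := by positivity
  have e2 : ((k : ℤ) * n + 1) * ((n : ℤ) - j) ≤
      ((k : ℤ) * n + 1) * (((univ.filter fun i => k * j + 1 < lift (a i + c)).card : ℕ) : ℤ) :=
    mul_le_mul_of_nonneg_left hBs h4
  have hnj : (1 : ℤ) ≤ (n : ℤ) - j := by omega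
  push_cast
  nlinarith [e2, hdz, hnj]

private lemma cf_iff (hk : 1 ≤ k) (v : Fin n → ZMod (k * n + 1)) :
    (∃ σ : Equiv.Perm (Fin n), Monotone (fun i => lift (v (σ i))) ∧
        ∀ i : Fin n, lift (v (σ i)) ≤ 1 + k * i.val) ↔
      (∀ j : ℕ, j < n → j + 1 ≤ (univ.filter fun i => lift (v i) ≤ k * j + 1).card) := by
  have hperm : ∀ (σ : Equiv.Perm (Fin n)) (t : ℕ),
      (univ.filter fun i => lift (v (σ i)) ≤ t).card =
        (univ.filter fun i => lift (v i) ≤ t).card := by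
    intro σ t
    apply Finset.card_bij' (fun i _ => σ i) (fun j _ => σ.symm j) <;> simp
  constructor
  · rintro ⟨σ, hmon, hbd⟩ j hj
    rw [← hperm σ]
    have hsub : (univ.filter fun i : Fin n => (i : ℕ) < j + 1).card ≤
        (univ.filter fun i => lift (v (σ i)) ≤ k * j + 1).card := by
      apply Finset.card_le_card
      apply Finset.monotone_filter_right
      intro i _ hi
      have h1 : lift (v (σ i)) ≤ 1 + k * (i : ℕ) := hbd i
      have h2 : k * (i : ℕ) ≤ k * j := Nat.mul_le_mul_left k (by have hi' : (i : ℕ) < j + 1 := hi; omega)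
      omega
    rwa [fin_card_filter_lt (by omega)] at hsub
  · intro hcf
    refine ⟨Tuple.sort (fun i => lift (v i)), ?_, ?_⟩
    · exact Tuple.monotone_sort (fun i => lift (v i))
    · intro i
      by_contra hgt
      push_neg at hgt
      have hmon := Tuple.monotone_sort (fun i => lift (v i))
      have hsub : (univ.filter fun i' =>
            lift (v (Tuple.sort (fun i => lift (v i)) i')) ≤ k * (i : ℕ) + 1) ⊆
          (univ.filter fun i' : Fin n => (i' : ℕ) < (i : ℕ)) := by
        intro x hx
        simp only [Finset.mem_filter, Finset.mem_univ, true_and] at hx ⊢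
        by_contra hge
        push_neg at hge
        have hle : i ≤ x := by exact_mod_cast Fin.le_def.mpr hge
        have := hmon hle
        simp only [Function.comp_apply] at this
        omega
      have hcard := Finset.card_le_card hsub
      rw [fin_card_filter_lt (le_of_lt i.isLt)] at hcard
      have h := hcf (i : ℕ) i.isLt
      rw [← hperm (Tuple.sort (fun i => lift (v i)))] at h
      omega

end

/-- Every coset of the cyclic subgroup generated by (1,…,1) in (ℤ/(kn+1))ⁿ contains
exactly one k-parking function, entries lifted to representatives in {1,…,kn+1}
(the residue 0 representing kn+1). -/
theorem unique_k_parking_in_coset (k n : ℕ) (hk : 1 ≤ k) (hn : 1 ≤ n)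
    (lift : ZMod (k * n + 1) → ℕ)
    (hlift : ∀ x : ZMod (k * n + 1), lift x = if x.val = 0 then k * n + 1 else x.val) :
    ∀ a : Fin n → ZMod (k * n + 1),
      ∃! v : Fin n → ZMod (k * n + 1),
        v - a ∈ AddSubgroup.zmultiples (fun _ => 1 : Fin n → ZMod (k * n + 1)) ∧
        ∃ σ : Equiv.Perm (Fin n), Monotone (fun i => lift (v (σ i))) ∧
          ∀ i : Fin n, lift (v (σ i)) ≤ 1 + k * i.val := by
  intro a
  haveI : NeZero (k * n + 1) := ⟨Nat.succ_ne_zero _⟩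
  obtain ⟨c₀, hc₀⟩ := Finite.exists_min (fun c : ZMod (k * n + 1) => ∑ i, (lift (a i + c) : ℤ))
  have hCF : ∀ j : ℕ, j < n →
      j + 1 ≤ (univ.filter fun i => lift (a i + c₀) ≤ k * j + 1).card := by
    intro j hj
    by_contra h
    push_neg at h
    have hlt := nonpark_lt k n lift hlift hk a c₀ j hj (by omega)
    have hmin := hc₀ (c₀ + ((k * (n - j) : ℕ) : ZMod (k * n + 1)))
    simp only [← add_assoc] at hmin
    exact absurd hmin (not_le.mpr hlt)
  refine ⟨fun i => a i + c₀, ⟨?_, ?_⟩, ?_⟩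
  · rw [AddSubgroup.mem_zmultiples_iff]
    refine ⟨(c₀.val : ℤ), ?_⟩
    funext i
    simp only [Pi.smul_apply, Pi.sub_apply, smul_eq_mul]
    rw [zsmul_one]
    push_cast
    rw [ZMod.natCast_val, ZMod.cast_id]
    ring
  · exact (cf_iff k n lift hlift hk (fun i => a i + c₀)).mpr hCF
  · rintro v ⟨hvmem, hP⟩
    rw [AddSubgroup.mem_zmultiples_iff] at hvmem
    obtain ⟨z, hz⟩ := hvmem
    have hv : v = fun i => a i + ((z : ZMod (k * n + 1))) := by
      funext i
      have h := congrFun hz i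
      simp only [Pi.smul_apply, Pi.sub_apply] at h
      rw [zsmul_one] at h
      rw [h]; ring
    subst hv
    have hCFc := (cf_iff k n lift hlift hk (fun i => a i + (z : ZMod (k * n + 1)))).mp hP
    set c := ((z : ZMod (k * n + 1))) with hc
    suffices hcc : c = c₀ by rw [hcc]
    by_contra hne
    have hd0 : c₀ - c ≠ 0 := sub_ne_zero.mpr (Ne.symm hne)
    have hd1 : 1 ≤ (c₀ - c).val := by
      have := (ZMod.val_eq_zero (c₀ - c)).not.mpr hd0
      omega
    have hdn : (c₀ - c).val ≤ k * n := by
      have := ZMod.val_lt (c₀ - c); omega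
    have hlt := park_lt k n lift hlift hk a c hCFc ((c₀ - c).val) hd1 hdn
    have heq : ∀ i, a i + c + (((c₀ - c).val : ℕ) : ZMod (k * n + 1)) = a i + c₀ := by
      intro i
      rw [ZMod.natCast_val, ZMod.cast_id]
      ring
    simp only [heq] at hlt
    exact absurd (hc₀ c) (not_le.mpr hlt)
end

section
/- Let G be a graph on vertex set [n] such that whenever 1 ≤ i < j < k ≤ n and ij ∈ G, also ik ∈ G. For 1 < j ≤ n let d_j = #{i < j : ij ∉ G}. Then the number of cosets (a_1,...,a_n) + H in (Z/(n+1))^n / H (H generated by (1,...,1)) such that for all i < j, a_i = a_j implies ij ∈ G, equals the product over 1 < j ≤ n of (n - d_j + 1). -/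
/-!
The condition on `a : [n] → ℤ/(n+1)` says that `a` is a proper colouring of the complement
of `G`. Colour the vertices in increasing order: the earlier non-neighbours of `j` get pairwise
distinct colours (if `i < i'` among them shared a colour, `ii'` would be an edge of `G`, and then
so would `ij`), so vertex `j` has exactly `n + 1 - d_j` admissible colours, and `d_1 = 0`. Adding
a constant preserves admissibility and `H` acts freely, so every admissible coset contains
exactly `n + 1` admissible colourings.
-/

open Finset

namespace SimpleGraph

variable {n : ℕ} {C : Type*}

def IsComplColoring (G : SimpleGraph (Fin n)) (a : Fin n → C) : Prop :=
  ∀ i j : Fin n, i < j → a i = a j → G.Adj i j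

def AdjUpwardClosed (G : SimpleGraph (Fin n)) : Prop :=
  ∀ i j l : Fin n, i < j → j < l → G.Adj i j → G.Adj i l

def nonAdjBefore (G : SimpleGraph (Fin n)) [DecidableRel G.Adj] (j : Fin n) : Finset (Fin n) :=
  univ.filter fun i => i < j ∧ ¬G.Adj i j

def nonAdjLast (G : SimpleGraph (Fin (n + 1))) [DecidableRel G.Adj] : Finset (Fin n) :=
  univ.filter fun i => ¬G.Adj i.castSucc (Fin.last n)

lemma isComplColoring_add_const [AddRightCancelSemigroup C] {G : SimpleGraph (Fin n)}
    {a : Fin n → C} (c : C) :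
    G.IsComplColoring (a + Function.const _ c) ↔ G.IsComplColoring a := by
  simp [IsComplColoring]

lemma isComplColoring_snoc_iff [DecidableEq C] {G : SimpleGraph (Fin (n + 1))}
    [DecidableRel G.Adj] {b : Fin n → C} {c : C} :
    G.IsComplColoring (Fin.snoc b c : Fin (n + 1) → C) ↔
      (G.comap Fin.castSucc).IsComplColoring b ∧ c ∉ G.nonAdjLast.image b := by
  simp only [IsComplColoring, nonAdjLast, mem_image, mem_filter, mem_univ, true_and, not_exists,
    not_and, Fin.forall_fin_succ', Fin.snoc_castSucc, Fin.snoc_last, Fin.castSucc_lt_castSucc_iff,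
    comap_adj, Fin.castSucc_lt_last, lt_irrefl, forall_const, IsEmpty.forall_iff, and_true,
    fun i : Fin n => (Fin.le_last i.castSucc).not_gt, implies_true, forall_and, not_imp_not,
    eq_comm (a := c)]

lemma injOn_nonAdjLast {G : SimpleGraph (Fin (n + 1))} [DecidableRel G.Adj]
    (hG : G.AdjUpwardClosed) {b : Fin n → C} (hb : (G.comap Fin.castSucc).IsComplColoring b) :
    Set.InjOn b G.nonAdjLast := by
  intro i hi j hj hij
  simp only [nonAdjLast, coe_filter, mem_univ, true_and, Set.mem_ofPred_eq] at hi hj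
  by_contra hne
  rcases lt_or_gt_of_ne hne with h | h
  · exact hi (hG _ _ _ (Fin.castSucc_lt_castSucc_iff.2 h) (Fin.castSucc_lt_last j) (hb i j h hij))
  · exact hj (hG _ _ _ (Fin.castSucc_lt_castSucc_iff.2 h) (Fin.castSucc_lt_last i)
      (hb j i h hij.symm))

def isComplColoringSnocEquiv [DecidableEq C] (G : SimpleGraph (Fin (n + 1))) [DecidableRel G.Adj] :
    {a : Fin (n + 1) → C // G.IsComplColoring a} ≃
      Σ b : {b : Fin n → C // (G.comap Fin.castSucc).IsComplColoring b},
        {c : C // c ∉ G.nonAdjLast.image b.1} where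
  toFun a :=
    have h := (isComplColoring_snoc_iff (b := Fin.init a.1) (c := a.1 (Fin.last n))).1
      (by rw [Fin.snoc_init_self]; exact a.2)
    ⟨⟨Fin.init a.1, h.1⟩, ⟨a.1 (Fin.last n), h.2⟩⟩
  invFun p := ⟨Fin.snoc p.1.1 p.2.1, isComplColoring_snoc_iff.2 ⟨p.1.2, p.2.2⟩⟩
  left_inv a := Subtype.ext (Fin.snoc_init_self a.1)
  right_inv p := Sigma.subtype_ext (Subtype.ext (Fin.init_snoc (α := fun _ => C) p.2.1 p.1.1))
    (Fin.snoc_last (α := fun _ => C) p.2.1 p.1.1)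

lemma card_nonAdjBefore_castSucc (G : SimpleGraph (Fin (n + 1))) [DecidableRel G.Adj] (j : Fin n) :
    #(G.nonAdjBefore j.castSucc) = #((G.comap Fin.castSucc).nonAdjBefore j) := by
  rw [nonAdjBefore, nonAdjBefore, card_filter, card_filter, Fin.sum_univ_castSucc]
  simp [(Fin.le_last _).not_gt]

lemma card_nonAdjBefore_last (G : SimpleGraph (Fin (n + 1))) [DecidableRel G.Adj] :
    #(G.nonAdjBefore (Fin.last n)) = #G.nonAdjLast := by
  rw [nonAdjBefore, nonAdjLast, card_filter, card_filter, Fin.sum_univ_castSucc]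
  simp

theorem card_isComplColoring [Fintype C] (G : SimpleGraph (Fin n))
    [DecidableRel G.Adj] (hG : G.AdjUpwardClosed) :
    Nat.card {a : Fin n → C // G.IsComplColoring a} =
      ∏ j, (Fintype.card C - #(G.nonAdjBefore j)) := by
  induction n with
  | zero => simp [IsComplColoring, Nat.card_eq_fintype_card]
  | succ n ih =>
    classical
    have hG' : (G.comap Fin.castSucc).AdjUpwardClosed := fun i j l hij hjl =>
      hG _ _ _ (Fin.castSucc_lt_castSucc_iff.2 hij) (Fin.castSucc_lt_castSucc_iff.2 hjl)
    have hfibre (b : {b : Fin n → C // (G.comap Fin.castSucc).IsComplColoring b}) :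
        Nat.card {c : C // c ∉ G.nonAdjLast.image b.1} = Fintype.card C - #G.nonAdjLast := by
      rw [Nat.card_eq_fintype_card, Fintype.card_subtype_compl, Fintype.card_coe,
        card_image_of_injOn (injOn_nonAdjLast hG b.2)]
    rw [Nat.card_congr (isComplColoringSnocEquiv G), Nat.card_sigma,
      Fintype.sum_congr _ _ hfibre, sum_const, card_univ, ← Nat.card_eq_fintype_card, ih _ hG',
      smul_eq_mul, Fin.prod_univ_castSucc, card_nonAdjBefore_last]
    simp only [card_nonAdjBefore_castSucc]

lemma prod_card_sub_card_nonAdjBefore (G : SimpleGraph (Fin n)) [DecidableRel G.Adj]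
    (hn : 1 ≤ n) :
    ∏ j, (n + 1 - #(G.nonAdjBefore j)) =
      (n + 1) * ∏ j ∈ univ.filter (fun j : Fin n => 1 ≤ j.val),
        (n - #(G.nonAdjBefore j) + 1) := by
  rw [← prod_filter_not_mul_prod_filter univ (fun j : Fin n => 1 ≤ j.val)]
  congr 1
  · have hzero : univ.filter (fun j : Fin n => ¬1 ≤ j.val) = {⟨0, hn⟩} := by
      ext j
      simp [Fin.ext_iff]
    have hfirst : G.nonAdjBefore ⟨0, hn⟩ = ∅ := by
      ext i
      simp [nonAdjBefore, Fin.lt_def]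
    rw [hzero, prod_singleton, hfirst, card_empty, Nat.sub_zero]
  · refine prod_congr rfl fun j _ => ?_
    have hle : #(G.nonAdjBefore j) ≤ n := (card_le_univ _).trans_eq (Fintype.card_fin n)
    omega

end SimpleGraph

section Cosets

variable {ι A : Type*} [AddGroup A]

lemma QuotientAddGroup.mk_eq_mk_iff_exists_add_const {a b : ι → A} :
    (a : (ι → A) ⧸ (Pi.constAddMonoidHom ι A).range) = b ↔
      ∃ c, b = a + Function.const ι c := by
  rw [QuotientAddGroup.eq, AddMonoidHom.mem_range]
  exact exists_congr fun c => eq_comm.trans neg_add_eq_iff_eq_add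

theorem card_subtype_eq_card_cosets_mul {P : (ι → A) → Prop} (z : ι)
    (hP : ∀ a c, P a → P (a + Function.const ι c)) :
    Nat.card {a // P a} =
      Nat.card {x : (ι → A) ⧸ (Pi.constAddMonoidHom ι A).range //
        ∀ a, QuotientAddGroup.mk a = x → P a} * Nat.card A := by
  have hcoset (a : {a // P a}) : ∀ b, QuotientAddGroup.mk b =
      (QuotientAddGroup.mk a.1 : (ι → A) ⧸ (Pi.constAddMonoidHom ι A).range) → P b := by
    intro b hb
    obtain ⟨c, hc⟩ := QuotientAddGroup.mk_eq_mk_iff_exists_add_const.1 hb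
    simpa [hc, add_assoc] using hP _ (-c) a.2
  rw [← Nat.card_prod]
  refine Nat.card_eq_of_bijective (fun a => (⟨QuotientAddGroup.mk a.1, hcoset a⟩, a.1 z))
    ⟨?_, ?_⟩
  · rintro ⟨a, ha⟩ ⟨b, hb⟩ hab
    simp only [Prod.mk.injEq, Subtype.mk.injEq] at hab
    obtain ⟨c, rfl⟩ := QuotientAddGroup.mk_eq_mk_iff_exists_add_const.1 hab.1
    have hc : c = 0 := by simpa using hab.2
    simp [hc]
  · rintro ⟨⟨x, hx⟩, t⟩
    obtain ⟨a, rfl⟩ := QuotientAddGroup.mk_surjective x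
    refine ⟨⟨a + Function.const ι (-a z + t), hx _ ?_⟩, ?_⟩
    · exact (QuotientAddGroup.mk_eq_mk_iff_exists_add_const.2 ⟨_, rfl⟩).symm
    · simp only [Prod.mk.injEq, Subtype.mk.injEq, QuotientAddGroup.mk_eq_mk_iff_exists_add_const]
      exact ⟨⟨-(-a z + t), by ext; simp [add_assoc]⟩, by simp⟩

end Cosets

lemma ZMod.zmultiples_const_one (ι : Type*) (m : ℕ) :
    AddSubgroup.zmultiples (fun _ => 1 : ι → ZMod m) =
      (Pi.constAddMonoidHom ι (ZMod m)).range := by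
  ext v
  rw [AddSubgroup.mem_zmultiples_iff, AddMonoidHom.mem_range]
  constructor
  · rintro ⟨k, rfl⟩
    exact ⟨k, by ext; simp⟩
  · rintro ⟨c, rfl⟩
    obtain ⟨k, rfl⟩ := ZMod.intCast_surjective c
    exact ⟨k, by ext; simp⟩

/-- Theorem 3.2: if G is a graph on [n] with the property that i < j < k and ij ∈ G
imply ik ∈ G, then the number of cosets (a₁,…,aₙ) + H in (ℤ/(n+1))ⁿ/H (H generated by
the all-ones vector) such that aᵢ = aⱼ with i < j implies ij ∈ G, equals
∏_{1 < j ≤ n} (n - dⱼ + 1), where dⱼ = #{i < j : ij ∉ G}. -/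
theorem card_cosets_graph (n : ℕ) (hn : 1 ≤ n) (G : SimpleGraph (Fin n))
    [DecidableRel G.Adj]
    (hG : ∀ i j l : Fin n, i < j → j < l → G.Adj i j → G.Adj i l) :
    Nat.card {c : (Fin n → ZMod (n + 1)) ⧸
        AddSubgroup.zmultiples (fun _ => 1 : Fin n → ZMod (n + 1)) //
      ∀ a : Fin n → ZMod (n + 1), QuotientAddGroup.mk a = c →
        ∀ i j : Fin n, i < j → a i = a j → G.Adj i j} =
    ∏ j ∈ Finset.univ.filter (fun j : Fin n => 1 ≤ j.val),
      (n - (Finset.univ.filter (fun i : Fin n => i < j ∧ ¬ G.Adj i j)).card + 1) := by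
  have hcolorings := G.card_isComplColoring (C := ZMod (n + 1)) hG
  rw [ZMod.card, G.prod_card_sub_card_nonAdjBefore hn,
    card_subtype_eq_card_cosets_mul ⟨0, hn⟩ fun a c => (G.isComplColoring_add_const c).2,
    Nat.card_zmod, mul_comm] at hcolorings
  rw [ZMod.zmultiples_const_one]
  exact Nat.eq_of_mul_eq_mul_left n.succ_pos hcolorings
end

section
/- Let G be the path graph on [n] with edges {12, 23, ..., (n-1)n}. The number of cosets (a_1,...,a_n) + H in (Z/(n+1))^n / H (H generated by (1,...,1)) such that for each i, if j is the smallest index with i < j and a_i = a_j then j = i+1, equals the sum over k = 1 to n of (n!/k!) * C(n-1, k-1). -/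
open Finset

namespace PathCosets

variable {m : ℕ}

abbrev M (m : ℕ) := ZMod (m + 2)

def P (a : Fin (m+1) → M m) : Prop :=
  ∀ i j : Fin (m+1), i < j → a i = a j →
    (∀ l, i < l → l < j → a i ≠ a l) → j.val = i.val + 1

lemma P_step {a : Fin (m+1) → M m} (hP : P a) {i j : Fin (m+1)} (hij : i < j)
    (hv : a i = a j) (h1 : i.val + 1 < m + 1) : a ⟨i.val + 1, h1⟩ = a i := by
  classical
  let T : Finset (Fin (m+1)) := univ.filter (fun l => i < l ∧ a l = a i)
  have hmemT : ∀ l : Fin (m+1), l ∈ T ↔ (i < l ∧ a l = a i) := by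
    intro l; simp [T]
  have hne : T.Nonempty := ⟨j, (hmemT j).mpr ⟨hij, hv.symm⟩⟩
  have hj0 : i < T.min' hne ∧ a (T.min' hne) = a i := (hmemT _).mp (T.min'_mem hne)
  set j0 := T.min' hne with hj0def
  have hval : j0.val = i.val + 1 := by
    refine hP i j0 hj0.1 hj0.2.symm ?_
    intro l hl1 hl2 hla
    have hmem : l ∈ T := (hmemT l).mpr ⟨hl1, hla.symm⟩
    exact absurd (T.min'_le l hmem) (not_le.mpr hl2)
  have : (⟨i.val + 1, h1⟩ : Fin (m+1)) = j0 := by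
    exact (Fin.ext hval).symm
  rw [this]; exact hj0.2

def gB (B : Finset (Fin m)) (t : ℕ) : ℕ := (B.filter (fun b => b.val < t)).card

lemma gB_le (B : Finset (Fin m)) (t : ℕ) : gB B t ≤ B.card :=
  card_le_card (filter_subset _ _)

lemma gB_zero (B : Finset (Fin m)) : gB B 0 = 0 := by simp [gB]

lemma gB_mono (B : Finset (Fin m)) {t t' : ℕ} (h : t ≤ t') : gB B t ≤ gB B t' := by
  apply card_le_card
  apply monotone_filter_right
  intro b hb; omega

lemma gB_of_le (B : Finset (Fin m)) {t : ℕ} (h : m ≤ t) : gB B t = B.card := by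
  unfold gB
  rw [filter_true_of_mem]; intro b _; exact lt_of_lt_of_le b.isLt h

lemma gB_succ (B : Finset (Fin m)) {t : ℕ} (ht : t < m) :
    gB B (t+1) = gB B t + (if (⟨t, ht⟩ : Fin m) ∈ B then 1 else 0) := by
  classical
  unfold gB
  have : (B.filter (fun b : Fin m => b.val < t + 1)) =
      (B.filter (fun b : Fin m => b.val < t)) ∪ (B.filter (fun b : Fin m => b = ⟨t, ht⟩)) := by
    rw [← filter_or]
    apply filter_congr
    intro b _
    constructor
    · intro h
      rcases Nat.lt_succ_iff_lt_or_eq.mp h with h | h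
      · exact Or.inl h
      · exact Or.inr (Fin.ext h)
    · rintro (h | rfl)
      · omega
      · simp
  rw [this, card_union_of_disjoint]
  · congr 1
    by_cases hb : (⟨t, ht⟩ : Fin m) ∈ B
    · rw [if_pos hb]
      rw [filter_eq']
      simp [hb]
    · rw [if_neg hb, filter_eq']
      simp [hb]
  · rw [disjoint_left]
    intro b hb1 hb2
    simp only [mem_filter] at hb1 hb2
    rw [hb2.2] at hb1
    simp at hb1

lemma gB_succ_le (B : Finset (Fin m)) (t : ℕ) : gB B (t+1) ≤ gB B t + 1 := by
  by_cases ht : t < m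
  · rw [gB_succ B ht]; split <;> omega
  · rw [gB_of_le B (by omega), gB_of_le B (by omega : m ≤ t)]; omega

lemma gB_surj (B : Finset (Fin m)) {k : ℕ} (hk : k ≤ B.card) :
    ∃ t ≤ m, gB B t = k := by
  have key : ∀ t, ∀ k ≤ gB B t, ∃ t' ≤ t, gB B t' = k := by
    intro t
    induction t with
    | zero => intro k hk; rw [gB_zero] at hk; exact ⟨0, le_refl _, by rw [gB_zero]; omega⟩
    | succ t ih =>
      intro k hk
      by_cases h : k ≤ gB B t
      · obtain ⟨t', ht', h'⟩ := ih k h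
        exact ⟨t', by omega, h'⟩
      · have := gB_succ_le B t
        have : k = gB B (t+1) := by omega
        exact ⟨t+1, le_refl _, this.symm⟩
  obtain ⟨t, ht, h⟩ := key m k (by rw [gB_of_le B (le_refl m)]; exact hk)
  exact ⟨t, ht, h⟩


def breaks (a : Fin (m+1) → M m) : Finset (Fin m) :=
  univ.filter (fun e => a e.castSucc ≠ a e.succ)

lemma mem_breaks {a : Fin (m+1) → M m} {e : Fin m} :
    e ∈ breaks a ↔ a e.castSucc ≠ a e.succ := by
  classical
  simp [breaks]

lemma a_eq_of_g_eq (a : Fin (m+1) → M m) :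
    ∀ d : ℕ, ∀ i j : Fin (m+1), j.val = i.val + d →
      gB (breaks a) i.val = gB (breaks a) j.val → a i = a j := by
  intro d
  induction d with
  | zero => intro i j h _; have : i = j := Fin.ext (by omega); rw [this]
  | succ d ih =>
    intro i j h hg
    have him : i.val < m := by have := j.isLt; omega
    have h1 : i.val + 1 < m + 1 := by omega
    set i1 : Fin (m+1) := ⟨i.val + 1, h1⟩ with hi1
    have hi1v : i1.val = i.val + 1 := rfl
    have hle1 : gB (breaks a) i.val ≤ gB (breaks a) i1.val := gB_mono _ (by omega)
    have hle2 : gB (breaks a) i1.val ≤ gB (breaks a) j.val := gB_mono _ (by omega)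
    have heq1 : gB (breaks a) i1.val = gB (breaks a) i.val := by omega
    have hnb : (⟨i.val, him⟩ : Fin m) ∉ breaks a := by
      intro hb
      have := gB_succ (breaks a) him
      rw [if_pos hb] at this
      have : gB (breaks a) i1.val = gB (breaks a) i.val + 1 := this
      omega
    have hstep : a i = a i1 := by
      rw [mem_breaks, not_not] at hnb
      have e1 : (⟨i.val, him⟩ : Fin m).castSucc = i := Fin.ext rfl
      have e2 : (⟨i.val, him⟩ : Fin m).succ = i1 := Fin.ext rfl
      rw [e1, e2] at hnb
      exact hnb
    rw [hstep]
    exact ih i1 j (by omega) (by omega)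

lemma g_eq_of_a_eq {a : Fin (m+1) → M m} (hP : P a) :
    ∀ d : ℕ, ∀ i j : Fin (m+1), j.val = i.val + d → a i = a j →
      gB (breaks a) i.val = gB (breaks a) j.val := by
  intro d
  induction d with
  | zero => intro i j h _; rw [show i = j from Fin.ext (by omega)]
  | succ d ih =>
    intro i j h hv
    have him : i.val < m := by have := j.isLt; omega
    have h1 : i.val + 1 < m + 1 := by omega
    set i1 : Fin (m+1) := ⟨i.val + 1, h1⟩ with hi1
    have hi1v : i1.val = i.val + 1 := rfl
    have hij : i < j := by rw [Fin.lt_def]; omega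
    have hstep : a i1 = a i := P_step hP hij hv h1
    have hnb : (⟨i.val, him⟩ : Fin m) ∉ breaks a := by
      rw [mem_breaks, not_not]
      have e1 : (⟨i.val, him⟩ : Fin m).castSucc = i := Fin.ext rfl
      have e2 : (⟨i.val, him⟩ : Fin m).succ = i1 := Fin.ext rfl
      rw [e1, e2]
      exact hstep.symm
    have hg1 : gB (breaks a) i1.val = gB (breaks a) i.val := by
      have := gB_succ (breaks a) him
      rw [if_neg hnb] at this
      simpa using this
    rw [← hg1]
    exact ih i1 j (by omega) (by rw [hstep]; exact hv)

lemma g_eq_iff_a_eq {a : Fin (m+1) → M m} (hP : P a) (i j : Fin (m+1)) :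
    gB (breaks a) i.val = gB (breaks a) j.val ↔ a i = a j := by
  rcases le_total i.val j.val with h | h
  · constructor
    · exact a_eq_of_g_eq a (j.val - i.val) i j (by omega)
    · exact g_eq_of_a_eq hP (j.val - i.val) i j (by omega)
  · constructor
    · intro hg; exact (a_eq_of_g_eq a (i.val - j.val) j i (by omega) hg.symm).symm
    · intro hv; exact (g_eq_of_a_eq hP (i.val - j.val) j i (by omega) hv.symm).symm


def decode (B : Finset (Fin m)) (f : Fin (B.card + 1) ↪ M m) : Fin (m+1) → M m :=
  fun i => f ⟨gB B i.val, Nat.lt_succ_of_le (gB_le B i.val)⟩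

lemma decode_breaks (B : Finset (Fin m)) (f : Fin (B.card + 1) ↪ M m) :
    breaks (decode B f) = B := by
  ext e
  rw [mem_breaks]
  have hcv : (e.castSucc : Fin (m+1)).val = e.val := rfl
  have hsv : (e.succ : Fin (m+1)).val = e.val + 1 := rfl
  have hgs := gB_succ B e.isLt
  rw [Fin.eta] at hgs
  constructor
  · intro h
    by_contra hb
    rw [if_neg hb] at hgs
    apply h
    unfold decode
    congr 1
    apply Fin.ext
    show gB B (e.castSucc).val = gB B (e.succ).val
    rw [hcv, hsv, hgs]
    omega
  · intro hb
    rw [if_pos hb] at hgs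
    intro h
    have := f.injective h
    rw [Fin.ext_iff] at this
    simp only [hcv, hsv, hgs] at this
    omega

lemma decode_P (B : Finset (Fin m)) (f : Fin (B.card + 1) ↪ M m) :
    P (decode B f) := by
  intro i j hij hv hmid
  have hijv : i.val < j.val := hij
  by_contra hne
  have hlt : i.val + 1 < j.val := by omega
  have h1 : i.val + 1 < m + 1 := by have := j.isLt; omega
  set l : Fin (m+1) := ⟨i.val + 1, h1⟩ with hl
  have hlv : l.val = i.val + 1 := rfl
  have hgij : gB B i.val = gB B j.val := by
    have := f.injective hv
    rw [Fin.ext_iff] at this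
    exact this
  have hg1 : gB B i.val ≤ gB B l.val := gB_mono B (by omega)
  have hg2 : gB B l.val ≤ gB B j.val := gB_mono B (by omega)
  have hgeq : gB B l.val = gB B i.val := by omega
  have : decode B f i = decode B f l := by
    unfold decode
    congr 1
    exact Fin.ext hgeq.symm
  exact hmid l (by rw [Fin.lt_def]; omega) (by rw [Fin.lt_def]; exact hlt) this

lemma fiber_card (B : Finset (Fin m)) [DecidablePred (fun a : Fin (m+1) → M m => P a ∧ breaks a = B)] :
    (univ.filter (fun a : Fin (m+1) → M m => P a ∧ breaks a = B)).card =
      Fintype.card (Fin (B.card + 1) ↪ M m) := by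
  classical
  rw [← Finset.card_univ]
  symm
  apply Finset.card_bij (fun f _ => decode B f)
  · intro f _
    rw [mem_filter]
    exact ⟨mem_univ _, decode_P B f, decode_breaks B f⟩
  · intro f _ f' _ h
    apply DFunLike.ext
    intro k
    obtain ⟨t, ht, hgt⟩ := gB_surj B (Nat.lt_succ_iff.mp k.isLt)
    have hti : t < m + 1 := by omega
    have := congrFun h ⟨t, hti⟩
    unfold decode at this
    have hidx : (⟨gB B t, Nat.lt_succ_of_le (gB_le B t)⟩ : Fin (B.card + 1)) = k :=
      Fin.ext hgt
    rw [hidx] at this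
    exact this
  · intro a ha
    rw [mem_filter] at ha
    obtain ⟨-, hPa, hBa⟩ := ha
    subst hBa
    have hsec : ∀ k : Fin ((breaks a).card + 1), ∃ i : Fin (m+1),
        gB (breaks a) i.val = k.val := by
      intro k
      obtain ⟨t, ht, hgt⟩ := gB_surj (breaks a) (Nat.lt_succ_iff.mp k.isLt)
      exact ⟨⟨t, by omega⟩, hgt⟩
    choose sec hsec using hsec
    have hinj : Function.Injective (fun k => a (sec k)) := by
      intro k k' h
      have := (g_eq_iff_a_eq hPa (sec k) (sec k')).mpr h
      rw [hsec k, hsec k'] at this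
      exact Fin.ext this
    refine ⟨⟨fun k => a (sec k), hinj⟩, mem_univ _, ?_⟩
    funext i
    unfold decode
    simp only [Function.Embedding.coeFn_mk]
    apply (g_eq_iff_a_eq hPa _ i).mp
    rw [hsec]


lemma total_card [DecidablePred (P (m := m))] :
    (univ.filter (P (m := m))).card =
      ∑ j ∈ range (m+1), (Nat.choose m j) * (m+2).descFactorial (j+1) := by
  classical
  rw [Finset.card_eq_sum_card_fiberwise (f := breaks) (t := univ) (fun a _ => mem_univ _)]
  have step1 : ∀ B : Finset (Fin m),
      ((univ.filter (P (m := m))).filter (fun a => breaks a = B)).card =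
        (m+2).descFactorial (B.card + 1) := by
    intro B
    rw [filter_filter]
    rw [fiber_card B]
    rw [Fintype.card_embedding_eq]
    simp [ZMod.card]
  calc ∑ B ∈ (univ : Finset (Finset (Fin m))),
        ((univ.filter (P (m := m))).filter (fun a => breaks a = B)).card
      = ∑ B ∈ (univ : Finset (Finset (Fin m))), (m+2).descFactorial (B.card + 1) := by
        exact Finset.sum_congr rfl (fun B _ => step1 B)
    _ = ∑ j ∈ range (m+1), ∑ B ∈ (univ : Finset (Finset (Fin m))).filter
          (fun B => B.card = j), (m+2).descFactorial (B.card + 1) := by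
        rw [Finset.sum_fiberwise_of_maps_to]
        intro B _
        rw [mem_range]
        have := B.card_le_univ
        simp only [card_univ, Fintype.card_fin] at this
        omega
    _ = ∑ j ∈ range (m+1), (Nat.choose m j) * (m+2).descFactorial (j + 1) := by
        refine Finset.sum_congr rfl (fun j _ => ?_)
        rw [Finset.sum_congr rfl (fun B hB => by
          rw [(mem_filter.mp hB).2]), Finset.sum_const, smul_eq_mul]
        congr 1
        have : (univ : Finset (Finset (Fin m))).filter (fun B => B.card = j) =
            (univ : Finset (Fin m)).powersetCard j := by
          rw [← Finset.powerset_univ, Finset.powersetCard_eq_filter]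
        rw [this, Finset.card_powersetCard]
        simp


abbrev ones : Fin (m+1) → M m := fun _ => 1

abbrev Qt (m : ℕ) := (Fin (m+1) → M m) ⧸ AddSubgroup.zmultiples (ones (m := m))

def Q (c : Qt m) : Prop := ∀ a : Fin (m+1) → M m, QuotientAddGroup.mk a = c → P a

lemma P_shift_mp {a : Fin (m+1) → M m} (z : M m) (h : P a) :
    P (fun i => a i + z) := by
  intro i j hij hv hmid
  apply h i j hij (by simpa using hv)
  intro l h1 h2 hval
  exact hmid l h1 h2 (by simpa using congrArg (· + z) hval)

lemma mk_eq_iff {a b : Fin (m+1) → M m} :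
    (QuotientAddGroup.mk a : Qt m) = QuotientAddGroup.mk b ↔
      ∃ z : M m, b = fun i => a i + z := by
  rw [QuotientAddGroup.eq, AddSubgroup.mem_zmultiples_iff]
  constructor
  · rintro ⟨k, hk⟩
    refine ⟨(k : M m), ?_⟩
    funext i
    have h2 : k • ones i = -a i + b i := congrFun hk i
    have h1 : k • ones i = (k : M m) := zsmul_one k
    rw [h1] at h2
    rw [h2, add_neg_cancel_left]
  · rintro ⟨z, rfl⟩
    refine ⟨(z.val : ℤ), ?_⟩
    funext i
    have h1 : ((z.val : ℤ) • ones i : M m) = ((z.val : ℤ) : M m) := zsmul_one _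
    have h2 : (((z.val : ℤ)) : M m) = z := by
      push_cast
      simp [ZMod.natCast_val, ZMod.cast_id]
    show ((z.val : ℤ) • ones) i = (-a + fun i => a i + z) i
    simp only [Pi.smul_apply] at h1 ⊢
    rw [h1, h2]
    simp

lemma Q_mk_iff {a : Fin (m+1) → M m} : Q (QuotientAddGroup.mk a : Qt m) ↔ P a := by
  constructor
  · intro h; exact h a rfl
  · intro h b hb
    obtain ⟨z, rfl⟩ := mk_eq_iff.mp hb.symm
    exact P_shift_mp z h

lemma mk_out_shift (c : Qt m) :
    (QuotientAddGroup.mk (fun i => (Quotient.out c) i + (v - (Quotient.out c) 0)) : Qt m)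
      = c := by
  have h : (QuotientAddGroup.mk (Quotient.out c) : Qt m) = c := Quotient.out_eq c
  conv_rhs => rw [← h]
  exact (mk_eq_iff.mpr ⟨_, rfl⟩).symm

noncomputable def E : {a : Fin (m+1) → M m // P a} ≃ {c : Qt m // Q c} × M m where
  toFun a := (⟨QuotientAddGroup.mk a.1, Q_mk_iff.mpr a.2⟩, a.1 0)
  invFun p := ⟨fun i => (Quotient.out p.1.1) i + (p.2 - (Quotient.out p.1.1) 0),
    p.1.2 _ (mk_out_shift p.1.1)⟩
  left_inv := by
    rintro ⟨a, ha⟩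
    have h : (QuotientAddGroup.mk (Quotient.out (QuotientAddGroup.mk a : Qt m)) : Qt m)
        = QuotientAddGroup.mk a := Quotient.out_eq _
    obtain ⟨z, hz⟩ := mk_eq_iff.mp h
    apply Subtype.ext
    funext i
    simp only
    rw [congrFun hz i, congrFun hz 0]
    simp
  right_inv := by
    rintro ⟨⟨c, hc⟩, v⟩
    apply Prod.ext
    · apply Subtype.ext
      exact mk_out_shift c
    · simp


lemma card_Q :
    Nat.card {c : Qt m // Q c} * (m + 2) =
      ∑ j ∈ range (m+1), (Nat.choose m j) * (m+2).descFactorial (j+1) := by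
  classical
  have h1 : Nat.card {a : Fin (m+1) → M m // P a} =
      Nat.card ({c : Qt m // Q c} × M m) := Nat.card_congr E
  rw [Nat.card_prod] at h1
  have h2 : Nat.card (M m) = m + 2 := by
    rw [Nat.card_eq_fintype_card, ZMod.card]
  have h3 : Nat.card {a : Fin (m+1) → M m // P a} = (univ.filter (P (m := m))).card := by
    rw [Nat.card_eq_fintype_card, Fintype.card_subtype]
  rw [h2, h3, total_card] at h1
  exact h1.symm

lemma arith (m : ℕ) :
    (∑ k ∈ Finset.Icc 1 (m+1), (Nat.factorial (m+1) / Nat.factorial k) *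
        Nat.choose m (k-1)) * (m+2) =
      ∑ j ∈ range (m+1), (Nat.choose m j) * (m+2).descFactorial (j+1) := by
  have hstep : ∀ j ∈ range (m+1),
      (Nat.choose m j) * (m+2).descFactorial (j+1) =
        ((Nat.choose m j) * (m+1).descFactorial j) * (m+2) := by
    intro j _
    rw [Nat.succ_descFactorial_succ]
    ring
  rw [Finset.sum_congr rfl hstep, ← Finset.sum_mul]
  congr 1
  refine Finset.sum_nbij' (i := fun k => m + 1 - k) (j := fun j => m + 1 - j)
    ?_ ?_ ?_ ?_ ?_
  · intro k hk
    rw [Finset.mem_Icc] at hk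
    rw [Finset.mem_range]
    omega
  · intro j hj
    rw [Finset.mem_range] at hj
    rw [Finset.mem_Icc]
    omega
  · intro k hk
    rw [Finset.mem_Icc] at hk
    omega
  · intro j hj
    rw [Finset.mem_range] at hj
    omega
  · intro k hk
    rw [Finset.mem_Icc] at hk
    have hd : (m+1).descFactorial (m+1-k) = Nat.factorial (m+1) / Nat.factorial k := by
      rw [Nat.descFactorial_eq_div (by omega : m + 1 - k ≤ m + 1),
        show m + 1 - (m + 1 - k) = k by omega]
    have hc : Nat.choose m (m+1-k) = Nat.choose m (k-1) := by
      rw [show m + 1 - k = m - (k-1) by omega]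
      exact Nat.choose_symm (by omega)
    rw [hd, hc]
    ring

lemma final (m : ℕ) :
    Nat.card {c : Qt m // Q c} =
      ∑ k ∈ Finset.Icc 1 (m+1), (Nat.factorial (m+1) / Nat.factorial k) *
        Nat.choose m (k-1) := by
  have := card_Q (m := m)
  rw [← arith m] at this
  exact Nat.eq_of_mul_eq_mul_right (by omega) this

end PathCosets

/-- For the path graph G = {12, 23, …, (n-1)n}, the number of cosets (a₁,…,aₙ) + H
in (ℤ/(n+1))ⁿ/H (H generated by the all-ones vector) such that for each i, if j is the
smallest index with i < j and aᵢ = aⱼ then j = i + 1, equals ∑_{k=1}^n (n!/k!)·C(n-1,k-1). -/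
theorem card_cosets_path (n : ℕ) (hn : 1 ≤ n) :
    Nat.card {c : (Fin n → ZMod (n + 1)) ⧸
        AddSubgroup.zmultiples (fun _ => 1 : Fin n → ZMod (n + 1)) //
      ∀ a : Fin n → ZMod (n + 1), QuotientAddGroup.mk a = c →
        ∀ i j : Fin n, i < j → a i = a j →
          (∀ l : Fin n, i < l → l < j → a i ≠ a l) → j.val = i.val + 1} =
    ∑ k ∈ Finset.Icc 1 n, (Nat.factorial n / Nat.factorial k) *
      Nat.choose (n - 1) (k - 1) := by
  obtain ⟨m, rfl⟩ : ∃ m, n = m + 1 := ⟨n - 1, by omega⟩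
  have h := PathCosets.final m
  simp only [Nat.add_sub_cancel]
  exact h
end

section
/- For integers m ≥ 0 and 2 ≤ k ≤ n+1, the arrangement in R^n consisting of the hyperplanes x_1 - x_j = 0, 1, ..., m for 2 ≤ j < k; x_1 - x_j = 0, 1, ..., m+1 for k ≤ j ≤ n; and x_i - x_j = 0, 1 for 2 ≤ i < j ≤ n, has exactly (n+m)^(k-2) (n+m+1)^(n-k+1) regions. -/
open Set Function

namespace InterpArr

abbrev E (n : ℕ) := Fin n → ℝ

abbrev Hyp (n : ℕ) := Fin n × Fin n × ℝ

/-- evaluation of the affine functional `x i - x j - c`. -/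
def heval {n : ℕ} (f : Hyp n) (x : E n) : ℝ := x f.1 - x f.2.1 - f.2.2

def hneg {n : ℕ} (f : Hyp n) : Hyp n := (f.2.1, f.1, -f.2.2)

lemma heval_hneg {n} (f : Hyp n) (x : E n) : heval (hneg f) x = - heval f x := by
  simp [heval, hneg]; ring

lemma hneg_hneg {n} (f : Hyp n) : hneg (hneg f) = f := by simp [hneg]

def Vanish {n} (f : Hyp n) : Prop := ∃ x, heval f x = 0

lemma vanish_hneg_iff {n} (f : Hyp n) : Vanish (hneg f) ↔ Vanish f := by
  constructor <;> rintro ⟨x, hx⟩ <;> exact ⟨x, by simp [heval_hneg] at hx ⊢; simp [hx]⟩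

lemma heval_of_not_vanish {n} {f : Hyp n} (hf : ¬ Vanish f) (x : E n) :
    heval f x = - f.2.2 := by
  by_cases h : f.1 = f.2.1
  · simp [heval, h]
  · exfalso; apply hf
    refine ⟨fun j => if j = f.1 then f.2.2 else 0, ?_⟩
    simp [heval, h, Ne.symm h]

lemma continuous_heval {n} (f : Hyp n) : Continuous (heval f) :=
  (((continuous_apply f.1).sub (continuous_apply f.2.1)).sub continuous_const)

lemma heval_combo {n} (f : Hyp n) (x y : E n) (a b : ℝ) (hab : a + b = 1) :
    heval f (a • x + b • y) = a * heval f x + b * heval f y := by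
  simp only [heval, Pi.add_apply, Pi.smul_apply, smul_eq_mul]
  linear_combination f.2.2 * hab

def UA {n} (A : Set (Hyp n)) : Set (E n) := {x | ∀ f ∈ A, heval f x ≠ 0}

noncomputable def Sgn {n} (A : Set (Hyp n)) (x : E n) : Hyp n → Bool :=
  fun f => @decide (f ∈ A ∧ 0 < heval f x) (Classical.propDecidable _)

lemma Sgn_iff {n} {A : Set (Hyp n)} {x : E n} {f : Hyp n} :
    Sgn A x f = true ↔ (f ∈ A ∧ 0 < heval f x) := by
  simp [Sgn]

lemma Sgn_eq_iff {n} {A : Set (Hyp n)} {x y : E n} {f : Hyp n} :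
    Sgn A x f = Sgn A y f ↔ ((f ∈ A ∧ 0 < heval f x) ↔ (f ∈ A ∧ 0 < heval f y)) := by
  simp [Sgn, decide_eq_decide]

lemma Sgn_eq_iff' {n} {A B : Set (Hyp n)} {x y : E n} {f g : Hyp n} :
    Sgn A x f = Sgn B y g ↔ ((f ∈ A ∧ 0 < heval f x) ↔ (g ∈ B ∧ 0 < heval g y)) := by
  simp [Sgn, decide_eq_decide]

noncomputable def NN {n} (A : Set (Hyp n)) : ℕ := (Sgn A '' UA A).ncard

noncomputable def NH {n} (h : Hyp n) (A : Set (Hyp n)) : ℕ :=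
  (Sgn A '' (UA A ∩ {x | heval h x = 0})).ncard

/-- the open cell containing `x`. -/
def cellOf {n} (A : Set (Hyp n)) (x : E n) : Set (E n) :=
  {y | ∀ f ∈ A, heval f y ≠ 0 ∧ (0 < heval f y ↔ 0 < heval f x)}

lemma cell_subset_UA {n} (A : Set (Hyp n)) (x : E n) : cellOf A x ⊆ UA A :=
  fun y hy f hf => (hy f hf).1

lemma mem_cell_self {n} {A : Set (Hyp n)} {x : E n} (hx : x ∈ UA A) : x ∈ cellOf A x :=
  fun f hf => ⟨hx f hf, Iff.rfl⟩

lemma sgn_eq_of_mem_cell {n} {A : Set (Hyp n)} {x y : E n} (hy : y ∈ cellOf A x) :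
    Sgn A y = Sgn A x := by
  funext f
  rw [Sgn_eq_iff]
  by_cases hf : f ∈ A
  · simp [hf, (hy f hf).2]
  · simp [hf]

lemma mem_cell_of_sgn_eq {n} {A : Set (Hyp n)} {x y : E n} (hy : y ∈ UA A)
    (h : Sgn A y = Sgn A x) : y ∈ cellOf A x := by
  intro f hf
  refine ⟨hy f hf, ?_⟩
  have := Sgn_eq_iff.mp (congrFun h f)
  constructor
  · intro h1; exact (this.mp ⟨hf, h1⟩).2
  · intro h1; exact (this.mpr ⟨hf, h1⟩).2

lemma convex_cell {n} (A : Set (Hyp n)) (x : E n) : Convex ℝ (cellOf A x) := by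
  intro y hy z hz a b ha hb hab
  intro f hf
  obtain ⟨hy1, hy2⟩ := hy f hf
  obtain ⟨hz1, hz2⟩ := hz f hf
  rw [heval_combo f y z a b hab]
  by_cases hp : 0 < heval f x
  · have h1 : 0 < heval f y := hy2.mpr hp
    have h2 : 0 < heval f z := hz2.mpr hp
    have : 0 < a * heval f y + b * heval f z := by
      rcases eq_or_lt_of_le ha with h|h
      · have : b = 1 := by linarith
        simp [← h, this]; exact h2
      · nlinarith
    constructor
    · linarith
    · simp [this, hp]
  · have h1 : heval f y < 0 := by
      rcases lt_trichotomy (heval f y) 0 with h|h|h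
      · exact h
      · exact absurd h hy1
      · exact absurd (hy2.mp h) hp
    have h2 : heval f z < 0 := by
      rcases lt_trichotomy (heval f z) 0 with h|h|h
      · exact h
      · exact absurd h hz1
      · exact absurd (hz2.mp h) hp
    have : a * heval f y + b * heval f z < 0 := by
      rcases eq_or_lt_of_le ha with h|h
      · have : b = 1 := by linarith
        simp [← h, this]; exact h2
      · nlinarith
    constructor
    · linarith
    · constructor
      · intro hc; linarith
      · intro hc; exact absurd hc hp

lemma isOpen_cell {n} {A : Set (Hyp n)} (hA : A.Finite) (x : E n) : IsOpen (cellOf A x) := by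
  have : cellOf A x = ⋂ f ∈ A, {y | heval f y ≠ 0 ∧ (0 < heval f y ↔ 0 < heval f x)} := by
    ext y; simp [cellOf]
  rw [this]
  refine Set.Finite.isOpen_biInter hA (fun f hf => ?_)
  by_cases hp : 0 < heval f x
  · have : {y | heval f y ≠ 0 ∧ (0 < heval f y ↔ 0 < heval f x)} = (heval f) ⁻¹' (Set.Ioi 0) := by
      ext y; simp only [mem_setOf_eq, mem_preimage, mem_Ioi]
      constructor
      · intro ⟨h1, h2⟩; exact h2.mpr hp
      · intro h; exact ⟨ne_of_gt h, by simp [h, hp]⟩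
    rw [this]; exact (continuous_heval f).isOpen_preimage _ isOpen_Ioi
  · have : {y | heval f y ≠ 0 ∧ (0 < heval f y ↔ 0 < heval f x)} = (heval f) ⁻¹' (Set.Iio 0) := by
      ext y; simp only [mem_setOf_eq, mem_preimage, mem_Iio]
      constructor
      · intro ⟨h1, h2⟩
        rcases lt_trichotomy (heval f y) 0 with h|h|h
        · exact h
        · exact absurd h h1
        · exact absurd (h2.mp h) hp
      · intro h; exact ⟨ne_of_lt h, by constructor <;> intro hc <;> [linarith; exact absurd hc hp]⟩
    rw [this]; exact (continuous_heval f).isOpen_preimage _ isOpen_Iio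


section Components

variable {n : ℕ} {A : Set (Hyp n)}

lemma same_component_of_sgn_eq {x y : E n} (hx : x ∈ UA A) (hy : y ∈ UA A)
    (h : Sgn A x = Sgn A y) :
    ConnectedComponents.mk (⟨x, hx⟩ : ↥(UA A)) = ConnectedComponents.mk ⟨y, hy⟩ := by
  have hyc : y ∈ cellOf A x := mem_cell_of_sgn_eq hy h.symm
  have hxc : x ∈ cellOf A x := mem_cell_self hx
  have hconv : Convex ℝ (cellOf A x) := convex_cell A x
  have hpre : IsPreconnected (cellOf A x) := hconv.isPreconnected
  haveI : PreconnectedSpace ↥(cellOf A x) := Subtype.preconnectedSpace hpre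
  set ι : ↥(cellOf A x) → ↥(UA A) := fun z => ⟨z.1, cell_subset_UA A x z.2⟩ with hι
  have hcont : Continuous ι := Continuous.subtype_mk continuous_subtype_val _
  have hrange : IsPreconnected (Set.range ι) := isPreconnected_range hcont
  have hxr : (⟨x, hx⟩ : ↥(UA A)) ∈ Set.range ι := ⟨⟨x, hxc⟩, rfl⟩
  have hyr : (⟨y, hy⟩ : ↥(UA A)) ∈ Set.range ι := ⟨⟨y, hyc⟩, rfl⟩
  have := hrange.subset_connectedComponent hxr hyr
  rw [ConnectedComponents.coe_eq_coe]
  exact connectedComponent_eq this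

lemma sgn_eq_of_same_component {x y : ↥(UA A)}
    (h : ConnectedComponents.mk x = ConnectedComponents.mk y) :
    Sgn A x.1 = Sgn A y.1 := by
  rw [ConnectedComponents.coe_eq_coe] at h
  have hy : y ∈ connectedComponent x := by rw [h]; exact mem_connectedComponent
  funext f
  rw [Sgn_eq_iff]
  by_cases hf : f ∈ A
  · have key : ∀ a b : ↥(UA A), b ∈ connectedComponent a →
        heval f a.1 < 0 → heval f b.1 < 0 := by
      intro a b hb ha
      by_contra hc
      push_neg at hc
      have hb0 : heval f b.1 ≠ 0 := b.2 f hf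
      have hbpos : 0 < heval f b.1 := lt_of_le_of_ne hc (Ne.symm hb0)
      have hpre := isPreconnected_connectedComponent (x := a)
      have hcont : ContinuousOn (fun z : ↥(UA A) => heval f z.1) (connectedComponent a) :=
        ((continuous_heval f).comp continuous_subtype_val).continuousOn
      have := hpre.intermediate_value (mem_connectedComponent) hb hcont
      have h0 : (0:ℝ) ∈ Set.Icc (heval f a.1) (heval f b.1) := ⟨le_of_lt ha, le_of_lt hbpos⟩
      obtain ⟨z, hz, hz0⟩ := this h0
      exact (z.2 f hf) hz0
    have hx0 : heval f x.1 ≠ 0 := x.2 f hf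
    have hy0 : heval f y.1 ≠ 0 := y.2 f hf
    have hy' : x ∈ connectedComponent y := by
      rw [← h]; exact mem_connectedComponent
    constructor
    · rintro ⟨-, hp⟩
      refine ⟨hf, ?_⟩
      by_contra hc
      push_neg at hc
      have : heval f y.1 < 0 := lt_of_le_of_ne hc hy0
      have := key y x hy' this
      linarith
    · rintro ⟨-, hp⟩
      refine ⟨hf, ?_⟩
      by_contra hc
      push_neg at hc
      have : heval f x.1 < 0 := lt_of_le_of_ne hc hx0
      have := key x y hy this
      linarith
  · simp [hf]

lemma card_components (A : Set (Hyp n)) :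
    Nat.card (ConnectedComponents ↥(UA A)) = NN A := by
  rw [NN, ← Nat.card_coe_set_eq]
  symm
  set img := Sgn A '' UA A with himg
  have hmk : ∀ v : ↥img, ∃ x : E n, x ∈ UA A ∧ Sgn A x = v.1 := by
    rintro ⟨v, x, hx, rfl⟩; exact ⟨x, hx, rfl⟩
  choose pt hpt hsgn using hmk
  refine Nat.card_eq_of_bijective
    (fun v => ConnectedComponents.mk (⟨pt v, hpt v⟩ : ↥(UA A))) ⟨?_, ?_⟩
  · intro v w hvw
    have := sgn_eq_of_same_component hvw
    apply Subtype.ext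
    rw [← hsgn v, ← hsgn w]
    exact this
  · intro c
    obtain ⟨⟨x, hx⟩, rfl⟩ := ConnectedComponents.surjective_coe c
    refine ⟨⟨Sgn A x, mem_image_of_mem _ hx⟩, ?_⟩
    exact same_component_of_sgn_eq _ _ (by rw [hsgn]) 

end Components

section Transfer

/-- workhorse transfer lemma for counting sign vectors through a map of ambient spaces. -/
lemma ncard_sgn_transfer {n n' : ℕ} (A : Set (Hyp n)) (B : Set (Hyp n'))
    (S : Set (E n)) (S' : Set (E n')) (φ : E n → E n') (hS : φ '' S = S')
    (d1 : ∀ x ∈ S, ∀ y ∈ S, Sgn A x = Sgn A y → Sgn B (φ x) = Sgn B (φ y))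
    (d2 : ∀ x ∈ S, ∀ y ∈ S, Sgn B (φ x) = Sgn B (φ y) → Sgn A x = Sgn A y) :
    (Sgn A '' S).ncard = (Sgn B '' S').ncard := by
  rw [← Nat.card_coe_set_eq, ← Nat.card_coe_set_eq]
  have hmk : ∀ v : ↥(Sgn A '' S), ∃ x : E n, x ∈ S ∧ Sgn A x = v.1 := by
    rintro ⟨v, x, hx, rfl⟩; exact ⟨x, hx, rfl⟩
  choose pt hpt hsgn using hmk
  refine Nat.card_eq_of_bijective
    (fun v => ⟨Sgn B (φ (pt v)), by rw [← hS]; exact mem_image_of_mem _ (mem_image_of_mem _ (hpt v))⟩)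
    ⟨?_, ?_⟩
  · intro v w hvw
    simp only [Subtype.mk.injEq] at hvw
    have := d2 _ (hpt v) _ (hpt w) hvw
    apply Subtype.ext
    rw [← hsgn v, ← hsgn w, this]
  · rintro ⟨u, hu⟩
    rw [← hS] at hu
    obtain ⟨s', ⟨x, hx, rfl⟩, rfl⟩ := hu
    refine ⟨⟨Sgn A x, mem_image_of_mem _ hx⟩, ?_⟩
    apply Subtype.ext
    simp only
    exact d1 _ (hpt _) _ hx (by rw [hsgn])

end Transfer

section Deletion

variable {n : ℕ}

lemma finite_sgn_image {A : Set (Hyp n)} (hA : A.Finite) (S : Set (E n)) :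
    (Sgn A '' S).Finite := by
  haveI := hA.to_subtype
  classical
  have : Sgn A '' S ⊆ Set.range (fun g : ↥A → Bool =>
      fun f => if hf : f ∈ A then g ⟨f, hf⟩ else false) := by
    rintro v ⟨x, hx, rfl⟩
    refine ⟨fun p => @decide (0 < heval p.1 x) (Classical.propDecidable _), ?_⟩
    funext f
    by_cases hf : f ∈ A
    · simp only [hf, dif_pos]
      simp [Sgn, hf]
    · simp only [hf, dif_neg, not_false_iff]
      simp [Sgn, hf]
  exact Set.Finite.subset (Set.finite_range _) this

lemma finite_NN_set {A : Set (Hyp n)} (hA : A.Finite) : (Sgn A '' UA A).Finite :=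
  finite_sgn_image hA _

/-- perturbation along the `h.1` coordinate direction -/
lemma exists_perturb {A : Set (Hyp n)} (hA : A.Finite) {h : Hyp n} (hh : h.1 ≠ h.2.1)
    {x : E n} (hx : x ∈ UA A) :
    ∀ c > (0:ℝ), ∃ ε > (0:ℝ), ε < c ∧ ∀ t : ℝ, |t| ≤ ε →
      (x + t • (fun j => if j = h.1 then (1:ℝ) else 0)) ∈ cellOf A x ∧
      heval h (x + t • (fun j => if j = h.1 then (1:ℝ) else 0)) = heval h x + t := by
  intro c hc
  set δ : E n := fun j => if j = h.1 then (1:ℝ) else 0 with hδ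
  have heval_line : ∀ t : ℝ, heval h (x + t • δ) = heval h x + t := by
    intro t
    have h1 : δ h.1 = 1 := by simp [hδ]
    have h2 : δ h.2.1 = 0 := by simp [hδ, Ne.symm hh]
    simp only [heval, Pi.add_apply, Pi.smul_apply, smul_eq_mul, h1, h2]
    ring
  have hg : Continuous (fun t : ℝ => x + t • δ) :=
    continuous_const.add (continuous_id.smul continuous_const)
  have hopen : IsOpen ((fun t : ℝ => x + t • δ) ⁻¹' cellOf A x) :=
    (isOpen_cell hA x).preimage hg
  have h0 : (0:ℝ) ∈ (fun t : ℝ => x + t • δ) ⁻¹' cellOf A x := by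
    simp only [Set.mem_preimage, zero_smul, add_zero]
    exact mem_cell_self hx
  obtain ⟨ε0, hε0, hball⟩ := Metric.isOpen_iff.mp hopen 0 h0
  refine ⟨min (ε0/2) (c/2), by positivity, by
      have : c/2 < c := by linarith
      exact lt_of_le_of_lt (min_le_right _ _) this, ?_⟩
  intro t ht
  constructor
  · apply hball
    rw [Metric.mem_ball, Real.dist_eq, sub_zero]
    have h1 : |t| ≤ ε0/2 := le_trans ht (min_le_left _ _)
    linarith
  · exact heval_line t

lemma exists_cell_off_h {A : Set (Hyp n)} (hA : A.Finite) {h : Hyp n} (hh : h.1 ≠ h.2.1)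
    {x : E n} (hx : x ∈ UA A) :
    ∃ x', x' ∈ cellOf A x ∧ heval h x' ≠ 0 := by
  obtain ⟨ε, hε, -, hP⟩ := exists_perturb hA hh hx 1 one_pos
  by_cases h0 : heval h x + ε = 0
  · obtain ⟨hc, he⟩ := hP (-ε) (le_of_eq (by rw [abs_neg, abs_of_pos hε]))
    refine ⟨_, hc, ?_⟩
    rw [he]
    intro hcon
    have : heval h x = ε := by linarith
    rw [this] at h0
    linarith
  · obtain ⟨hc, he⟩ := hP ε (le_of_eq (abs_of_pos hε))
    refine ⟨_, hc, ?_⟩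
    rw [he]; exact h0

lemma exists_cell_both_sides {A : Set (Hyp n)} (hA : A.Finite) {h : Hyp n} (hh : h.1 ≠ h.2.1)
    {x : E n} (hx : x ∈ UA A) (hx0 : heval h x = 0) :
    ∃ xp xm, xp ∈ cellOf A x ∧ xm ∈ cellOf A x ∧ 0 < heval h xp ∧ heval h xm < 0 := by
  obtain ⟨ε, hε, -, hP⟩ := exists_perturb hA hh hx 1 one_pos
  obtain ⟨hc1, he1⟩ := hP ε (le_of_eq (abs_of_pos hε))
  obtain ⟨hc2, he2⟩ := hP (-ε) (le_of_eq (by rw [abs_neg, abs_of_pos hε]))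
  exact ⟨_, _, hc1, hc2, by rw [he1, hx0]; linarith, by rw [he2, hx0]; linarith⟩

lemma exists_zero_on_segment {C : Set (E n)} (hC : Convex ℝ C) (h : Hyp n)
    {xp xm : E n} (hp : xp ∈ C) (hm : xm ∈ C) (h1 : 0 < heval h xp) (h2 : heval h xm < 0) :
    ∃ z ∈ C, heval h z = 0 := by
  set g : ℝ → E n := fun t => (1-t) • xm + t • xp with hg
  have hgc : Continuous (fun t => heval h (g t)) := by
    apply (continuous_heval h).comp
    exact ((continuous_const.sub continuous_id).smul continuous_const).add
      (continuous_id.smul continuous_const)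
  have h00 : heval h (g 0) = heval h xm := by simp [hg]
  have h11 : heval h (g 1) = heval h xp := by simp [hg]
  have := intermediate_value_Icc (by norm_num : (0:ℝ) ≤ 1) hgc.continuousOn
  have h0mem : (0:ℝ) ∈ Set.Icc (heval h (g 0)) (heval h (g 1)) := by
    rw [h00, h11]; exact ⟨le_of_lt h2, le_of_lt h1⟩
  obtain ⟨t, ht, ht0⟩ := this h0mem
  refine ⟨g t, ?_, ht0⟩
  exact hC hm hp (by linarith [ht.2] : (0:ℝ) ≤ 1 - t) ht.1 (by ring)

lemma UA_insert {A : Set (Hyp n)} {h : Hyp n} :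
    UA (insert h A) = UA A ∩ {x | heval h x ≠ 0} := by
  ext x
  simp only [UA, Set.mem_setOf_eq, Set.mem_inter_iff, Set.mem_insert_iff]
  constructor
  · intro hx
    exact ⟨fun f hf => hx f (Or.inr hf), hx h (Or.inl rfl)⟩
  · rintro ⟨h1, h2⟩ f (rfl|hf)
    · exact h2
    · exact h1 f hf

lemma sgn_insert_update {A : Set (Hyp n)} {h : Hyp n} (hmem : h ∉ A) (x : E n) :
    Function.update (Sgn (insert h A) x) h false = Sgn A x := by
  funext f
  by_cases hf : f = h
  · subst hf
    rw [Function.update_self]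
    symm
    simp [Sgn, hmem]
  · rw [Function.update_of_ne hf]
    rw [Sgn_eq_iff']
    simp [Set.mem_insert_iff, hf]

lemma sgn_mem_false {A : Set (Hyp n)} {h : Hyp n} (hmem : h ∉ A) (x : E n) :
    Sgn A x h = false := by
  simp [Sgn, hmem]

theorem NN_insert {A : Set (Hyp n)} (hA : A.Finite) {h : Hyp n} (hh : h.1 ≠ h.2.1)
    (hmem : h ∉ A) : NN (insert h A) = NN A + NH h A := by
  classical
  set R := Sgn A '' UA A with hR
  set Rins := Sgn (insert h A) '' UA (insert h A) with hRins
  set Rh := Sgn A '' (UA A ∩ {x | heval h x = 0}) with hRh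
  set T2 : Set (Hyp n → Bool) := {s | s ∈ R ∧ Function.update s h true ∈ Rins ∧
    Function.update s h false ∈ Rins} with hT2
  have hUsub : UA (insert h A) ⊆ UA A := by rw [UA_insert]; exact Set.inter_subset_left
  -- s h = false for s ∈ R
  have hRfalse : ∀ s ∈ R, s h = false := by
    rintro s ⟨x, hx, rfl⟩; exact sgn_mem_false hmem x
  have hRhfalse : ∀ s ∈ Rh, s h = false := by
    rintro s ⟨x, hx, rfl⟩; exact sgn_mem_false hmem x
  -- route 1 : Rh = T2
  have hT2eq : Rh = T2 := by
    ext s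
    constructor
    · rintro ⟨x, ⟨hx, hx0⟩, rfl⟩
      refine ⟨⟨x, hx, rfl⟩, ?_, ?_⟩
      · obtain ⟨xp, xm, hcp, hcm, hp, hm⟩ := exists_cell_both_sides hA hh hx hx0
        refine ⟨xp, by rw [UA_insert]; exact ⟨cell_subset_UA A x hcp, ne_of_gt hp⟩, ?_⟩
        funext f
        by_cases hf : f = h
        · subst hf
          rw [Function.update_self]
          simp [Sgn, hp]
        · rw [Function.update_of_ne hf]
          rw [Sgn_eq_iff']
          have hthis := Sgn_eq_iff.mp (congrFun (sgn_eq_of_mem_cell hcp) f)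
          constructor
          · rintro ⟨hfm, hp⟩
            rcases hfm with rfl|hfm
            · exact absurd rfl hf
            · exact hthis.mp ⟨hfm, hp⟩
          · rintro ⟨hfm, hp⟩
            obtain ⟨h1', h2'⟩ := hthis.mpr ⟨hfm, hp⟩
            exact ⟨Or.inr h1', h2'⟩
      · obtain ⟨xp, xm, hcp, hcm, hp, hm⟩ := exists_cell_both_sides hA hh hx hx0
        refine ⟨xm, by rw [UA_insert]; exact ⟨cell_subset_UA A x hcm, ne_of_lt hm⟩, ?_⟩
        funext f
        by_cases hf : f = h
        · subst hf
          rw [Function.update_self]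
          simp only [Sgn, decide_eq_false_iff_not]
          rintro ⟨-, hcon⟩
          linarith
        · rw [Function.update_of_ne hf]
          rw [Sgn_eq_iff']
          have hthis := Sgn_eq_iff.mp (congrFun (sgn_eq_of_mem_cell hcm) f)
          constructor
          · rintro ⟨hfm, hp⟩
            rcases hfm with rfl|hfm
            · exact absurd rfl hf
            · exact hthis.mp ⟨hfm, hp⟩
          · rintro ⟨hfm, hp⟩
            obtain ⟨h1', h2'⟩ := hthis.mpr ⟨hfm, hp⟩
            exact ⟨Or.inr h1', h2'⟩
    · rintro ⟨⟨x, hx, rfl⟩, ⟨xp, hxp, hep⟩, ⟨xm, hxm, hem⟩⟩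
      -- xp has h-positive, xm h-negative, same A-sign as x
      have hxp' : xp ∈ UA A := hUsub hxp
      have hxm' : xm ∈ UA A := hUsub hxm
      have hsp : Sgn A xp = Sgn A x := by
        rw [← sgn_insert_update hmem xp, hep]
        funext g
        by_cases hg : g = h
        · subst hg; rw [Function.update_self]; exact (sgn_mem_false hmem x).symm
        · rw [Function.update_of_ne hg, Function.update_of_ne hg]
      have hsm : Sgn A xm = Sgn A x := by
        rw [← sgn_insert_update hmem xm, hem]
        funext g
        by_cases hg : g = h
        · subst hg; rw [Function.update_self]; exact (sgn_mem_false hmem x).symm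
        · rw [Function.update_of_ne hg, Function.update_of_ne hg]
      have hppos : 0 < heval h xp := by
        have := congrFun hep h
        rw [Function.update_self] at this
        have := Sgn_iff.mp this
        exact this.2
      have hmneg : heval h xm < 0 := by
        have := congrFun hem h
        rw [Function.update_self] at this
        have h2 : Sgn (insert h A) xm h = false := this
        have h3 : heval h xm ≠ 0 := by
          rw [UA_insert] at hxm; exact hxm.2
        rcases lt_trichotomy (heval h xm) 0 with hlt|heq|hgt
        · exact hlt
        · exact absurd heq h3
        · exfalso
          have : Sgn (insert h A) xm h = true := Sgn_iff.mpr ⟨Set.mem_insert _ _, hgt⟩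
          rw [h2] at this; exact Bool.false_ne_true this
      have hcp : xp ∈ cellOf A x := mem_cell_of_sgn_eq hxp' hsp
      have hcm : xm ∈ cellOf A x := mem_cell_of_sgn_eq hxm' hsm
      obtain ⟨z, hz, hz0⟩ := exists_zero_on_segment (convex_cell A x) h hcp hcm hppos hmneg
      refine ⟨z, ⟨cell_subset_UA A x hz, hz0⟩, ?_⟩
      exact sgn_eq_of_mem_cell hz
  -- counting bijection
  have hfinR : R.Finite := finite_NN_set hA
  have hfinRins : Rins.Finite := finite_sgn_image (hA.insert h) _
  have hfinT2 : T2.Finite := hfinR.subset (fun s hs => hs.1)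
  haveI := hfinR.to_subtype
  haveI := hfinRins.to_subtype
  haveI := hfinT2.to_subtype
  have hmemR : ∀ v ∈ Rins, Function.update v h false ∈ R := by
    rintro v ⟨x, hx, rfl⟩
    rw [sgn_insert_update hmem x]
    exact ⟨x, hUsub hx, rfl⟩
  set ψ : ↥Rins → ↥R ⊕ ↥T2 := fun v =>
    if hcond : (Function.update v.1 h false ∈ T2 ∧ v.1 h = true)
    then Sum.inr ⟨Function.update v.1 h false, hcond.1⟩
    else Sum.inl ⟨Function.update v.1 h false, hmemR v.1 v.2⟩ with hψ
  have hinj : Function.Injective ψ := by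
    rintro ⟨v, hv⟩ ⟨w, hw⟩ hvw
    simp only [hψ] at hvw
    have hkey : Function.update v h false = Function.update w h false → v h = w h → v = w := by
      intro h1 h2
      funext f
      by_cases hf : f = h
      · subst hf; exact h2
      · have := congrFun h1 f
        rwa [Function.update_of_ne hf, Function.update_of_ne hf] at this
    apply Subtype.ext
    by_cases hc1 : (Function.update v h false ∈ T2 ∧ v h = true)
    case pos =>
      by_cases hc2 : (Function.update w h false ∈ T2 ∧ w h = true)
      case pos =>
        rw [dif_pos hc1, dif_pos hc2] at hvw
        simp only [Sum.inr.injEq, Subtype.mk.injEq] at hvw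
        exact hkey hvw (hc1.2.trans hc2.2.symm)
      case neg =>
        rw [dif_pos hc1, dif_neg hc2] at hvw
        exact absurd hvw (by simp)
    case neg =>
    by_cases hc2 : (Function.update w h false ∈ T2 ∧ w h = true)
    case pos =>
      rw [dif_neg hc1, dif_pos hc2] at hvw
      exact absurd hvw (by simp)
    case neg =>
      rw [dif_neg hc1, dif_neg hc2] at hvw
      simp only [Sum.inl.injEq, Subtype.mk.injEq] at hvw
      -- v h and w h must agree, else both extensions realizable giving T2 membership
      by_cases hvh : v h = w h
      · exact hkey hvw hvh
      · exfalso
        -- one is true, other false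
        have hR' : Function.update v h false ∈ R := hmemR v hv
        rcases Bool.eq_false_or_eq_true (v h) with hv1|hv1
        · -- v h = true
          rcases Bool.eq_false_or_eq_true (w h) with hw1|hw1
          · exact hvh (hv1.trans hw1.symm)
          · -- v h true, w h false
            apply hc1
            refine ⟨⟨hmemR v hv, ?_, ?_⟩, hv1⟩
            · have heq1 : Function.update (Function.update v h false) h true = v := by
                funext f
                by_cases hf : f = h
                · subst hf; rw [Function.update_self, hv1]
                · rw [Function.update_of_ne hf, Function.update_of_ne hf]
              rw [heq1]; exact hv
            · have heq2 : Function.update (Function.update v h false) h false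
                  = Function.update w h false := by
                rw [hvw, Function.update_idem]
              rw [heq2]
              have heq3 : Function.update w h false = w := by
                funext f
                by_cases hf : f = h
                · subst hf; rw [Function.update_self, hw1]
                · rw [Function.update_of_ne hf]
              rw [heq3]; exact hw
        · -- v h = false
          rcases Bool.eq_false_or_eq_true (w h) with hw1|hw1
          · -- w h = true
            apply hc2
            refine ⟨⟨hmemR w hw, ?_, ?_⟩, hw1⟩
            · have heq1 : Function.update (Function.update w h false) h true = w := by
                funext f
                by_cases hf : f = h
                · subst hf; rw [Function.update_self, hw1]
                · rw [Function.update_of_ne hf, Function.update_of_ne hf]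
              rw [heq1]; exact hw
            · have heq2 : Function.update (Function.update w h false) h false
                  = Function.update v h false := by
                rw [← hvw, Function.update_idem]
              rw [heq2]
              have heq3 : Function.update v h false = v := by
                funext f
                by_cases hf : f = h
                · subst hf; rw [Function.update_self, hv1]
                · rw [Function.update_of_ne hf]
              rw [heq3]; exact hv
          · exact hvh (hv1.trans hw1.symm)
  have hsurj : Function.Surjective ψ := by
    rintro (⟨s, hs⟩|⟨s, hs⟩)
    · -- inl case
      by_cases hsT2 : s ∈ T2
      · -- use update s h false which is in Rins
        obtain ⟨-, -, hfalse⟩ := hsT2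
        have hsh : s h = false := hRfalse s hs
        have hupd : Function.update s h false = s := by
          funext f
          by_cases hf : f = h
          · subst hf; rw [Function.update_self, hsh]
          · rw [Function.update_of_ne hf]
        refine ⟨⟨Function.update s h false, by rw [hupd]; rw [hupd] at hfalse; exact hfalse⟩, ?_⟩
        have hcond' : ¬(Function.update (Function.update s h false) h false ∈ T2 ∧
            (Function.update s h false) h = true) := by
          rintro ⟨-, hcon⟩
          rw [Function.update_self] at hcon
          exact Bool.false_ne_true hcon
        simp only [hψ]
        rw [dif_neg hcond']
        simp only [Sum.inl.injEq, Subtype.mk.injEq]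
        rw [Function.update_idem, hupd]
      · -- s ∉ T2 : realize some extension
        obtain ⟨x, hx, rfl⟩ := hs
        obtain ⟨x', hx'cell, hx'0⟩ := exists_cell_off_h hA hh hx
        have hx'U : x' ∈ UA (insert h A) := by
          rw [UA_insert]; exact ⟨cell_subset_UA A x hx'cell, hx'0⟩
        have hss : Sgn A x' = Sgn A x := sgn_eq_of_mem_cell hx'cell
        have hupd : Function.update (Sgn (insert h A) x') h false = Sgn A x := by
          rw [sgn_insert_update hmem x', hss]
        refine ⟨⟨Sgn (insert h A) x', ⟨x', hx'U, rfl⟩⟩, ?_⟩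
        simp only [hψ]
        rw [dif_neg]
        · simp only [Sum.inl.injEq, Subtype.mk.injEq]
          exact Subtype.ext hupd
        · rintro ⟨hcon, -⟩
          rw [hupd] at hcon
          exact hsT2 hcon
    · -- inr case : s ∈ T2
      obtain ⟨hsR, htrue, hfalse2⟩ := hs
      have hsh : s h = false := hRfalse s hsR
      refine ⟨⟨Function.update s h true, htrue⟩, ?_⟩
      simp only [hψ]
      have hupd : Function.update (Function.update s h true) h false = s := by
        funext f
        by_cases hf : f = h
        · subst hf; rw [Function.update_self, hsh]
        · rw [Function.update_of_ne hf, Function.update_of_ne hf]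
      rw [dif_pos]
      · simp only [Sum.inr.injEq, Subtype.mk.injEq]
        exact hupd
      · constructor
        · rw [hupd]; exact ⟨hsR, htrue, hfalse2⟩
        · rw [Function.update_self]
  have hcard : Nat.card ↥Rins = Nat.card ↥R + Nat.card ↥T2 := by
    rw [Nat.card_eq_of_bijective ψ ⟨hinj, hsurj⟩, Nat.card_sum]
  rw [NN, NN, NH, ← Nat.card_coe_set_eq, ← Nat.card_coe_set_eq,
    ← Nat.card_coe_set_eq]
  rw [← hR, ← hRins, ← hRh, hcard, hT2eq]

end Deletion

section Congruence

variable {n : ℕ}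

lemma sgn_det {A B : Set (Hyp n)}
    (hAB : ∀ f, Vanish f → f ∈ B → (f ∈ A ∨ hneg f ∈ A))
    {x y : E n} (hx : x ∈ UA A) (hy : y ∈ UA A) (e : Sgn A x = Sgn A y) :
    Sgn B x = Sgn B y := by
  funext g
  rw [Sgn_eq_iff']
  by_cases hg : g ∈ B
  · by_cases hv : Vanish g
    · rcases hAB g hv hg with hA|hA
      · have hiff := Sgn_eq_iff.mp (congrFun e g)
        constructor
        · rintro ⟨-, hp⟩
          exact ⟨hg, (hiff.mp ⟨hA, hp⟩).2⟩
        · rintro ⟨-, hp⟩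
          exact ⟨hg, (hiff.mpr ⟨hA, hp⟩).2⟩
      · have hiff := Sgn_eq_iff.mp (congrFun e (hneg g))
        have hx0 : heval g x ≠ 0 := by
          intro hc; exact hx (hneg g) hA (by rw [heval_hneg, hc, neg_zero])
        have hy0 : heval g y ≠ 0 := by
          intro hc; exact hy (hneg g) hA (by rw [heval_hneg, hc, neg_zero])
        simp only [heval_hneg] at hiff
        constructor
        · rintro ⟨-, hp⟩
          refine ⟨hg, ?_⟩
          by_contra hc
          push_neg at hc
          have h1 : heval g y < 0 := lt_of_le_of_ne hc hy0
          have := (hiff.mpr ⟨hA, by linarith⟩).2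
          linarith
        · rintro ⟨-, hp⟩
          refine ⟨hg, ?_⟩
          by_contra hc
          push_neg at hc
          have h1 : heval g x < 0 := lt_of_le_of_ne hc hx0
          have := (hiff.mp ⟨hA, by linarith⟩).2
          linarith
    · rw [heval_of_not_vanish hv x, heval_of_not_vanish hv y]
  · simp [hg]

lemma UA_anti {A B : Set (Hyp n)}
    (hAB : ∀ f, Vanish f → f ∈ B → (f ∈ A ∨ hneg f ∈ A)) : UA A ⊆ UA B := by
  intro x hx g hg
  by_cases hv : Vanish g
  · rcases hAB g hv hg with hA|hA
    · exact hx g hA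
    · intro hc
      exact hx _ hA (by rw [heval_hneg, hc, neg_zero])
  · intro hc
    exact hv ⟨x, hc⟩

theorem NN_congr {A B : Set (Hyp n)}
    (h : ∀ f, Vanish f → ((f ∈ A ∨ hneg f ∈ A) ↔ (f ∈ B ∨ hneg f ∈ B))) : NN A = NN B := by
  have hAB : ∀ f, Vanish f → f ∈ B → (f ∈ A ∨ hneg f ∈ A) := by
    intro f hv hf
    exact (h f hv).mpr (Or.inl hf)
  have hBA : ∀ f, Vanish f → f ∈ A → (f ∈ B ∨ hneg f ∈ B) := by
    intro f hv hf
    exact (h f hv).mp (Or.inl hf)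
  have hU : UA A = UA B := Set.Subset.antisymm (UA_anti hAB) (UA_anti hBA)
  rw [NN, NN]
  apply ncard_sgn_transfer A B (UA A) (UA B) id
  · rw [Set.image_id, hU]
  · intro x hx y hy he
    exact sgn_det hAB hx hy he
  · intro x hx y hy he
    rw [hU] at hx hy
    exact sgn_det hBA hx hy he

end Congruence

section Restriction

lemma NH_transfer {n n' : ℕ} (A : Set (Hyp n)) (h : Hyp n)
    (e : E n' → E n) (T : Hyp n → Hyp n') (w : E n → E n')
    (hT : ∀ f v, heval (T f) v = heval f (e v))
    (hzero : ∀ v, heval h (e v) = 0)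
    (hew : ∀ x, heval h x = 0 → e (w x) = x)
    (hwe : ∀ v, w (e v) = v) :
    NH h A = NN (T '' A) := by
  rw [NH, NN]
  apply ncard_sgn_transfer A (T '' A) _ _ w
  · apply Set.Subset.antisymm
    · rintro v ⟨x, ⟨hxU, hx0⟩, rfl⟩
      rintro g ⟨f, hf, rfl⟩
      rw [hT f (w x), hew x hx0]
      exact hxU f hf
    · intro v hv
      refine ⟨e v, ⟨fun f hf => ?_, hzero v⟩, hwe v⟩
      rw [← hT f v]
      exact hv (T f) ⟨f, hf, rfl⟩
  · rintro x ⟨hxU, hx0⟩ y ⟨hyU, hy0⟩ he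
    funext g
    rw [Sgn_eq_iff']
    by_cases hg : g ∈ T '' A
    · obtain ⟨f, hf, rfl⟩ := hg
      rw [hT f (w x), hT f (w y), hew x hx0, hew y hy0]
      have hiff := Sgn_eq_iff.mp (congrFun he f)
      constructor
      · rintro ⟨-, hp⟩
        exact ⟨⟨f, hf, rfl⟩, (hiff.mp ⟨hf, hp⟩).2⟩
      · rintro ⟨-, hp⟩
        exact ⟨⟨f, hf, rfl⟩, (hiff.mpr ⟨hf, hp⟩).2⟩
    · simp [hg]
  · rintro x ⟨hxU, hx0⟩ y ⟨hyU, hy0⟩ he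
    funext f
    rw [Sgn_eq_iff']
    by_cases hf : f ∈ A
    · have hiff := Sgn_eq_iff.mp (congrFun he (T f))
      rw [hT f (w x), hT f (w y), hew x hx0, hew y hy0] at hiff
      have hmem : T f ∈ T '' A := ⟨f, hf, rfl⟩
      constructor
      · rintro ⟨-, hp⟩
        exact ⟨hf, (hiff.mp ⟨hmem, hp⟩).2⟩
      · rintro ⟨-, hp⟩
        exact ⟨hf, (hiff.mpr ⟨hmem, hp⟩).2⟩
    · simp [hf]

variable {n : ℕ}

def dmap (p : Fin (n+2)) (j : Fin (n+2)) : Fin (n+1) :=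
  ⟨if j.val < p.val then j.val else j.val - 1, by
    have h1 := j.isLt; have h2 := p.isLt; split <;> omega⟩

def emb (p : Fin (n+2)) (i : Fin (n+1)) : Fin (n+2) :=
  ⟨if i.val < p.val then i.val else i.val + 1, by
    have h1 := i.isLt; split <;> omega⟩

lemma dmap_val (p j : Fin (n+2)) :
    (dmap p j).val = if j.val < p.val then j.val else j.val - 1 := rfl

lemma emb_val (p : Fin (n+2)) (i : Fin (n+1)) :
    (emb p i).val = if i.val < p.val then i.val else i.val + 1 := rfl

lemma emb_ne (p : Fin (n+2)) (i : Fin (n+1)) : emb p i ≠ p := by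
  intro hc
  have := congrArg Fin.val hc
  rw [emb_val] at this
  split at this <;> omega

lemma dmap_emb (p : Fin (n+2)) (i : Fin (n+1)) : dmap p (emb p i) = i := by
  apply Fin.ext
  rw [dmap_val, emb_val]
  have h1 := i.isLt
  by_cases h : i.val < p.val <;> simp [h] <;> omega

lemma emb_dmap (p j : Fin (n+2)) (hj : j ≠ p) : emb p (dmap p j) = j := by
  apply Fin.ext
  rw [emb_val, dmap_val]
  have h1 := j.isLt
  have h2 : j.val ≠ p.val := fun h => hj (Fin.ext h)
  by_cases h : j.val < p.val
  · rw [if_pos h, if_pos h]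
  · rw [if_neg h, if_neg (by omega : ¬(j.val - 1 < p.val))]
    omega

def eMap (p q : Fin (n+2)) (d : ℝ) : E (n+1) → E (n+2) :=
  fun v j => if j = p then v (dmap p q) + d else v (dmap p j)

def wMap (p : Fin (n+2)) : E (n+2) → E (n+1) := fun x i => x (emb p i)

def dm' (p q : Fin (n+2)) (j : Fin (n+2)) : Fin (n+1) :=
  if j = p then dmap p q else dmap p j

def Tmap (p q : Fin (n+2)) (d : ℝ) (f : Hyp (n+2)) : Hyp (n+1) :=
  (dm' p q f.1, dm' p q f.2.1,
    f.2.2 - (if f.1 = p then d else 0) + (if f.2.1 = p then d else 0))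

lemma heval_Tmap (p q : Fin (n+2)) (d : ℝ) (f : Hyp (n+2)) (v : E (n+1)) :
    heval (Tmap p q d f) v = heval f (eMap p q d v) := by
  simp only [heval, Tmap, eMap, dm']
  by_cases h1 : f.1 = p <;> by_cases h2 : f.2.1 = p <;> simp [h1, h2] <;> ring

lemma eMap_wMap (p q : Fin (n+2)) (hq : q ≠ p) (d : ℝ) (x : E (n+2))
    (hx : x p = x q + d) : eMap p q d (wMap p x) = x := by
  funext j
  simp only [eMap, wMap]
  by_cases hj : j = p
  · rw [if_pos hj, emb_dmap p q hq, hj, hx]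
  · rw [if_neg hj, emb_dmap p j hj]

lemma wMap_eMap (p q : Fin (n+2)) (d : ℝ) (v : E (n+1)) : wMap p (eMap p q d v) = v := by
  funext i
  simp only [eMap, wMap]
  rw [if_neg (emb_ne p i), dmap_emb]

theorem NH_elim (A : Set (Hyp (n+2))) (h : Hyp (n+2)) (p q : Fin (n+2)) (hq : q ≠ p)
    (d : ℝ) (hH : ∀ x, heval h x = 0 ↔ x p = x q + d) :
    NH h A = NN (Tmap p q d '' A) := by
  apply NH_transfer A h (eMap p q d) (Tmap p q d) (wMap p)
  · intro f v; exact heval_Tmap p q d f v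
  · intro v
    rw [hH]
    simp [eMap, hq]
  · intro x hx
    exact eMap_wMap p q hq d x ((hH x).mp hx)
  · intro v
    exact wMap_eMap p q d v

def TrUp (f : Hyp (n+1)) : Hyp (n+2) :=
  (⟨f.1.val+1, by have := f.1.isLt; omega⟩, ⟨f.2.1.val+1, by have := f.2.1.isLt; omega⟩, f.2.2)

def projDown : E (n+2) → E (n+1) := fun x i => x ⟨i.val+1, by have := i.isLt; omega⟩

lemma heval_TrUp (g : Hyp (n+1)) (x : E (n+2)) :
    heval (TrUp g) x = heval g (projDown x) := rfl

theorem NN_pullback (B : Set (Hyp (n+1))) : NN (TrUp '' B) = NN B := by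
  rw [NN, NN]
  apply ncard_sgn_transfer (TrUp '' B) B _ _ projDown
  · apply Set.Subset.antisymm
    · rintro v ⟨x, hx, rfl⟩
      intro g hg
      rw [← heval_TrUp]
      exact hx (TrUp g) ⟨g, hg, rfl⟩
    · intro v hv
      classical
      set x : E (n+2) := fun j => if hj : j.val = 0 then 0 else v ⟨j.val - 1, by
        have := j.isLt; omega⟩ with hxdef
      have hproj : projDown x = v := by
        funext i
        simp only [projDown, hxdef]
        rw [dif_neg (by omega : ¬(i.val + 1 = 0))]
        exact congrArg v (by apply Fin.ext; simp)
      refine ⟨x, ?_, hproj⟩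
      rintro g' ⟨g, hg, rfl⟩
      rw [heval_TrUp, hproj]
      exact hv g hg
  · intro x hx y hy he
    funext g
    rw [Sgn_eq_iff']
    by_cases hg : g ∈ B
    · have hiff := Sgn_eq_iff.mp (congrFun he (TrUp g))
      rw [heval_TrUp, heval_TrUp] at hiff
      have hmem : TrUp g ∈ TrUp '' B := ⟨g, hg, rfl⟩
      constructor
      · rintro ⟨-, hp⟩
        exact ⟨hg, (hiff.mp ⟨hmem, hp⟩).2⟩
      · rintro ⟨-, hp⟩
        exact ⟨hg, (hiff.mpr ⟨hmem, hp⟩).2⟩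
    · simp [hg]
  · intro x hx y hy he
    funext g'
    rw [Sgn_eq_iff']
    by_cases hg : g' ∈ TrUp '' B
    · obtain ⟨g, hgB, rfl⟩ := hg
      rw [heval_TrUp, heval_TrUp]
      have hiff := Sgn_eq_iff.mp (congrFun he g)
      constructor
      · rintro ⟨-, hp⟩
        exact ⟨⟨g, hgB, rfl⟩, (hiff.mp ⟨hgB, hp⟩).2⟩
      · rintro ⟨-, hp⟩
        exact ⟨⟨g, hgB, rfl⟩, (hiff.mpr ⟨hgB, hp⟩).2⟩
    · simp [hg]

end Restriction

section Families

def shiPart (n : ℕ) : Set (Hyp n) :=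
  {f | 1 ≤ f.1.val ∧ f.1.val < f.2.1.val ∧ (f.2.2 = 0 ∨ f.2.2 = 1)}

def famA (n m k : ℕ) : Set (Hyp n) :=
  {f | f.1.val = 0 ∧ 1 ≤ f.2.1.val ∧ ∃ l : ℕ, f.2.2 = (l : ℝ) ∧
    ((f.2.1.val + 1 < k ∧ l ≤ m) ∨ (k ≤ f.2.1.val + 1 ∧ l ≤ m + 1))} ∪ shiPart n

def famC (n t : ℕ) : Set (Hyp n) :=
  {f | f.1.val = 0 ∧ 1 ≤ f.2.1.val ∧ f.2.1.val < t ∧ f.2.2 = 0} ∪ shiPart n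

lemma finite_of_levels {n : ℕ} (A : Set (Hyp n)) (M : ℕ)
    (hA : ∀ f ∈ A, ∃ l : ℕ, l ≤ M ∧ f.2.2 = (l : ℝ)) : A.Finite := by
  have hsub : A ⊆ (fun q : Fin n × Fin n × Fin (M+1) =>
      ((q.1, q.2.1, (q.2.2.val : ℝ)) : Hyp n)) '' Set.univ := by
    rintro ⟨i, j, c⟩ hf
    obtain ⟨l, hl, hc⟩ := hA _ hf
    exact ⟨(i, j, ⟨l, by omega⟩), trivial, by rw [Prod.mk.injEq, Prod.mk.injEq]; exact ⟨rfl, rfl, hc.symm⟩⟩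
  exact Set.Finite.subset (Set.finite_univ.image _) hsub

lemma famA_finite (n m k : ℕ) : (famA n m k).Finite := by
  apply finite_of_levels _ (m+2)
  rintro ⟨i, j, c⟩ (⟨-, -, l, hc, hcond⟩ | ⟨-, -, hc⟩)
  · exact ⟨l, by omega, hc⟩
  · rcases hc with hc|hc
    · exact ⟨0, by omega, by simpa using hc⟩
    · exact ⟨1, by omega, by simpa using hc⟩

lemma famC_finite (n t : ℕ) : (famC n t).Finite := by
  apply finite_of_levels _ 1
  rintro ⟨i, j, c⟩ (⟨-, -, -, hc⟩ | ⟨-, -, hc⟩)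
  · exact ⟨0, by omega, by simpa using hc⟩
  · rcases hc with hc|hc
    · exact ⟨0, by omega, by simpa using hc⟩
    · exact ⟨1, by omega, by simpa using hc⟩

lemma not_vanish_of_eq {n : ℕ} {f : Hyp n} (h : f.1 = f.2.1) (hc : f.2.2 ≠ 0) :
    ¬ Vanish f := by
  rintro ⟨x, hx⟩
  rw [heval, h] at hx
  apply hc
  linarith

lemma negCompat_of_image {N N' : ℕ} {A : Set (Hyp N)} {T : Hyp N → Hyp N'}
    {Tgt : Set (Hyp N')}
    (fwd : ∀ f ∈ A, Vanish (T f) → T f ∈ Tgt ∨ hneg (T f) ∈ Tgt)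
    (bwd : ∀ g ∈ Tgt, g ∈ T '' A ∨ hneg g ∈ T '' A) :
    ∀ f, Vanish f → ((f ∈ T '' A ∨ hneg f ∈ T '' A) ↔ (f ∈ Tgt ∨ hneg f ∈ Tgt)) := by
  intro f hv
  constructor
  · rintro (⟨f0, hf0, rfl⟩ | ⟨f0, hf0, hne⟩)
    · exact fwd f0 hf0 hv
    · have hv' : Vanish (T f0) := by rw [hne]; exact (vanish_hneg_iff f).mpr hv
      rcases fwd f0 hf0 hv' with h|h
      · rw [hne] at h; exact Or.inr h
      · rw [hne, hneg_hneg] at h; exact Or.inl h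
  · rintro (hf | hf)
    · exact bwd f hf
    · rcases bwd _ hf with h|h
      · exact Or.inr h
      · rw [hneg_hneg] at h; exact Or.inl h

/-- `famA n (m+1) (n+1) = famA n m 2`. -/
lemma famA_top (n m : ℕ) : famA n (m+1) (n+1) = famA n m 2 := by
  ext ⟨i, j, c⟩
  simp only [famA, Set.mem_union, Set.mem_setOf_eq]
  apply or_congr_left
  constructor
  · rintro ⟨h0, h1, l, hc, hcond⟩
    refine ⟨h0, h1, l, hc, Or.inr ⟨by omega, ?_⟩⟩
    have := j.isLt
    omega
  · rintro ⟨h0, h1, l, hc, hcond⟩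
    refine ⟨h0, h1, l, hc, Or.inl ⟨?_, ?_⟩⟩ <;> have := j.isLt <;> omega

/-- `famA n 0 (n+1) = famC n n`. -/
lemma famA_base (n : ℕ) : famA n 0 (n+1) = famC n n := by
  ext ⟨i, j, c⟩
  simp only [famA, famC, Set.mem_union, Set.mem_setOf_eq]
  apply or_congr_left
  constructor
  · rintro ⟨h0, h1, l, hc, hcond⟩
    have := j.isLt
    have hl : l = 0 := by omega
    subst hl
    exact ⟨h0, h1, by omega, by simpa using hc⟩
  · rintro ⟨h0, h1, h2, hc⟩
    refine ⟨h0, h1, 0, by simpa using hc, Or.inl ⟨?_, le_refl 0⟩⟩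
    have := j.isLt
    omega

lemma famA_insert_eq {n m k : ℕ} (hk2 : 2 ≤ k) (hkn : k ≤ n + 2) :
    insert (((⟨0, by omega⟩ : Fin (n+2)), (⟨k-1, by omega⟩ : Fin (n+2)),
        ((m+1 : ℕ) : ℝ)) : Hyp (n+2)) (famA (n+2) m (k+1)) = famA (n+2) m k := by
  ext ⟨i, j, c⟩
  simp only [Set.mem_insert_iff, famA, Set.mem_union, Set.mem_setOf_eq, Prod.mk.injEq]
  constructor
  · rintro (⟨hi, hj, hc⟩ | ⟨h0, h1, l, hc, hcond⟩ | hshi)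
    · subst hi; subst hj
      refine Or.inl ⟨rfl, by show 1 ≤ k-1; omega, m+1, by rw [hc],
        Or.inr ⟨by show k ≤ k-1+1; omega, le_refl _⟩⟩
    · exact Or.inl ⟨h0, h1, l, hc, by omega⟩
    · exact Or.inr hshi
  · rintro (⟨h0, h1, l, hc, hcond⟩ | hshi)
    · by_cases hcase : j.val = k - 1 ∧ l = m + 1
      · refine Or.inl ⟨?_, ?_, ?_⟩
        · apply Fin.ext; simp [h0]
        · apply Fin.ext; simp [hcase.1]
        · rw [hc, hcase.2]
      · refine Or.inr (Or.inl ⟨h0, h1, l, hc, ?_⟩)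
        omega
    · exact Or.inr (Or.inr hshi)

lemma famA_insert_not_mem {n m k : ℕ} (hk2 : 2 ≤ k) (hkn : k ≤ n + 2) :
    (((⟨0, by omega⟩ : Fin (n+2)), (⟨k-1, by omega⟩ : Fin (n+2)),
        ((m+1 : ℕ) : ℝ)) : Hyp (n+2)) ∉ famA (n+2) m (k+1) := by
  rintro (⟨h0, h1, l, hc, hcond⟩ | ⟨hshi, -⟩)
  · have hc' : ((m+1:ℕ) : ℝ) = (l : ℝ) := hc
    have hl : l = m + 1 := by exact_mod_cast hc'.symm
    simp at h1 hcond
    omega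
  · simp at hshi

lemma famC_insert_eq {n t : ℕ} (ht : 1 ≤ t) (htn : t ≤ n + 1) :
    insert (((⟨0, by omega⟩ : Fin (n+2)), (⟨t, by omega⟩ : Fin (n+2)), (0 : ℝ)) : Hyp (n+2))
      (famC (n+2) t) = famC (n+2) (t+1) := by
  ext ⟨i, j, c⟩
  simp only [Set.mem_insert_iff, famC, Set.mem_union, Set.mem_setOf_eq, Prod.mk.injEq]
  constructor
  · rintro (⟨hi, hj, hc⟩ | ⟨h0, h1, h2, hc⟩ | hshi)
    · subst hi; subst hj
      exact Or.inl ⟨rfl, by show 1 ≤ t; omega, by show t < t+1; omega, hc⟩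
    · exact Or.inl ⟨h0, h1, by omega, hc⟩
    · exact Or.inr hshi
  · rintro (⟨h0, h1, h2, hc⟩ | hshi)
    · by_cases hcase : j.val = t
      · exact Or.inl ⟨Fin.ext (by simp [h0]), Fin.ext (by simp [hcase]), hc⟩
      · exact Or.inr (Or.inl ⟨h0, h1, by omega, hc⟩)
    · exact Or.inr (Or.inr hshi)

lemma famC_insert_not_mem {n t : ℕ} (ht : 1 ≤ t) (htn : t ≤ n + 1) :
    (((⟨0, by omega⟩ : Fin (n+2)), (⟨t, by omega⟩ : Fin (n+2)), (0 : ℝ)) : Hyp (n+2)) ∉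
      famC (n+2) t := by
  rintro (⟨h0, h1, h2, hc⟩ | ⟨hshi, -⟩)
  · have h2' : t < t := h2
    omega
  · have hshi' : 1 ≤ 0 := hshi
    omega

lemma mem_famA02 {N : ℕ} (f : Hyp (N+1)) :
    f ∈ famA (N+1) 0 2 ↔ (f.1.val < f.2.1.val ∧ (f.2.2 = 0 ∨ f.2.2 = 1)) := by
  obtain ⟨i, j, c⟩ := f
  simp only [famA, shiPart, Set.mem_union, Set.mem_setOf_eq]
  constructor
  · rintro (⟨h0, h1, l, hc, hcond⟩ | ⟨h1, h2, hc⟩)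
    · have hl : l = 0 ∨ l = 1 := by omega
      refine ⟨by omega, ?_⟩
      rcases hl with rfl|rfl
      · left; simpa using hc
      · right; simpa using hc
    · exact ⟨h2, hc⟩
  · rintro ⟨hlt, hc⟩
    by_cases hi : i.val = 0
    · refine Or.inl ⟨hi, by omega, ?_⟩
      rcases hc with hc|hc
      · exact ⟨0, by simpa using hc, Or.inr ⟨by omega, by omega⟩⟩
      · exact ⟨1, by simpa using hc, Or.inr ⟨by omega, by omega⟩⟩
    · exact Or.inr ⟨by omega, hlt, hc⟩

lemma dmap_val_lt {n : ℕ} {p j : Fin (n+2)} (h : j.val < p.val) : (dmap p j).val = j.val := by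
  rw [dmap_val, if_pos h]

lemma dmap_val_ge {n : ℕ} {p j : Fin (n+2)} (h : ¬ j.val < p.val) : (dmap p j).val = j.val - 1 := by
  rw [dmap_val, if_neg h]

end Families

section RestrictA

variable {n m k : ℕ}

lemma famA_restrict_fwd (hk2 : 2 ≤ k) (hkn : k ≤ n + 2) :
    ∀ f ∈ famA (n+2) m (k+1),
      Vanish (Tmap (⟨k-1, by omega⟩ : Fin (n+2)) (⟨0, by omega⟩) (-((m+1:ℕ):ℝ)) f) →
      Tmap (⟨k-1, by omega⟩ : Fin (n+2)) ⟨0, by omega⟩ (-((m+1:ℕ):ℝ)) f ∈ famA (n+1) (m+1) k ∨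
      hneg (Tmap (⟨k-1, by omega⟩ : Fin (n+2)) ⟨0, by omega⟩ (-((m+1:ℕ):ℝ)) f)
        ∈ famA (n+1) (m+1) k := by
  set p : Fin (n+2) := ⟨k-1, by omega⟩ with hp
  set q : Fin (n+2) := ⟨0, by omega⟩ with hq
  set d : ℝ := -((m+1:ℕ):ℝ) with hd
  have hpval : p.val = k - 1 := rfl
  have hqval : q.val = 0 := rfl
  have hdmq : (dmap p q).val = 0 := by rw [dmap_val_lt (by omega)]
  rintro ⟨i, j, c⟩ hf hvan
  rcases hf with ⟨h0, h1, l, hc, hcond⟩ | ⟨h1, h2, hc⟩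
  · -- level hyperplane (0, j, l)
    have h0' : i.val = 0 := h0
    have h1' : 1 ≤ j.val := h1
    have hc' : c = (l:ℝ) := hc
    have hcond' : (j.val + 1 < k + 1 ∧ l ≤ m) ∨ (k + 1 ≤ j.val + 1 ∧ l ≤ m + 1) := hcond
    subst hc'
    have hip : i ≠ p := by
      intro hcc
      rw [Fin.ext_iff, hpval] at hcc
      omega
    by_cases hjp : j = p
    · -- j = p : constant functional, contradicts Vanish
      exfalso
      have hjv : j.val = k - 1 := by rw [hjp, hpval]
      have hl : l ≤ m := by
        rcases hcond' with ⟨-, h⟩ | ⟨h, -⟩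
        · exact h
        · omega
      have hTeq : (Tmap p q d (i, j, (l:ℝ))).1 = (Tmap p q d (i, j, (l:ℝ))).2.1 := by
        show dm' p q i = dm' p q j
        simp only [dm']
        rw [if_neg hip, if_pos hjp]
        apply Fin.ext
        rw [hdmq, dmap_val_lt (by omega)]
        exact h0'
      have hTc : (Tmap p q d (i, j, (l:ℝ))).2.2 ≠ 0 := by
        show ((l:ℝ) - (if i = p then d else 0) + (if j = p then d else 0)) ≠ 0
        rw [if_neg hip, if_pos hjp, hd]
        push_cast
        intro hcc
        have hll : (l:ℝ) = ((m:ℝ) + 1) := by linarith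
        have : l = m + 1 := by exact_mod_cast hll
        omega
      exact not_vanish_of_eq hTeq hTc hvan
    · -- j ≠ p : level hyperplane survives
      have hjv : j.val ≠ k - 1 := by
        intro hcc; exact hjp (Fin.ext (by rw [hpval]; exact hcc))
      have hjlt := j.isLt
      left
      refine Or.inl ⟨?_, ?_, l, ?_, ?_⟩
      · show (dm' p q i).val = 0
        simp only [dm']
        rw [if_neg hip, dmap_val_lt (by omega)]
        exact h0'
      · show 1 ≤ (dm' p q j).val
        simp only [dm']
        rw [if_neg hjp]
        by_cases hlt : j.val < p.val
        · rw [dmap_val_lt hlt]; omega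
        · rw [dmap_val_ge hlt]; rw [hpval] at hlt; omega
      · show ((l:ℝ) - (if i = p then d else 0) + (if j = p then d else 0)) = (l:ℝ)
        rw [if_neg hip, if_neg hjp]; ring
      · show ((dm' p q j).val + 1 < k ∧ l ≤ m + 1) ∨
          (k ≤ (dm' p q j).val + 1 ∧ l ≤ m + 1 + 1)
        simp only [dm']
        rw [if_neg hjp]
        by_cases hlt : j.val < p.val
        · rw [dmap_val_lt hlt]
          rw [hpval] at hlt
          left
          constructor
          · omega
          · rcases hcond' with ⟨-, h⟩ | ⟨h, -⟩ <;> omega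
        · rw [dmap_val_ge hlt]
          rw [hpval] at hlt
          right
          constructor
          · omega
          · rcases hcond' with ⟨-, h⟩ | ⟨-, h⟩ <;> omega
  · -- Shi hyperplane (i, j, c), 1 ≤ i < j, c ∈ {0, 1}
    have h1' : 1 ≤ i.val := h1
    have h2' : i.val < j.val := h2
    have hcc : c = 0 ∨ c = 1 := hc
    obtain ⟨cl, hcl, hcval⟩ : ∃ cl : ℕ, cl ≤ 1 ∧ c = (cl : ℝ) := by
      rcases hcc with rfl|rfl
      · exact ⟨0, by omega, by norm_num⟩
      · exact ⟨1, by omega, by norm_num⟩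
    subst hcval
    by_cases hipp : i = p
    · -- i = p, j > p : becomes level at big column
      have hiv : i.val = k - 1 := by rw [hipp, hpval]
      have hjp : j ≠ p := by
        intro hcc2; rw [hcc2, hpval] at h2'; omega
      have hjval : k - 1 < j.val := by omega
      left
      refine Or.inl ⟨?_, ?_, cl + (m+1), ?_, ?_⟩
      · show (dm' p q i).val = 0
        simp only [dm']
        rw [if_pos hipp]; exact hdmq
      · show 1 ≤ (dm' p q j).val
        simp only [dm']
        rw [if_neg hjp, dmap_val_ge (by rw [hpval]; omega)]
        omega
      · show ((cl:ℝ) - (if i = p then d else 0) + (if j = p then d else 0))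
            = ((cl + (m+1) : ℕ):ℝ)
        rw [if_pos hipp, if_neg hjp, hd]
        push_cast
        ring
      · show ((dm' p q j).val + 1 < k ∧ cl + (m+1) ≤ m + 1) ∨
          (k ≤ (dm' p q j).val + 1 ∧ cl + (m+1) ≤ m + 1 + 1)
        simp only [dm']
        rw [if_neg hjp, dmap_val_ge (by rw [hpval]; omega)]
        right
        constructor <;> omega
    · by_cases hjp : j = p
      · -- j = p : hneg is level at small column
        right
        have hiv : i.val < k - 1 := by
          have : j.val = k - 1 := by rw [hjp, hpval]
          omega
        refine Or.inl ⟨?_, ?_, (m+1) - cl, ?_, ?_⟩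
        · show (dm' p q j).val = 0
          simp only [dm']
          rw [if_pos hjp]; exact hdmq
        · show 1 ≤ (dm' p q i).val
          simp only [dm']
          rw [if_neg hipp, dmap_val_lt (by rw [hpval]; omega)]
          exact h1'
        · show -((cl:ℝ) - (if i = p then d else 0) + (if j = p then d else 0))
              = (((m+1) - cl : ℕ):ℝ)
          rw [if_neg hipp, if_pos hjp, hd]
          have hcast : ((m + 1 - cl : ℕ) : ℝ) = ((m:ℝ) + 1) - (cl:ℝ) := by
            have : cl ≤ m + 1 := by omega
            push_cast [this]
            ring
          rw [hcast]
          push_cast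
          ring
        · show ((dm' p q i).val + 1 < k ∧ (m+1) - cl ≤ m + 1) ∨
            (k ≤ (dm' p q i).val + 1 ∧ (m+1) - cl ≤ m + 1 + 1)
          simp only [dm']
          rw [if_neg hipp, dmap_val_lt (by rw [hpval]; omega)]
          left
          constructor <;> omega
      · -- generic Shi pair survives
        have hivne : i.val ≠ p.val := fun hcc2 => hipp (Fin.ext hcc2)
        have hjvne : j.val ≠ p.val := fun hcc2 => hjp (Fin.ext hcc2)
        left
        refine Or.inr ⟨?_, ?_, ?_⟩
        · show 1 ≤ (dm' p q i).val
          simp only [dm']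
          rw [if_neg hipp]
          by_cases hlt : i.val < p.val
          · rw [dmap_val_lt hlt]; exact h1'
          · rw [dmap_val_ge hlt]
            rw [hpval] at hlt
            omega
        · show (dm' p q i).val < (dm' p q j).val
          simp only [dm']
          rw [if_neg hipp, if_neg hjp]
          by_cases hlt1 : i.val < p.val <;> by_cases hlt2 : j.val < p.val
          · rw [dmap_val_lt hlt1, dmap_val_lt hlt2]; omega
          · rw [dmap_val_lt hlt1, dmap_val_ge hlt2]; omega
          · omega
          · rw [dmap_val_ge hlt1, dmap_val_ge hlt2]; omega
        · show ((cl:ℝ) - (if i = p then d else 0) + (if j = p then d else 0)) = 0 ∨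
            ((cl:ℝ) - (if i = p then d else 0) + (if j = p then d else 0)) = 1
          rw [if_neg hipp, if_neg hjp]
          interval_cases cl
          · left; norm_num
          · right; norm_num

lemma famA_restrict_bwd (hk2 : 2 ≤ k) (hkn : k ≤ n + 2) :
    ∀ g ∈ famA (n+1) (m+1) k,
      g ∈ Tmap (⟨k-1, by omega⟩ : Fin (n+2)) ⟨0, by omega⟩ (-((m+1:ℕ):ℝ)) '' famA (n+2) m (k+1) ∨
      hneg g ∈ Tmap (⟨k-1, by omega⟩ : Fin (n+2)) ⟨0, by omega⟩ (-((m+1:ℕ):ℝ)) ''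
        famA (n+2) m (k+1) := by
  set p : Fin (n+2) := ⟨k-1, by omega⟩ with hp
  set q : Fin (n+2) := ⟨0, by omega⟩ with hq
  set d : ℝ := -((m+1:ℕ):ℝ) with hd
  have hpval : p.val = k - 1 := rfl
  have hqval : q.val = 0 := rfl
  have hqp : q ≠ p := by
    intro hcc
    have := congrArg Fin.val hcc
    rw [hqval, hpval] at this
    omega
  have hdmq : (dmap p q).val = 0 := by rw [dmap_val_lt (by omega)]
  rintro ⟨i', j', c⟩ hg
  rcases hg with ⟨h0, h1, l, hc, hcond⟩ | ⟨h1, h2, hcs⟩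
  · -- level member of target
    have h0' : i'.val = 0 := h0
    have h1' : 1 ≤ j'.val := h1
    have hc' : c = (l:ℝ) := hc
    have hj'lt := j'.isLt
    subst hc'
    have hcond' : (j'.val + 1 < k ∧ l ≤ m + 1) ∨ (k ≤ j'.val + 1 ∧ l ≤ m + 2) := hcond
    rcases hcond' with ⟨hsml, hl⟩ | ⟨hbig, hl⟩
    · -- small column j' ≤ k-2
      have hjlt : j'.val < p.val := by rw [hpval]; omega
      by_cases hlm : l ≤ m
      · -- direct preimage
        left
        refine ⟨(q, emb p j', (l:ℝ)), Or.inl ⟨hqval, ?_, l, rfl, Or.inl ⟨?_, hlm⟩⟩, ?_⟩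
        · show 1 ≤ (emb p j').val
          rw [emb_val, if_pos hjlt]; omega
        · show (emb p j').val + 1 < k + 1
          rw [emb_val, if_pos hjlt]; omega
        · simp only [Tmap, Prod.mk.injEq, dm']
          refine ⟨?_, ?_, ?_⟩
          · rw [if_neg hqp]
            exact Fin.ext (by rw [hdmq, h0'])
          · rw [if_neg (emb_ne p j'), dmap_emb]
          · rw [if_neg hqp, if_neg (emb_ne p j')]; ring
      · -- l = m+1 : negated Shi preimage
        have hlm1 : l = m + 1 := by omega
        right
        refine ⟨(emb p j', p, (0:ℝ)), Or.inr ⟨?_, ?_, Or.inl rfl⟩, ?_⟩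
        · show 1 ≤ (emb p j').val
          rw [emb_val, if_pos hjlt]; omega
        · show (emb p j').val < p.val
          rw [emb_val, if_pos hjlt]; exact hjlt
        · simp only [Tmap, Prod.mk.injEq, dm', hneg]
          refine ⟨?_, ?_, ?_⟩
          · rw [if_neg (emb_ne p j'), dmap_emb]
          · simp only [ite_true]
            exact Fin.ext (by rw [hdmq, h0'])
          · rw [if_neg (emb_ne p j')]
            simp only [ite_true]
            rw [hd, hlm1]
            push_cast
            ring
    · -- big column j' ≥ k-1
      have hjge : ¬ (j'.val < p.val) := by rw [hpval]; omega
      by_cases hlm : l ≤ m + 1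
      · left
        refine ⟨(q, emb p j', (l:ℝ)), Or.inl ⟨hqval, ?_, l, rfl, Or.inr ⟨?_, hlm⟩⟩, ?_⟩
        · show 1 ≤ (emb p j').val
          rw [emb_val, if_neg hjge]; omega
        · show k + 1 ≤ (emb p j').val + 1
          rw [emb_val, if_neg hjge]; omega
        · simp only [Tmap, Prod.mk.injEq, dm']
          refine ⟨?_, ?_, ?_⟩
          · rw [if_neg hqp]
            exact Fin.ext (by rw [hdmq, h0'])
          · rw [if_neg (emb_ne p j'), dmap_emb]
          · rw [if_neg hqp, if_neg (emb_ne p j')]; ring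
      · -- l = m+2 : from Shi with i = p
        have hlm2 : l = m + 2 := by omega
        left
        refine ⟨(p, emb p j', (1:ℝ)), Or.inr ⟨?_, ?_, Or.inr rfl⟩, ?_⟩
        · show 1 ≤ p.val
          rw [hpval]; omega
        · show p.val < (emb p j').val
          rw [emb_val, if_neg hjge, hpval]; omega
        · simp only [Tmap, Prod.mk.injEq, dm']
          refine ⟨?_, ?_, ?_⟩
          · simp only [ite_true]
            exact Fin.ext (by rw [hdmq, h0'])
          · rw [if_neg (emb_ne p j'), dmap_emb]
          · rw [if_neg (emb_ne p j')]
            simp only [ite_true]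
            rw [hd, hlm2]
            push_cast
            ring
  · -- Shi member of target
    have h1' : 1 ≤ i'.val := h1
    have h2' : i'.val < j'.val := h2
    left
    refine ⟨(emb p i', emb p j', c), Or.inr ⟨?_, ?_, hcs⟩, ?_⟩
    · show 1 ≤ (emb p i').val
      rw [emb_val]
      split <;> omega
    · show (emb p i').val < (emb p j').val
      rw [emb_val, emb_val]
      by_cases hlt1 : i'.val < p.val <;> by_cases hlt2 : j'.val < p.val <;>
        simp only [hlt1, hlt2, if_pos, if_neg, if_true, if_false] <;> omega
    · simp only [Tmap, Prod.mk.injEq, dm']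
      refine ⟨?_, ?_, ?_⟩
      · rw [if_neg (emb_ne p i'), dmap_emb]
      · rw [if_neg (emb_ne p j'), dmap_emb]
      · rw [if_neg (emb_ne p i'), if_neg (emb_ne p j')]; ring

end RestrictA

section RestrictC

variable {n t : ℕ}

lemma famC_restrict_fwd (ht : 1 ≤ t) (htn : t ≤ n + 1) :
    ∀ f ∈ famC (n+2) t,
      Vanish (Tmap (⟨0, by omega⟩ : Fin (n+2)) (⟨t, by omega⟩) (0:ℝ) f) →
      Tmap (⟨0, by omega⟩ : Fin (n+2)) (⟨t, by omega⟩) (0:ℝ) f ∈ famA (n+1) 0 2 ∨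
      hneg (Tmap (⟨0, by omega⟩ : Fin (n+2)) (⟨t, by omega⟩) (0:ℝ) f) ∈ famA (n+1) 0 2 := by
  set p : Fin (n+2) := ⟨0, by omega⟩ with hp
  set q : Fin (n+2) := ⟨t, by omega⟩ with hq
  have hpval : p.val = 0 := rfl
  have hqval : q.val = t := rfl
  have hdmq : (dmap p q).val = t - 1 := by rw [dmap_val_ge (by omega)]
  rintro ⟨i, j, c⟩ hf hvan
  have hcomp : (Tmap p q (0:ℝ) (i, j, c)).2.2 = c := by
    show c - (if i = p then (0:ℝ) else 0) + (if j = p then (0:ℝ) else 0) = c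
    rw [ite_self, ite_self]
    ring
  rcases hf with ⟨h0, h1, h2, hc⟩ | ⟨h1, h2, hc⟩
  · -- level (0, j, 0) with 1 ≤ j < t
    have h0' : i.val = 0 := h0
    have h1' : 1 ≤ j.val := h1
    have h2' : j.val < t := h2
    have hc' : c = 0 := hc
    have hip : i = p := Fin.ext (by rw [h0', hpval])
    have hjp : j ≠ p := by
      intro hcc
      have := congrArg Fin.val hcc
      rw [hpval] at this
      omega
    right
    rw [mem_famA02]
    constructor
    · show (Tmap p q 0 (i,j,c)).2.1.val < (Tmap p q 0 (i,j,c)).1.val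
      show (dm' p q j).val < (dm' p q i).val
      simp only [dm']
      rw [if_pos hip, if_neg hjp, dmap_val_ge (by omega), hdmq]
      omega
    · show (-(Tmap p q 0 (i,j,c)).2.2 = 0 ∨ -(Tmap p q 0 (i,j,c)).2.2 = 1)
      rw [hcomp, hc']
      left; ring
  · -- Shi pair
    have h1' : 1 ≤ i.val := h1
    have h2' : i.val < j.val := h2
    have hip : i ≠ p := by
      intro hcc
      have := congrArg Fin.val hcc
      rw [hpval] at this
      omega
    have hjp : j ≠ p := by
      intro hcc
      have := congrArg Fin.val hcc
      rw [hpval] at this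
      omega
    left
    rw [mem_famA02]
    constructor
    · show (dm' p q i).val < (dm' p q j).val
      simp only [dm']
      rw [if_neg hip, if_neg hjp, dmap_val_ge (by omega), dmap_val_ge (by omega)]
      omega
    · rw [hcomp]
      exact hc

lemma famC_restrict_bwd (ht : 1 ≤ t) (htn : t ≤ n + 1) :
    ∀ g ∈ famA (n+1) 0 2,
      g ∈ Tmap (⟨0, by omega⟩ : Fin (n+2)) (⟨t, by omega⟩) (0:ℝ) '' famC (n+2) t ∨
      hneg g ∈ Tmap (⟨0, by omega⟩ : Fin (n+2)) (⟨t, by omega⟩) (0:ℝ) '' famC (n+2) t := by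
  set p : Fin (n+2) := ⟨0, by omega⟩ with hp
  set q : Fin (n+2) := ⟨t, by omega⟩ with hq
  have hpval : p.val = 0 := rfl
  rintro ⟨i', j', c⟩ hg
  rw [mem_famA02] at hg
  obtain ⟨hlt, hc⟩ := hg
  have hlt' : i'.val < j'.val := hlt
  left
  refine ⟨(emb p i', emb p j', c), Or.inr ⟨?_, ?_, hc⟩, ?_⟩
  · show 1 ≤ (emb p i').val
    rw [emb_val, if_neg (by omega)]
    omega
  · show (emb p i').val < (emb p j').val
    rw [emb_val, emb_val, if_neg (by omega), if_neg (by omega)]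
    omega
  · simp only [Tmap, Prod.mk.injEq, dm']
    refine ⟨?_, ?_, ?_⟩
    · rw [if_neg (emb_ne p i'), dmap_emb]
    · rw [if_neg (emb_ne p j'), dmap_emb]
    · rw [if_neg (emb_ne p i'), if_neg (emb_ne p j')]
      ring

lemma famC_one (n : ℕ) : famC (n+2) 1 = TrUp '' famA (n+1) 0 2 := by
  ext ⟨i, j, c⟩
  constructor
  · rintro (⟨h0, h1, h2, hc⟩ | ⟨h1, h2, hc⟩)
    · omega
    · have h1' : 1 ≤ i.val := h1
      have h2' : i.val < j.val := h2
      have hjlt := j.isLt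
      refine ⟨(⟨i.val - 1, by omega⟩, ⟨j.val - 1, by omega⟩, c), ?_, ?_⟩
      · rw [mem_famA02]
        exact ⟨by show i.val - 1 < j.val - 1; omega, hc⟩
      · simp only [TrUp, Prod.mk.injEq]
        exact ⟨Fin.ext (by show i.val - 1 + 1 = i.val; omega),
          Fin.ext (by show j.val - 1 + 1 = j.val; omega), trivial⟩
  · rintro ⟨⟨i0, j0, c0⟩, hg, hTr⟩
    rw [mem_famA02] at hg
    obtain ⟨hlt, hc0⟩ := hg
    have hlt' : i0.val < j0.val := hlt
    rw [← hTr]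
    right
    exact ⟨by show 1 ≤ i0.val + 1; omega, by show i0.val + 1 < j0.val + 1; omega, hc0⟩

end RestrictC

section Master

lemma NN_empty (n : ℕ) : NN (∅ : Set (Hyp n)) = 1 := by
  have hU : UA (∅ : Set (Hyp n)) = Set.univ := by
    ext x; simp [UA]
  have hsgn : ∀ x : E n, Sgn (∅ : Set (Hyp n)) x = fun _ => false := by
    intro x; funext f; simp [Sgn]
  rw [NN, hU]
  have himg : Sgn (∅ : Set (Hyp n)) '' Set.univ = {fun _ => false} := by
    ext v
    simp only [Set.image_univ, Set.mem_range, Set.mem_singleton_iff]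
    constructor
    · rintro ⟨x, rfl⟩; exact hsgn x
    · rintro rfl; exact ⟨fun _ => 0, hsgn _⟩
  rw [himg, Set.ncard_singleton]

lemma famA_one (m k : ℕ) : famA 1 m k = ∅ := by
  ext ⟨i, j, c⟩
  simp only [famA, shiPart, Set.mem_union, Set.mem_setOf_eq, Set.mem_empty_iff_false, iff_false]
  rintro (⟨-, h1, -⟩ | ⟨h1, -, -⟩)
  · have h1' : 1 ≤ j.val := h1
    have := j.isLt; omega
  · have h1' : 1 ≤ i.val := h1
    have := i.isLt; omega

lemma NN_famC (n : ℕ) (IH : NN (famA (n+1) 0 2) = (n+2)^n) :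
    ∀ t, 1 ≤ t → t ≤ n + 2 → NN (famC (n+2) t) = t * (n+2)^n := by
  intro t
  induction t with
  | zero => omega
  | succ t iht =>
    intro h1 h2
    by_cases ht0 : t = 0
    · subst ht0
      rw [famC_one n, NN_pullback, IH]
      ring
    · have ht1 : 1 ≤ t := by omega
      have htn : t ≤ n + 1 := by omega
      have hne : ((⟨0, by omega⟩ : Fin (n+2)) : Fin (n+2)) ≠ (⟨t, by omega⟩ : Fin (n+2)) := by
        intro hcc
        have := congrArg Fin.val hcc
        simp only at this
        omega
      have hqp : ((⟨t, by omega⟩ : Fin (n+2)) : Fin (n+2)) ≠ (⟨0, by omega⟩ : Fin (n+2)) :=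
        Ne.symm hne
      have hH : ∀ x : E (n+2),
          heval ((⟨0, by omega⟩ : Fin (n+2)), (⟨t, by omega⟩ : Fin (n+2)), (0:ℝ)) x = 0 ↔
          x ⟨0, by omega⟩ = x ⟨t, by omega⟩ + (0:ℝ) := by
        intro x
        rw [heval]
        constructor <;> intro hh <;> simp only at hh ⊢ <;> linarith
      rw [← famC_insert_eq ht1 htn,
        NN_insert (famC_finite _ _) hne (famC_insert_not_mem ht1 htn),
        NH_elim (famC (n+2) t) _ ⟨0, by omega⟩ ⟨t, by omega⟩ hqp (0:ℝ) hH,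
        NN_congr (negCompat_of_image (famC_restrict_fwd ht1 htn) (famC_restrict_bwd ht1 htn)),
        IH, iht ht1 (by omega)]
      ring

lemma NN_famA_step (n : ℕ)
    (IH : ∀ m k, 2 ≤ k → k ≤ n + 2 → NN (famA (n+1) m k) =
      (n+1+m)^(k-2) * (n+1+m+1)^(n+1+1-k)) :
    ∀ m k, 2 ≤ k → k ≤ n + 2 + 1 → NN (famA (n+2) m k) =
      (n+2+m)^(k-2) * (n+2+m+1)^(n+2+1-k) := by
  have hfamC : ∀ t, 1 ≤ t → t ≤ n + 2 → NN (famC (n+2) t) = t * (n+2)^n := by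
    apply NN_famC
    have := IH 0 2 (le_refl 2) (by omega)
    have e1 : n + 1 + 1 - 2 = n := by omega
    rw [e1] at this
    simpa using this
  have chain : ∀ m, NN (famA (n+2) m (n+2+1)) = (n+2+m)^(n+1) →
      ∀ k, 2 ≤ k → k ≤ n+2+1 → NN (famA (n+2) m k) =
        (n+2+m)^(k-2) * (n+2+m+1)^(n+2+1-k) := by
    intro m hbase
    suffices H : ∀ dk k, 2 ≤ k → k + dk = n + 2 + 1 →
        NN (famA (n+2) m k) = (n+2+m)^(k-2) * (n+2+m+1)^(n+2+1-k) by
      intro k hk2 hk3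
      exact H (n+2+1-k) k hk2 (by omega)
    intro dk
    induction dk with
    | zero =>
      intro k hk2 hke
      have hk : k = n + 2 + 1 := by omega
      subst hk
      have e1 : n + 2 + 1 - 2 = n + 1 := by omega
      have e2 : n + 2 + 1 - (n + 2 + 1) = 0 := by omega
      rw [e1, e2, pow_zero, mul_one, hbase]
    | succ dk ihdk =>
      intro k hk2 hke
      have hkn : k ≤ n + 2 := by omega
      have hqp : ((⟨0, by omega⟩ : Fin (n+2)) : Fin (n+2)) ≠ (⟨k-1, by omega⟩ : Fin (n+2)) := by
        intro hcc
        have := congrArg Fin.val hcc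
        simp only at this
        omega
      have hH : ∀ x : E (n+2),
          heval ((⟨0, by omega⟩ : Fin (n+2)), (⟨k-1, by omega⟩ : Fin (n+2)), ((m+1:ℕ):ℝ)) x = 0 ↔
          x ⟨k-1, by omega⟩ = x ⟨0, by omega⟩ + (-((m+1:ℕ):ℝ)) := by
        intro x
        rw [heval]
        constructor <;> intro hh <;> simp only at hh ⊢ <;> linarith
      rw [← famA_insert_eq hk2 hkn,
        NN_insert (famA_finite _ _ _) hqp (famA_insert_not_mem hk2 hkn),
        NH_elim (famA (n+2) m (k+1)) _ ⟨k-1, by omega⟩ ⟨0, by omega⟩ hqp (-((m+1:ℕ):ℝ)) hH,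
        NN_congr (negCompat_of_image (famA_restrict_fwd hk2 hkn) (famA_restrict_bwd hk2 hkn)),
        ihdk (k+1) (by omega) (by omega),
        IH (m+1) k hk2 (by omega)]
      have e1 : k + 1 - 2 = (k - 2) + 1 := by omega
      have e2 : n + 2 + 1 - (k+1) = n + 2 - k := by omega
      have e3 : n + 2 + 1 - k = (n + 2 - k) + 1 := by omega
      have e4 : n + 1 + (m+1) = n + 2 + m := by ring
      have e6 : n + 1 + 1 - k = n + 2 - k := by omega
      rw [e1, e2, e3, e4, e6, pow_succ, pow_succ]
      ring
  intro m
  induction m with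
  | zero =>
    apply chain 0
    rw [famA_base (n+2), hfamC (n+2) (by omega) (le_refl _)]
    rw [Nat.add_zero, pow_succ]
    ring
  | succ m ihm =>
    apply chain (m+1)
    rw [famA_top (n+2) m, ihm 2 (le_refl 2) (by omega)]
    have e : n + 2 + 1 - 2 = n + 1 := by omega
    rw [e, pow_zero, one_mul]
    ring_nf

theorem NN_famA_main : ∀ N, 1 ≤ N → ∀ m k, 2 ≤ k → k ≤ N + 1 →
    NN (famA N m k) = (N + m)^(k-2) * (N + m + 1)^(N + 1 - k) := by
  intro N
  induction N with
  | zero => intro h; exact absurd h (by omega)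
  | succ n ihN =>
    cases n with
    | zero =>
      rintro - m k hk2 hkn
      have hk : k = 2 := by omega
      subst hk
      rw [famA_one m 2, NN_empty]
      norm_num
    | succ n' =>
      rintro - m k hk2 hkn
      have IH : ∀ m k, 2 ≤ k → k ≤ n' + 2 → NN (famA (n'+1) m k) =
          (n'+1+m)^(k-2) * (n'+1+m+1)^(n'+1+1-k) := by
        intro m' k' h2 h3
        exact ihN (by omega) m' k' h2 (by omega)
      exact NN_famA_step n' IH m k hk2 (by omega)

end Master

section Glue

lemma connectedComponentsMap_coe {X Y : Type*} [TopologicalSpace X] [TopologicalSpace Y]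
    {f : X → Y} (hf : Continuous f) (x : X) :
    hf.connectedComponentsMap (ConnectedComponents.mk x) = ConnectedComponents.mk (f x) :=
  Continuous.connectedComponentsLift_apply_coe _ x

noncomputable def ccEquivOfHomeomorph {X Y : Type*} [TopologicalSpace X] [TopologicalSpace Y]
    (φ : X ≃ₜ Y) : ConnectedComponents X ≃ ConnectedComponents Y where
  toFun := φ.continuous.connectedComponentsMap
  invFun := φ.symm.continuous.connectedComponentsMap
  left_inv := by
    intro c
    obtain ⟨x, rfl⟩ := ConnectedComponents.surjective_coe c
    rw [connectedComponentsMap_coe, connectedComponentsMap_coe, φ.symm_apply_apply]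
  right_inv := by
    intro c
    obtain ⟨y, rfl⟩ := ConnectedComponents.surjective_coe c
    rw [connectedComponentsMap_coe, connectedComponentsMap_coe, φ.apply_symm_apply]

end Glue

end InterpArr

open InterpArr in
/-- For m ≥ 0 and 2 ≤ k ≤ n+1, the arrangement with hyperplanes
x₁ - xⱼ = 0,1,…,m for 2 ≤ j < k; x₁ - xⱼ = 0,1,…,m+1 for k ≤ j ≤ n; and
xᵢ - xⱼ = 0,1 for 2 ≤ i < j ≤ n, has (n+m)^(k-2)·(n+m+1)^(n-k+1) regions.
Coordinates are 0-indexed: `x ⟨0,_⟩` is x₁ and index i : Fin n represents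
the variable x_{i.val+1}. -/
theorem interpolating_arrangement_regions (n m k : ℕ) (hk₂ : 2 ≤ k) (hkn : k ≤ n + 1)
    (hn : 1 ≤ n) :
    Nat.card (ConnectedComponents
      {x : Fin n → ℝ //
        (∀ j : Fin n, 1 ≤ j.val → j.val + 1 < k →
          ∀ l : ℕ, l ≤ m → x ⟨0, hn⟩ - x j ≠ (l : ℝ)) ∧
        (∀ j : Fin n, k ≤ j.val + 1 →
          ∀ l : ℕ, l ≤ m + 1 → x ⟨0, hn⟩ - x j ≠ (l : ℝ)) ∧
        (∀ i j : Fin n, 1 ≤ i.val → i < j →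
          x i - x j ≠ 0 ∧ x i - x j ≠ 1)}) =
    (n + m) ^ (k - 2) * (n + m + 1) ^ (n + 1 - k) := by
  classical
  set P : Set (Fin n → ℝ) := {x : Fin n → ℝ |
        (∀ j : Fin n, 1 ≤ j.val → j.val + 1 < k →
          ∀ l : ℕ, l ≤ m → x ⟨0, hn⟩ - x j ≠ (l : ℝ)) ∧
        (∀ j : Fin n, k ≤ j.val + 1 →
          ∀ l : ℕ, l ≤ m + 1 → x ⟨0, hn⟩ - x j ≠ (l : ℝ)) ∧
        (∀ i j : Fin n, 1 ≤ i.val → i < j →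
          x i - x j ≠ 0 ∧ x i - x j ≠ 1)} with hP
  have hset : P = UA (famA n m k) := by
    ext x
    simp only [hP, Set.mem_setOf_eq]
    constructor
    · rintro ⟨c1, c2, c3⟩ f hf
      rcases hf with ⟨h0, h1, l, hc, hcond⟩ | ⟨h1, h2, hc⟩
      · have hf1 : f.1 = ⟨0, hn⟩ := Fin.ext h0
        intro hzero
        rw [heval, hf1, hc] at hzero
        rcases hcond with ⟨hsml, hl⟩ | ⟨hbig, hl⟩
        · exact c1 f.2.1 h1 hsml l hl (by linarith)
        · exact c2 f.2.1 hbig l hl (by linarith)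
      · have hlt : f.1 < f.2.1 := h2
        have := c3 f.1 f.2.1 h1 hlt
        intro hzero
        rw [heval] at hzero
        rcases hc with hc|hc
        · exact this.1 (by rw [hc] at hzero; linarith)
        · exact this.2 (by rw [hc] at hzero; linarith)
    · intro hU
      refine ⟨?_, ?_, ?_⟩
      · intro j hj1 hjk l hl hval
        refine hU ((⟨0, hn⟩ : Fin n), j, (l:ℝ)) (Or.inl ⟨rfl, hj1, l, rfl, Or.inl ⟨hjk, hl⟩⟩) ?_
        rw [heval]
        simp only
        linarith
      · intro j hjk l hl hval
        refine hU ((⟨0, hn⟩ : Fin n), j, (l:ℝ)) ?_ ?_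
        · by_cases hj1 : 1 ≤ j.val
          · exact Or.inl ⟨rfl, hj1, l, rfl, Or.inr ⟨hjk, hl⟩⟩
          · exfalso
            have hj0 : j = ⟨0, hn⟩ := Fin.ext (by omega)
            rw [hj0] at hval
            simp at hval
            have : l = 0 := by exact_mod_cast hval.symm
            omega
        · rw [heval]
          simp only
          linarith
      · intro i j hi hij
        have hij' : i.val < j.val := hij
        constructor
        · intro hval
          refine hU (i, j, (0:ℝ)) (Or.inr ⟨hi, hij', Or.inl rfl⟩) ?_
          rw [heval]
          simp only
          linarith
        · intro hval
          refine hU (i, j, (1:ℝ)) (Or.inr ⟨hi, hij', Or.inr rfl⟩) ?_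
          rw [heval]
          simp only
          linarith
  have hcc : Nat.card (ConnectedComponents ↥P) =
      Nat.card (ConnectedComponents ↥(UA (famA n m k))) :=
    Nat.card_congr (ccEquivOfHomeomorph (Homeomorph.setCongr hset))
  exact hcc.trans ((card_components (famA n m k)).trans
    (NN_famA_main n hn m k hk₂ hkn))
end

section
/- For any hyperplane arrangement A in R^n and any H ∈ A, the number of regions satisfies r(A) = r(A') + r(A''), where A' = A \ {H} is the deleted arrangement and A'' = {H' ∩ H : H' ∈ A', H' ∩ H ≠ ∅, H' ∩ H ≠ H} is the restriction of A to H. -/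
/-!
Cut ℝⁿ by the hyperplanes `f i = c i` of `A' = A \ {H}`. On the complement the sign vector
`i ↦ [c i < f i x]` is locally constant, and each of its fibres is an intersection of open half
spaces, hence convex. So the regions of `A'`, and likewise those of `A''` inside the convex set
`H`, correspond to the nonempty open sign cells. A cell `C` of `A'` that misses `H` is one region
of `A`; one that meets `H` is split by `H` into two regions of `A` (it reaches both sides of `H`
because it is open, and it meets `H` when it reaches both sides because it is convex), and then
`C ∩ H` is a region of `A''`. Hence `r(A) = r(A') + r(A'')`.
-/

open Set Filter Topology

theorem Nat.card_connectedComponents_eq_card_range {X Y : Type*} [TopologicalSpace X]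
    [TopologicalSpace Y] [TotallyDisconnectedSpace Y] {φ : X → Y} (hφ : Continuous φ)
    (hfib : ∀ y, IsPreconnected (φ ⁻¹' {y})) :
    Nat.card (ConnectedComponents X) = Nat.card (range φ) := by
  have hinj : Function.Injective hφ.connectedComponentsLift := by
    intro a b hab
    obtain ⟨x, rfl⟩ := ConnectedComponents.surjective_coe a
    obtain ⟨y, rfl⟩ := ConnectedComponents.surjective_coe b
    simp only [hφ.connectedComponentsLift_apply_coe] at hab
    exact ConnectedComponents.coe_eq_coe'.2
      ((hfib (φ y)).subset_connectedComponent (mem_preimage.2 rfl) hab)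
  have hrange : range hφ.connectedComponentsLift = range φ := by
    rw [← ConnectedComponents.surjective_coe.range_comp, hφ.connectedComponentsLift_comp_coe]
  rw [Nat.card_congr (Equiv.ofInjective _ hinj), hrange]

theorem Nat.card_subtype_or_add_card_subtype_and {α : Type*} [Finite α] (p q : α → Prop) :
    Nat.card {a // p a ∨ q a} + Nat.card {a // p a ∧ q a} =
      Nat.card {a // p a} + Nat.card {a // q a} :=
  ncard_union_add_ncard_inter {a | p a} {a | q a}

theorem Nat.card_subtype_bool_prod {α : Type*} [Finite α] (p : Bool → α → Prop) :
    Nat.card {q : Bool × α // p q.1 q.2} =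
      Nat.card {a // p true a} + Nat.card {a // p false a} := by
  rw [Nat.card_congr (Equiv.subtypeProdEquivSigmaSubtype p), Nat.card_sigma, Fintype.sum_bool]

section

variable {E : Type*} [NormedAddCommGroup E] [NormedSpace ℝ E]

theorem IsOpen.exists_apply_gt {C : Set E} (hC : IsOpen C) {x : E} (hx : x ∈ C)
    {g : E →ₗ[ℝ] ℝ} (hg : g ≠ 0) : ∃ y ∈ C, g x < g y := by
  obtain ⟨v, hv⟩ : ∃ v, g v ≠ 0 := by
    by_contra! h
    exact hg (LinearMap.ext h)
  have hline : Tendsto (fun t : ℝ => x + t • (g v)⁻¹ • v) (𝓝[>] 0) (𝓝 x) :=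
    (Continuous.tendsto' (by fun_prop) 0 x (by simp)).mono_left nhdsWithin_le_nhds
  obtain ⟨t, htC, ht⟩ := ((hline.eventually (hC.mem_nhds hx)).and self_mem_nhdsWithin).exists
  exact ⟨_, htC, by simpa [hv] using ht⟩

theorem Convex.exists_apply_eq [FiniteDimensional ℝ E] {C : Set E} (hC : Convex ℝ C) {x y : E}
    (hx : x ∈ C) (hy : y ∈ C) {g : E →ₗ[ℝ] ℝ} {a : ℝ} (hxa : g x ≤ a) (hya : a ≤ g y) :
    ∃ z ∈ C, g z = a :=
  hC.isPreconnected.intermediate_value hx hy g.continuous_of_finiteDimensional.continuousOn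
    ⟨hxa, hya⟩

end

namespace HyperplaneArrangement

variable {E : Type*} [NormedAddCommGroup E] [NormedSpace ℝ E]

def halfSpace (f : E →ₗ[ℝ] ℝ) (c : ℝ) : Bool → Set E
  | true => {x | c < f x}
  | false => {x | f x < c}

section halfSpace

variable (f : E →ₗ[ℝ] ℝ) (c : ℝ)

theorem convex_halfSpace (b : Bool) : Convex ℝ (halfSpace f c b) := by
  cases b
  exacts [convex_halfSpace_lt f.isLinear c, convex_halfSpace_gt f.isLinear c]

theorem isOpen_halfSpace [FiniteDimensional ℝ E] (b : Bool) : IsOpen (halfSpace f c b) := by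
  cases b
  exacts [isOpen_lt f.continuous_of_finiteDimensional continuous_const,
    isOpen_lt continuous_const f.continuous_of_finiteDimensional]

variable {f c}

theorem apply_ne_of_mem_halfSpace {b : Bool} {x : E} (hx : x ∈ halfSpace f c b) : f x ≠ c := by
  cases b
  exacts [hx.ne, hx.ne']

theorem mem_halfSpace_iff {b : Bool} {x : E} (hx : f x ≠ c) :
    x ∈ halfSpace f c b ↔ decide (c < f x) = b := by
  cases b <;> simp [halfSpace, hx.le_iff_lt]

end halfSpace

section nonempty

variable {g : E →ₗ[ℝ] ℝ} {a : ℝ} {C : Set E}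

theorem halfSpace_inter_nonempty_or_iff (hC : IsOpen C) (hg : g ≠ 0) :
    (halfSpace g a true ∩ C).Nonempty ∨ (halfSpace g a false ∩ C).Nonempty ↔ C.Nonempty := by
  refine ⟨fun h => h.elim (·.mono inter_subset_right) (·.mono inter_subset_right),
    fun ⟨x, hx⟩ => ?_⟩
  rcases lt_trichotomy (g x) a with hlt | rfl | hgt
  · exact Or.inr ⟨x, hlt, hx⟩
  · obtain ⟨y, hyC, hy⟩ := hC.exists_apply_gt hx hg
    exact Or.inl ⟨y, hy, hyC⟩
  · exact Or.inl ⟨x, hgt, hx⟩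

theorem halfSpace_inter_nonempty_and_iff [FiniteDimensional ℝ E] (hCo : IsOpen C)
    (hCc : Convex ℝ C) (hg : g ≠ 0) :
    (halfSpace g a true ∩ C).Nonempty ∧ (halfSpace g a false ∩ C).Nonempty ↔
      ({x | g x = a} ∩ C).Nonempty := by
  constructor
  · rintro ⟨⟨x, hx, hxC⟩, ⟨y, hy, hyC⟩⟩
    obtain ⟨z, hzC, hz⟩ := hCc.exists_apply_eq hyC hxC hy.le hx.le
    exact ⟨z, hz, hzC⟩
  · rintro ⟨x, rfl, hxC⟩
    obtain ⟨y, hyC, hy⟩ := hCo.exists_apply_gt hxC hg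
    obtain ⟨z, hzC, hz⟩ := hCo.exists_apply_gt hxC (neg_ne_zero.2 hg)
    exact ⟨⟨y, hy, hyC⟩, ⟨z, (by simpa using hz : g z < g x), hzC⟩⟩

end nonempty

variable {ι : Type*} (f : ι → E →ₗ[ℝ] ℝ) (c : ι → ℝ)

def signCell (s : ι → Bool) : Set E :=
  ⋂ i, halfSpace (f i) (c i) (s i)

noncomputable def signVector (x : E) : ι → Bool :=
  fun i => decide (c i < f i x)

theorem convex_signCell (s : ι → Bool) : Convex ℝ (signCell f c s) :=
  convex_iInter fun i => convex_halfSpace (f i) (c i) (s i)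

theorem isOpen_signCell [Finite ι] [FiniteDimensional ℝ E] (s : ι → Bool) :
    IsOpen (signCell f c s) :=
  isOpen_iInter_of_finite fun i => isOpen_halfSpace (f i) (c i) (s i)

variable {f c}

theorem mem_signCell_iff {s : ι → Bool} {x : E} (hx : ∀ i, f i x ≠ c i) :
    x ∈ signCell f c s ↔ signVector f c x = s := by
  simp only [signCell, mem_iInter, mem_halfSpace_iff (hx _), funext_iff, signVector]

theorem apply_ne_of_mem_signCell {s : ι → Bool} {x : E} (hx : x ∈ signCell f c s) (i : ι) :
    f i x ≠ c i :=
  apply_ne_of_mem_halfSpace (mem_iInter.1 hx i)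

theorem continuousAt_signVector [FiniteDimensional ℝ E] {x : E} (hx : ∀ i, f i x ≠ c i) :
    ContinuousAt (signVector f c) x := by
  refine continuousAt_pi.2 fun i =>
    ContinuousAt.congr (f := fun _ => signVector f c x i) continuousAt_const ?_
  filter_upwards [(isOpen_halfSpace (f i) (c i) (signVector f c x i)).mem_nhds
    ((mem_halfSpace_iff (hx i)).2 rfl)] with y hy
  exact ((mem_halfSpace_iff (apply_ne_of_mem_halfSpace hy)).1 hy).symm

theorem natCard_connectedComponents_eq_card_signCell [FiniteDimensional ℝ E] {K X : Set E}
    (hK : Convex ℝ K) (hX : ∀ x, x ∈ X ↔ x ∈ K ∧ ∀ i, f i x ≠ c i) :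
    Nat.card (ConnectedComponents X) = Nat.card {s // (K ∩ signCell f c s).Nonempty} := by
  have hXK (x : X) : (x : E) ∈ K := ((hX x).1 x.2).1
  have hXoff (x : X) : ∀ i, f i x ≠ c i := ((hX x).1 x.2).2
  have hcont : Continuous fun x : X => signVector f c x :=
    continuous_iff_continuousAt.2 fun x =>
      (continuousAt_signVector (hXoff x)).comp continuous_subtype_val.continuousAt
  have hfiber (s : ι → Bool) :
      (fun x : X => signVector f c x) ⁻¹' {s} = (↑) ⁻¹' (K ∩ signCell f c s) := by
    ext x
    simp [mem_signCell_iff (hXoff x), hXK x]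
  have hcell (s : ι → Bool) : K ∩ signCell f c s ⊆ X := fun x hx =>
    (hX x).2 ⟨hx.1, apply_ne_of_mem_signCell hx.2⟩
  have hrange : range (fun x : X => signVector f c x) = {s | (K ∩ signCell f c s).Nonempty} := by
    ext s
    constructor
    · rintro ⟨x, rfl⟩
      exact ⟨x, hXK x, (mem_signCell_iff (hXoff x)).2 rfl⟩
    · rintro ⟨x, hx⟩
      exact ⟨⟨x, hcell s hx⟩, (mem_signCell_iff (apply_ne_of_mem_signCell hx.2)).1 hx.2⟩
  rw [Nat.card_connectedComponents_eq_card_range hcont fun s => ?_, hrange]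
  · rfl
  · rw [hfiber, ← Topology.IsInducing.subtypeVal.isPreconnected_image, Subtype.image_preimage_coe,
      inter_eq_right.2 (hcell s)]
    exact (hK.inter (convex_signCell f c s)).isPreconnected

variable (f c)

theorem signCell_option (g : E →ₗ[ℝ] ℝ) (a : ℝ) (t : Option ι → Bool) :
    signCell (fun o : Option ι => o.elim g f) (fun o : Option ι => o.elim a c) t =
      halfSpace g a (t none) ∩ signCell f c (fun i => t (some i)) :=
  iInter_option _

theorem card_nonempty_signCell_option [Finite ι] [FiniteDimensional ℝ E] {g : E →ₗ[ℝ] ℝ}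
    (hg : g ≠ 0) (a : ℝ) :
    Nat.card {t // (signCell (fun o : Option ι => o.elim g f)
      (fun o : Option ι => o.elim a c) t).Nonempty} =
      Nat.card {s // (signCell f c s).Nonempty} +
        Nat.card {s // ({x | g x = a} ∩ signCell f c s).Nonempty} := by
  calc _ = Nat.card {p : Bool × (ι → Bool) // (halfSpace g a p.1 ∩ signCell f c p.2).Nonempty} :=
        Nat.card_congr (Equiv.piOptionEquivProd.subtypeEquiv fun t => by rw [signCell_option]; rfl)
    _ = _ := Nat.card_subtype_bool_prod fun b s => (halfSpace g a b ∩ signCell f c s).Nonempty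
    _ = _ := (Nat.card_subtype_or_add_card_subtype_and _ _).symm
    _ = _ := by
      simp only [halfSpace_inter_nonempty_or_iff (isOpen_signCell f c _) hg,
        halfSpace_inter_nonempty_and_iff (isOpen_signCell f c _) (convex_signCell f c _) hg]

theorem natCard_connectedComponents_deletion_restriction [Finite ι] [FiniteDimensional ℝ E]
    {g : E →ₗ[ℝ] ℝ} (hg : g ≠ 0) {a : ℝ} {X X' X'' : Set E}
    (hX : ∀ x, x ∈ X ↔ g x ≠ a ∧ ∀ i, f i x ≠ c i) (hX' : ∀ x, x ∈ X' ↔ ∀ i, f i x ≠ c i)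
    (hX'' : ∀ x, x ∈ X'' ↔ g x = a ∧ ∀ i, f i x ≠ c i) :
    Nat.card (ConnectedComponents X) =
      Nat.card (ConnectedComponents X') + Nat.card (ConnectedComponents X'') := by
  rw [natCard_connectedComponents_eq_card_signCell (f := fun o : Option ι => o.elim g f)
      (c := fun o : Option ι => o.elim a c) convex_univ (by simpa [Option.forall] using hX),
    natCard_connectedComponents_eq_card_signCell convex_univ (by simpa using hX'),
    natCard_connectedComponents_eq_card_signCell (convex_hyperplane g.isLinear a) hX'']
  simp only [univ_inter]
  exact card_nonempty_signCell_option f c hg a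

end HyperplaneArrangement

open HyperplaneArrangement

-- `A''` is encoded by its complement in `H`: the points of `H` on no hyperplane of `A'`.
/-- Deletion-restriction for the number of regions: for a finite arrangement A of affine
hyperplanes in ℝⁿ and H ∈ A, r(A) = r(A') + r(A''), where A' = A \ {H} and A'' is the
restriction to H.  The complement of A'' inside H is exactly the set of points of H
lying on no hyperplane of A'. -/
theorem deletion_restriction_regions (n : ℕ) [DecidableEq (Set (Fin n → ℝ))] (A : Finset (Set (Fin n → ℝ)))
    (hA : ∀ H' ∈ A, ∃ (f : (Fin n → ℝ) →ₗ[ℝ] ℝ) (c : ℝ), f ≠ 0 ∧ H' = {x | f x = c})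
    (H : Set (Fin n → ℝ)) (hH : H ∈ A) :
    Nat.card (ConnectedComponents {x : Fin n → ℝ // ∀ H' ∈ A, x ∉ H'}) =
    Nat.card (ConnectedComponents {x : Fin n → ℝ // ∀ H' ∈ A.erase H, x ∉ H'}) +
    Nat.card (ConnectedComponents
      {x : Fin n → ℝ // x ∈ H ∧ ∀ H' ∈ A.erase H, x ∉ H'}) := by
  choose! f c hf hfc using hA
  have mem_iff (H' : Set (Fin n → ℝ)) (h : H' ∈ A) (x) : x ∈ H' ↔ f H' x = c H' :=
    Set.ext_iff.1 (hfc H' h) x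
  have off_erase (x) : (∀ H' ∈ A.erase H, x ∉ H') ↔ ∀ i : A.erase H, f i x ≠ c i := by
    simp only [Subtype.forall]
    exact forall₂_congr fun H' h => not_congr (mem_iff H' (Finset.mem_of_mem_erase h) x)
  have off_A (x) : (∀ H' ∈ A, x ∉ H') ↔ x ∉ H ∧ ∀ H' ∈ A.erase H, x ∉ H' :=
    ⟨fun h => ⟨h H hH, fun H' h' => h H' (Finset.mem_of_mem_erase h')⟩,
      fun ⟨hxH, h⟩ H' h' => if e : H' = H then e ▸ hxH else h H' (Finset.mem_erase.2 ⟨e, h'⟩)⟩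
  exact natCard_connectedComponents_deletion_restriction (fun i : A.erase H => f i) (fun i => c i)
    (hf H hH)
    (fun x => (off_A x).trans (and_congr (not_congr (mem_iff H hH x)) (off_erase x))) off_erase
    (fun x => and_congr (mem_iff H hH x) (off_erase x))
end
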